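/- arXiv:2410.13008 — 4 statements merged into one kernel-verified Lean document; each statement's English description precedes it below -/
import Mathlib

section
/- Let H be a subdigraph of an unbreakable digraph G with |V(H)| ≥ 2 and H ≠ G. Then there is an ear for H in G, i.e., a directed path of G of length at least one with both ends in V(H) and with no edge or internal vertex in H. -/
namespace Cyclic3

variable {V : Type*}

/-- `l` (a nonempty list of distinct vertices) is a directed cycle of the digraph `G`;
its length (number of edges) is `l.length`. -/
def IsDicycle (G : V → V → Prop) (l : List V) : Prop :=
  l ≠ [] ∧ l.Nodup ∧ ∀ p ∈ l.zip (l.rotate 1), G p.1 p.2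

/-- every directed cycle of `G` has length exactly `ℓ`. -/
def IsLCyclic (G : V → V → Prop) (ℓ : ℕ) : Prop :=
  ∀ l : List V, IsDicycle G l → l.length = ℓ

/-- every directed cycle of `G` has length a multiple of `ℓ`. -/
def CyclesLenDvd (G : V → V → Prop) (ℓ : ℕ) : Prop :=
  ∀ l : List V, IsDicycle G l → ℓ ∣ l.length

/-- `l` is a directed walk from `u` to `v` in `G`; its length (number of edges)
is `l.length - 1`. -/
def IsDiwalk (G : V → V → Prop) (u v : V) (l : List V) : Prop :=
  l.head? = some u ∧ l.getLast? = some v ∧ l.Chain' G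

def StronglyConnected (G : V → V → Prop) : Prop :=
  Nonempty V ∧ ∀ u v : V, ∃ l : List V, IsDiwalk G u v l

/-- the underlying undirected graph `G⁻` of a digraph. -/
def underlying (G : V → V → Prop) : SimpleGraph V where
  Adj a b := a ≠ b ∧ (G a b ∨ G b a)
  symm := ⟨fun _ _ h => ⟨h.1.symm, h.2.symm⟩⟩
  loopless := ⟨fun _ h => h.1 rfl⟩

/-- 2-connectedness of an undirected graph. -/
def TwoConnected (H : SimpleGraph V) : Prop :=
  3 ≤ Nat.card V ∧ ∀ v : V, (H.induce {w : V | w ≠ v}).Connected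

/-- strongly connected and weakly 2-connected. -/
def Unbreakable (G : V → V → Prop) : Prop :=
  StronglyConnected G ∧ TwoConnected (underlying G)

/-- an (undirected) walk from `u` to `v` in the underlying graph of `G`. -/
def UWalk (G : V → V → Prop) (u v : V) (l : List V) : Prop :=
  l.head? = some u ∧ l.getLast? = some v ∧ l.Chain' fun a b => G a b ∨ G b a

/-- `B` is (the vertex set of) a connected component of the graph `H` restricted
to the vertex set `s`. -/
def IsCompOf (H : SimpleGraph V) (s B : Set V) : Prop :=
  B.Nonempty ∧ B ⊆ s ∧ (H.induce B).Connected ∧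
    ∀ x ∈ B, ∀ y ∈ s, H.Adj x y → y ∈ B

/-- `G` contains a diwheel as a subdigraph: a hub `v` and an (even) rim
`a 0, b 0, a 1, b 1, …` (given as a list `r` of pairs, of length at least two),
each rim edge making a tricycle with the hub. -/
def HasDiwheel (G : V → V → Prop) : Prop :=
  ∃ (v : V) (r : List (V × V)),
    2 ≤ r.length ∧
    (v :: (r.map Prod.fst ++ r.map Prod.snd)).Nodup ∧
    (∀ p ∈ r, G p.1 p.2 ∧ G p.2 v ∧ G v p.1) ∧
    ∀ q ∈ r.zip (r.rotate 1), G q.2.1 q.1.2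

/-- `{a,b,c}` is the vertex set of a tricycle (a directed cycle of length three). -/
def IsTricycle (G : V → V → Prop) (a b c : V) : Prop :=
  a ≠ b ∧ b ≠ c ∧ a ≠ c ∧
    ((G a b ∧ G b c ∧ G c a) ∨ (G b a ∧ G c b ∧ G a c))

/-- `uv` is a special edge of the digraph `H`: it is an edge, and either `u` has
out-degree one or `v` has in-degree one. -/
def SpecialEdge (H : V → V → Prop) (u v : V) : Prop :=
  H u v ∧ ({w | H u w}.ncard = 1 ∨ {w | H w v}.ncard = 1)

/-- `A 0, …, A (ℓ-1)` is an `ℓ`-ring of `G`: an ordered partition of the vertex set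
such that every edge goes from some `A i` to `A (i+1)` (indices mod `ℓ`). -/
def IsRing (G : V → V → Prop) (ℓ : ℕ) (A : ℕ → Set V) : Prop :=
  (∀ v : V, ∃! i, i < ℓ ∧ v ∈ A i) ∧
  ∀ u v, G u v → ∃ i < ℓ, u ∈ A i ∧ v ∈ A ((i + 1) % ℓ)

/-- `w` is a weighting: every directed cycle has total weight one. -/
def IsWeighting (G : V → V → Prop) (w : V → V → ℝ) : Prop :=
  ∀ l : List V, IsDicycle G l →
    ((l.zip (l.rotate 1)).map fun p => w p.1 p.2).sum = 1

/-- an ear for the subdigraph `H` (with vertex set `S`) in `G`: a directed path of `G`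
of length at least one, with both ends in `S`, no internal vertex in `S`,
and no edge of `H`. -/
def IsEar (G H : V → V → Prop) (S : Set V) : Prop :=
  ∃ (u v : V) (m : List V),
    u ∈ S ∧ v ∈ S ∧ (∀ x ∈ m, x ∉ S) ∧
    (u :: m ++ [v]).Nodup ∧ (u :: m ++ [v]).Chain' G ∧
    (u :: m ++ [v]).Chain' fun a b => ¬ H a b

/-- `SafelyBuildable s G` : the digraph `G`, with vertex set `s`, can be built
starting from a tricycle by repeatedly choosing a vertex `v` of in-degree and
out-degree one, a neighbour `u` of `v`, and adding a nonempty set `t` of new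
vertices, each of degree two, each making a tricycle with `u` and `v`. -/
inductive SafelyBuildable : Set V → (V → V → Prop) → Prop
  | base (x y z : V) : x ≠ y → y ≠ z → x ≠ z →
      SafelyBuildable {x, y, z}
        (fun a b => (a = x ∧ b = y) ∨ (a = y ∧ b = z) ∨ (a = z ∧ b = x))
  | stepOut (s t : Set V) (G : V → V → Prop) (u v : V) :
      SafelyBuildable s G → u ∈ s → v ∈ s →
      (∃! w, G v w) → (∃! w, G w v) → G u v →
      t.Nonempty → (∀ w ∈ t, w ∉ s) →
      SafelyBuildable (s ∪ t)
        (fun a b => G a b ∨ (a = v ∧ b ∈ t) ∨ (a ∈ t ∧ b = u))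
  | stepIn (s t : Set V) (G : V → V → Prop) (u v : V) :
      SafelyBuildable s G → u ∈ s → v ∈ s →
      (∃! w, G v w) → (∃! w, G w v) → G v u →
      t.Nonempty → (∀ w ∈ t, w ∉ s) →
      SafelyBuildable (s ∪ t)
        (fun a b => G a b ∨ (a = u ∧ b ∈ t) ∨ (a ∈ t ∧ b = v))

end Cyclic3


section EarAux
variable {V : Type*}

/-- extract a nodup chain from a chain, keeping ends and using only original vertices. -/
private lemma aux_extract {R : V → V → Prop} :
    ∀ (n : ℕ) (l : List V), l.length ≤ n → l.Chain' R →
    ∃ m : List V, m.Nodup ∧ m.Chain' R ∧ m.head? = l.head? ∧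
      m.getLast? = l.getLast? ∧ ∀ x ∈ m, x ∈ l := by
  intro n
  induction n with
  | zero =>
    intro l hl _
    have : l = [] := List.eq_nil_of_length_eq_zero (Nat.le_zero.mp hl)
    subst this
    exact ⟨[], by simp, List.isChain_nil, rfl, rfl, by simp⟩
  | succ n ih =>
    intro l hl hch
    match l with
    | [] => exact ⟨[], by simp, List.isChain_nil, rfl, rfl, by simp⟩
    | a :: t =>
      by_cases hat : a ∈ t
      · obtain ⟨t₁, t₂, ht⟩ := List.append_of_mem hat
        have hsuf : (a :: t₂) <:+ (a :: t) := ⟨a :: t₁, by rw [ht]; rfl⟩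
        have hlen : (a :: t₂).length ≤ n := by
          have h1 : t.length ≤ n := by simpa using hl
          have : t.length = t₁.length + t₂.length + 1 := by simp [ht]; omega
          simp only [List.length_cons]; omega
        obtain ⟨m, h1, h2, h3, h4, h5⟩ := ih (a :: t₂) hlen (hch.suffix hsuf)
        refine ⟨m, h1, h2, by simpa using h3, ?_, fun x hx => hsuf.subset (h5 x hx)⟩
        rw [h4]
        have : (a :: t) = (a :: t₁) ++ (a :: t₂) := by rw [ht]; rfl
        rw [this, List.getLast?_append]
        have : ∃ w, (a :: t₂).getLast? = some w :=
          ⟨(a :: t₂).getLast (by simp), List.getLast?_eq_getLast _⟩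
        obtain ⟨w, hw⟩ := this
        rw [hw]; rfl
      · have h1 : t.length ≤ n := by simpa using hl
        obtain ⟨m, hnd, hmch, hh, hlast, hmem⟩ := ih t h1 (List.isChain_cons.mp hch).2
        refine ⟨a :: m, ?_, ?_, by simp, ?_, ?_⟩
        · exact List.nodup_cons.mpr ⟨fun h => hat (hmem a h), hnd⟩
        · exact List.isChain_cons.mpr ⟨fun y hy => (List.isChain_cons.mp hch).1 y (hh ▸ hy), hmch⟩
        · cases t with
          | nil =>
            have : m = [] := List.head?_eq_none_iff.mp (by simpa using hh)
            subst this; rfl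
          | cons d t' =>
            cases m with
            | nil => simp at hh
            | cons e m' =>
              rw [List.getLast?_cons_cons, List.getLast?_cons_cons]
              exact hlast
        · intro y hy
          rcases List.mem_cons.mp hy with h | h
          · exact h ▸ List.mem_cons_self
          · exact List.mem_cons_of_mem _ (hmem y h)

/-- first element of the walk lying in S, with the part before it outside S. -/
private lemma aux_firstS (S : Set V) :
    ∀ (l : List V) (b s : V), l.head? = some b → b ∉ S →
      l.getLast? = some s → s ∈ S →
      ∃ (p : List V) (a : V), (p ++ [a]) <+: l ∧ a ∈ S ∧ (∀ y ∈ p, y ∉ S) ∧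
        p.head? = some b := by
  intro l
  induction l with
  | nil => simp
  | cons b' t ih =>
    intro b s hh hb hl hs
    have hb' : b = b' := Eq.symm (by simpa using hh)
    subst hb'
    match t with
    | [] =>
      have : b = s := by simpa using hl
      exact absurd (this ▸ hs) hb
    | d :: t' =>
      by_cases hd : d ∈ S
      · exact ⟨[b], d, ⟨t', rfl⟩, hd, by simp [hb], rfl⟩
      · obtain ⟨p, a, hpre, ha, hp, hph⟩ :=
          ih (b := d) (s := s) rfl hd (by rw [← List.getLast?_cons_cons]; exact hl) hs
        obtain ⟨r, hr⟩ := hpre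
        refine ⟨b :: p, a, ⟨r, ?_⟩, ha, ?_, rfl⟩
        · simpa using hr
        · intro y hy
          rcases List.mem_cons.mp hy with h | h
          · exact h ▸ hb
          · exact hp y h

private lemma aux_fwdB (S B : Set V) (G : V → V → Prop)
    (hcl : ∀ y b, b ∈ B → y ∉ S → (G y b ∨ G b y) → y ∈ B) :
    ∀ (p : List V) (b : V), p.Chain' G → p.head? = some b → b ∈ B →
      (∀ y ∈ p, y ∉ S) → ∀ y ∈ p, y ∈ B := by
  intro p
  induction p with
  | nil => simp
  | cons c t ih =>
    intro b hch hh hb hp y hy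
    have hcb : c = b := by simpa using hh
    subst hcb
    rcases List.mem_cons.mp hy with h | h
    · exact h ▸ hb
    · cases t with
      | nil => simp at h
      | cons d t' =>
        have hd : d ∈ B :=
          hcl d c hb (hp d (by simp)) (Or.inr (List.isChain_cons_cons.mp hch).1)
        exact ih d (List.isChain_cons_cons.mp hch).2 rfl hd
          (fun z hz => hp z (List.mem_cons_of_mem _ hz)) y h

end EarAux

section EarAux2
variable {V : Type*}
open Cyclic3

private lemma aux_reach_out (G : V → V → Prop) (S B : Set V)
    (hcl : ∀ y b, b ∈ B → y ∉ S → (G y b ∨ G b y) → y ∈ B)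
    (hsc : ∀ u v : V, ∃ l, IsDiwalk G u v l)
    (s₀ : V) (hs₀ : s₀ ∈ S) (b : V) (hb : b ∈ B) (hbS : b ∉ S) :
    ∃ c ∈ S, ∃ q : List V, (∀ y ∈ q, y ∈ B) ∧ q.head? = some b ∧
      (q ++ [c]).Chain' G := by
  obtain ⟨l, hh, hl, hch⟩ := hsc b s₀
  obtain ⟨p, a, hpre, ha, hp, hph⟩ := aux_firstS S l b s₀ hh hbS hl hs₀
  have hchp : (p ++ [a]).Chain' G := hch.prefix hpre
  have hpB : ∀ y ∈ p, y ∈ B :=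
    aux_fwdB S B G hcl p b (hchp.prefix ⟨[a], rfl⟩) hph hb hp
  exact ⟨a, ha, p, hpB, hph, hchp⟩

private lemma aux_reach_in (G : V → V → Prop) (S B : Set V)
    (hcl : ∀ y b, b ∈ B → y ∉ S → (G y b ∨ G b y) → y ∈ B)
    (hsc : ∀ u v : V, ∃ l, IsDiwalk G u v l)
    (s₀ : V) (hs₀ : s₀ ∈ S) (b : V) (hb : b ∈ B) (hbS : b ∉ S) :
    ∃ a ∈ S, ∃ p : List V, (∀ y ∈ p, y ∈ B) ∧ p.getLast? = some b ∧
      (a :: p).Chain' G := by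
  have hcl' : ∀ y c, c ∈ B → y ∉ S → (flip G y c ∨ flip G c y) → y ∈ B :=
    fun y c hc hy h => hcl y c hc hy h.symm
  have hsc' : ∀ u v : V, ∃ l, IsDiwalk (flip G) u v l := by
    intro u v
    obtain ⟨l, h1, h2, h3⟩ := hsc v u
    exact ⟨l.reverse, by rw [List.head?_reverse]; exact h2,
      by rw [List.getLast?_reverse]; exact h1, List.isChain_reverse.mpr h3⟩
  obtain ⟨c, hc, q, hq, hqh, hqch⟩ :=
    aux_reach_out (flip G) S B hcl' hsc' s₀ hs₀ b hb hbS
  refine ⟨c, hc, q.reverse, fun y hy => hq y (List.mem_reverse.mp hy),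
    by rw [List.getLast?_reverse]; exact hqh, ?_⟩
  have heq : (c :: q.reverse) = (q ++ [c]).reverse := by simp
  rw [heq]
  exact List.isChain_reverse.mpr hqch

private lemma aux_mid {R : V → V → Prop} {P : V → Prop} :
    ∀ (l : List V) (c : V), (∀ y ∈ l, P y) → (l ++ [c]).Chain' R →
      (l ++ [c]).Chain' (fun u v => R u v ∧ (P u ∨ P v)) := by
  intro l
  induction l with
  | nil => intro c _ _; exact List.isChain_singleton _
  | cons d t ih =>
    intro c hP hch
    simp only [List.cons_append, List.Chain', List.isChain_cons] at hch ⊢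
    exact ⟨fun y hy => ⟨hch.1 y hy, Or.inl (hP d (by simp))⟩,
      ih c (fun y hy => hP y (by simp [hy])) hch.2⟩

private lemma aux_ear (G H : V → V → Prop) (S : Set V)
    (hverts : ∀ x y, H x y → x ∈ S ∧ y ∈ S)
    (a c : V) (ha : a ∈ S) (hc : c ∈ S) (hac : a ≠ c)
    (m₀ : List V) (hm : ∀ y ∈ m₀, y ∉ S) (hm0 : m₀ ≠ [])
    (hch : (a :: (m₀ ++ [c])).Chain' G) : IsEar G H S := by
  have h1 := (List.isChain_cons.mp hch).1
  have h2 := (List.isChain_cons.mp hch).2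
  have hmidR := aux_mid (P := fun y => y ∉ S) m₀ c hm h2
  have hchR : (a :: (m₀ ++ [c])).Chain' (fun u v => G u v ∧ (u ∉ S ∨ v ∉ S)) := by
    refine List.isChain_cons.mpr ⟨?_, hmidR⟩
    intro y hy
    refine ⟨h1 y hy, Or.inr ?_⟩
    cases m₀ with
    | nil => exact absurd rfl hm0
    | cons e m₀' =>
      have : e = y := by simpa using hy
      exact this ▸ hm e (by simp)
  obtain ⟨m', hnd, hmch, hh, hlast, hmem⟩ :=
    aux_extract (a :: (m₀ ++ [c])).length _ le_rfl hchR
  have hlast' : m'.getLast? = some c := by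
    rw [hlast]
    have : (a :: (m₀ ++ [c])) = (a :: m₀) ++ [c] := rfl
    rw [this, List.getLast?_concat]
  cases m' with
  | nil => simp at hh
  | cons a' t =>
    have ha' : a' = a := by simpa using hh
    subst ha'
    have ht0 : t ≠ [] := by
      intro h
      subst h
      simp at hlast'
      exact hac hlast'
    have htl : t.getLast ht0 = c := by
      have : t.getLast? = some c := by
        cases t with
        | nil => exact absurd rfl ht0
        | cons e t' => rw [← List.getLast?_cons_cons (a := a')]; exact hlast'
      rwa [List.getLast?_eq_getLast ht0, Option.some_inj] at this
    have htm : t = t.dropLast ++ [c] := by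
      conv_lhs => rw [← List.dropLast_append_getLast ht0]
      rw [htl]
    refine ⟨a', c, t.dropLast, ha, hc, ?_, ?_, ?_, ?_⟩
    · intro y hy
      have hyt : y ∈ t := List.mem_of_mem_dropLast hy
      have hym' : y ∈ a' :: t := List.mem_cons_of_mem _ hyt
      have hyw := hmem y hym'
      have : y = a' ∨ y ∈ m₀ ∨ y = c := by simpa using hyw
      rcases this with h | h | h
      · exact absurd (h ▸ hyt) (List.nodup_cons.mp hnd).1
      · exact hm y h
      · exfalso
        have hndt : t.Nodup := (List.nodup_cons.mp hnd).2
        rw [htm] at hndt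
        have := (List.nodup_append.mp hndt).2.2
        exact this y hy c (by simp) h
    · have : (a' :: t.dropLast ++ [c]) = a' :: t := by
        rw [List.cons_append, ← htm]
      rw [this]; exact hnd
    · have : (a' :: t.dropLast ++ [c]) = a' :: t := by
        rw [List.cons_append, ← htm]
      rw [this]
      exact hmch.imp (fun u v h => h.1)
    · have : (a' :: t.dropLast ++ [c]) = a' :: t := by
        rw [List.cons_append, ← htm]
      rw [this]
      refine hmch.imp (fun u v h => ?_)
      intro hH
      rcases h.2 with h' | h'
      · exact h' (hverts u v hH).1
      · exact h' (hverts u v hH).2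

end EarAux2

open Cyclic3 in
/-- If `H` (with vertex set `S`, `|S| ≥ 2`) is a proper subdigraph of an unbreakable
digraph `G`, then there is an ear for `H` in `G`. -/
theorem stmt_6 {V : Type*} [Fintype V] (G H : V → V → Prop) (S : Set V)
    (hirr : Irreflexive G) (hunb : Unbreakable G)
    (hsub : ∀ x y, H x y → G x y) (hverts : ∀ x y, H x y → x ∈ S ∧ y ∈ S)
    (hcard : 2 ≤ S.ncard) (hne : ¬ (S = Set.univ ∧ H = G)) :
    IsEar G H S := by
  classical
  by_cases hSuniv : S = Set.univ
  · -- easy case: some edge of G not in H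
    have hHG : H ≠ G := fun h => hne ⟨hSuniv, h⟩
    have hex : ∃ u v, G u v ∧ ¬ H u v := by
      by_contra hno
      push_neg at hno
      apply hHG
      funext u v
      exact propext ⟨hsub u v, fun hg => hno u v hg⟩
    obtain ⟨u, v, hguv, hhuv⟩ := hex
    have huv : u ≠ v := fun h => hirr u (h ▸ hguv)
    refine ⟨u, v, [], by simp [hSuniv], by simp [hSuniv], by simp, by simp [huv],
      List.isChain_pair.mpr hguv, List.isChain_pair.mpr hhuv⟩
  · obtain ⟨x, hx⟩ : ∃ x, x ∉ S := by
      by_contra h; push_neg at h; exact hSuniv (Set.eq_univ_of_forall h)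
    obtain ⟨_, hsc⟩ := hunb.1
    set R0 : V → V → Prop := fun u v => (G u v ∨ G v u) ∧ u ∉ S ∧ v ∉ S with hR0
    set B : Set V := {b | Relation.ReflTransGen R0 x b} with hBdef
    have hxB : x ∈ B := Relation.ReflTransGen.refl
    have hBS : ∀ b ∈ B, b ∉ S := by
      intro b hb
      cases hb with
      | refl => exact hx
      | tail _ h => exact h.2.2
    have hcl : ∀ y b, b ∈ B → y ∉ S → (G y b ∨ G b y) → y ∈ B := by
      intro y b hb hy h
      exact hb.tail ⟨h.symm, hBS b hb, hy⟩
    obtain ⟨u1, u2, hu1, hu2, hne12⟩ :=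
      (Set.one_lt_ncard_iff S.toFinite).mp (by omega)
    by_cases hop : ∃ (a c : V) (p q : List V) (b : V), b ∈ B ∧ a ∈ S ∧ c ∈ S ∧
        (∀ y ∈ p, y ∈ B) ∧ p.getLast? = some b ∧ (a :: p).Chain' G ∧
        (∀ y ∈ q, y ∈ B) ∧ q.head? = some b ∧ (q ++ [c]).Chain' G ∧ a ≠ c
    · -- open ear exists
      obtain ⟨a, c, p, q, b, hbB, ha, hc, hpB, hpl, hpch, hqB, hqh, hqch, hac⟩ := hop
      have hp0 : p ≠ [] := fun h => by simp [h] at hpl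
      obtain ⟨q', rfl⟩ : ∃ q', q = b :: q' := by
        cases q with
        | nil => simp at hqh
        | cons d q' =>
          have : d = b := by simpa using hqh
          exact ⟨q', by rw [this]⟩
      have hqch' : (b :: (q' ++ [c])).Chain' G := hqch
      have happ : ((a :: p) ++ (q' ++ [c])).Chain' G := by
        apply hpch.append (List.isChain_cons.mp hqch').2
        intro u hu y hy
        have hub : u = b := by
          cases p with
          | nil => exact absurd rfl hp0
          | cons e p' =>
            rw [List.getLast?_cons_cons, hpl] at hu
            exact Eq.symm (by simpa using hu)
        subst hub
        exact (List.isChain_cons.mp hqch').1 y hy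
      refine aux_ear G H S hverts a c ha hc hac (p ++ q') ?_ ?_ ?_
      · intro y hy
        rcases List.mem_append.mp hy with h | h
        · exact hBS _ (hpB y h)
        · exact hBS _ (hqB y (by simp [h]))
      · simp [hp0]
      · have heq : (a :: ((p ++ q') ++ [c])) = (a :: p) ++ (q' ++ [c]) := by simp
        rw [show (p ++ q') ++ [c] = (p ++ q') ++ [c] from rfl] at heq
        have : (a :: (p ++ q' ++ [c])) = (a :: p) ++ (q' ++ [c]) := by simp
        rw [this]
        exact happ
    · push_neg at hop
      exfalso
      -- all attachments go through a single vertex a₀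
      have hs₀ := hu1
      obtain ⟨a₀, ha₀, p₀, hp₀B, hp₀l, hp₀ch⟩ :=
        aux_reach_in G S B hcl hsc u1 hu1 x hxB hx
      have key : ∀ b, b ∈ B →
          (∃ p, (∀ y ∈ p, y ∈ B) ∧ p.getLast? = some b ∧ (a₀ :: p).Chain' G) ∧
          (∃ q, (∀ y ∈ q, y ∈ B) ∧ q.head? = some b ∧ (q ++ [a₀]).Chain' G) := by
        intro b hb
        induction hb with
        | refl =>
          refine ⟨⟨p₀, hp₀B, hp₀l, hp₀ch⟩, ?_⟩
          obtain ⟨c, hc, q, hqB, hqh, hqch⟩ :=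
            aux_reach_out G S B hcl hsc u1 hu1 x hxB hx
          have : a₀ = c := hop a₀ c p₀ q x hxB ha₀ hc hp₀B hp₀l hp₀ch hqB hqh hqch
          subst this
          exact ⟨q, hqB, hqh, hqch⟩
        | @tail b b' hxb hbc ih =>
          obtain ⟨⟨p, hpB, hpl, hpch⟩, ⟨q, hqB, hqh, hqch⟩⟩ := ih
          have hbB : b ∈ B := hxb
          have hb'B : b' ∈ B := hxb.tail hbc
          have hb'S : b' ∉ S := hbc.2.2
          rcases hbc.1 with hgf | hgb
          · -- G b b' : extend in-path to b'
            have hin : (∀ y ∈ p ++ [b'], y ∈ B) ∧ (p ++ [b']).getLast? = some b' ∧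
                (a₀ :: (p ++ [b'])).Chain' G := by
              refine ⟨?_, List.getLast?_concat, ?_⟩
              · intro y hy
                rcases List.mem_append.mp hy with h | h
                · exact hpB y h
                · have : y = b' := by simpa using h
                  exact this ▸ hb'B
              · have heq : (a₀ :: (p ++ [b'])) = (a₀ :: p) ++ [b'] := rfl
                rw [heq]
                refine hpch.append (List.isChain_singleton _) ?_
                intro u hu y hy
                have hyb : y = b' := Eq.symm (by simpa using hy)
                have hub : u = b := by
                  cases p with
                  | nil => simp at hpl
                  | cons e p' =>
                    rw [List.getLast?_cons_cons, hpl] at hu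
                    exact Eq.symm (by simpa using hu)
                subst hyb; subst hub; exact hgf
            obtain ⟨c, hc, q', hq'B, hq'h, hq'ch⟩ :=
              aux_reach_out G S B hcl hsc u1 hu1 b' hb'B hb'S
            have : a₀ = c :=
              hop a₀ c (p ++ [b']) q' b' hb'B ha₀ hc hin.1 hin.2.1 hin.2.2 hq'B hq'h hq'ch
            subst this
            exact ⟨⟨p ++ [b'], hin.1, hin.2.1, hin.2.2⟩, ⟨q', hq'B, hq'h, hq'ch⟩⟩
          · -- G b' b : extend out-path from b'
            have hout : (∀ y ∈ b' :: q, y ∈ B) ∧ (b' :: q).head? = some b' ∧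
                ((b' :: q) ++ [a₀]).Chain' G := by
              refine ⟨?_, rfl, ?_⟩
              · intro y hy
                rcases List.mem_cons.mp hy with h | h
                · exact h ▸ hb'B
                · exact hqB y h
              · have heq : ((b' :: q) ++ [a₀]) = b' :: (q ++ [a₀]) := rfl
                rw [heq]
                refine List.isChain_cons.mpr ⟨?_, hqch⟩
                intro y hy
                have hyb : y = b := by
                  cases q with
                  | nil => simp at hqh
                  | cons d q'' =>
                    have hd : d = b := by simpa using hqh
                    subst hd
                    exact Eq.symm (by simpa using hy)
                subst hyb; exact hgb
            obtain ⟨a, haS, p', hp'B, hp'l, hp'ch⟩ :=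
              aux_reach_in G S B hcl hsc u1 hu1 b' hb'B hb'S
            have : a = a₀ :=
              hop a a₀ p' (b' :: q) b' hb'B haS ha₀ hp'B hp'l hp'ch hout.1 hout.2.1 hout.2.2
            subst this
            exact ⟨⟨p', hp'B, hp'l, hp'ch⟩, ⟨b' :: q, hout.1, hout.2.1, hout.2.2⟩⟩
      have attach : ∀ y ∈ B, ∀ s ∈ S, (G s y ∨ G y s) → s = a₀ := by
        intro y hy s hs hor
        obtain ⟨⟨p, hpB, hpl, hpch⟩, ⟨q, hqB, hqh, hqch⟩⟩ := key y hy
        rcases hor with h | h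
        · exact hop s a₀ [y] q y hy hs ha₀ (by simpa using hy) (by simp)
            (List.isChain_pair.mpr h) hqB hqh hqch
        · exact (hop a₀ s p [y] y hy ha₀ hs hpB hpl hpch (by simpa using hy) (by simp)
            (List.isChain_pair.mpr h)).symm
      -- contradiction with 2-connectivity at a₀
      obtain ⟨s₁, hs₁, hs₁z⟩ : ∃ s₁ ∈ S, s₁ ≠ a₀ := by
        by_cases h : u1 = a₀
        · exact ⟨u2, hu2, fun h2 => hne12 (h2 ▸ h ▸ rfl)⟩
        · exact ⟨u1, hu1, h⟩
      have hxz : x ≠ a₀ := fun h => hx (h ▸ ha₀)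
      have hconn := hunb.2.2 a₀
      have hreach : ((underlying G).induce {w : V | w ≠ a₀}).Reachable ⟨x, hxz⟩ ⟨s₁, hs₁z⟩ :=
        hconn.preconnected _ _
      have hrtg := (SimpleGraph.reachable_iff_reflTransGen _ _).mp hreach
      have hlift : Relation.ReflTransGen
          (fun u v : V => (underlying G).Adj u v ∧ u ≠ a₀ ∧ v ≠ a₀) x s₁ :=
        hrtg.lift (fun w : {w : V | w ≠ a₀} => (w : V)) (fun z1 z2 hz => ⟨hz, z1.2, z2.2⟩)
      have hallB : ∀ y, Relation.ReflTransGen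
          (fun u v : V => (underlying G).Adj u v ∧ u ≠ a₀ ∧ v ≠ a₀) x y → y ∈ B := by
        intro y hy
        induction hy with
        | refl => exact hxB
        | @tail b c hxb hstep ih =>
          obtain ⟨hadj, hbz, hcz⟩ := hstep
          by_cases hcS : c ∈ S
          · exact absurd (attach b ih c hcS hadj.2.symm) hcz
          · exact hcl c b ih hcS hadj.2.symm
      exact hBS s₁ (hallB s₁ hlift) hs₁
end

section
/- Let G be an unbreakable 3-cyclic digraph, let v be a vertex of G, and let N be the set of vertices adjacent to or from v. Then the induced underlying graph G⁻[N] is connected. -/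
section Aux

open List Cyclic3

variable {V : Type*}

private lemma len2 {l : List V} (h : l.length = 2) : ∃ p q : V, l = [p, q] := by
  match l, h with
  | [p, q], _ => exact ⟨p, q, rfl⟩

private lemma len1 {l : List V} (h : l.length = 1) : ∃ p : V, l = [p] := by
  match l, h with
  | [p], _ => exact ⟨p, rfl⟩

private lemma zip_forall_aux {G : V → V → Prop} (z : V) :
    ∀ (t : List V) (x : V), List.Chain' G (x :: t) →
      G ((x :: t).getLast (List.cons_ne_nil x t)) z →
      ∀ p ∈ (x :: t).zip (t ++ [z]), G p.1 p.2 := by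
  intro t
  induction t with
  | nil =>
    intro x _ hcl p hp
    simp only [List.nil_append, List.zip_cons_cons, List.zip_nil_left, List.mem_singleton] at hp
    subst hp
    simpa using hcl
  | cons y t' ih =>
    intro x hch hcl p hp
    rw [List.cons_append, List.zip_cons_cons] at hp
    rcases List.mem_cons.mp hp with rfl | h
    · exact (List.isChain_cons_cons.mp hch).1
    · refine ih y (List.isChain_cons_cons.mp hch).2 ?_ p h
      rwa [List.getLast_cons (List.cons_ne_nil y t')] at hcl

private lemma dicycle_of {G : V → V → Prop} {l : List V} {x y : V} (hne : l ≠ [])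
    (hnd : l.Nodup) (hch : l.Chain' G) (hh : l.head? = some x)
    (hl : l.getLast? = some y) (hyx : G y x) : IsDicycle G l := by
  refine ⟨hne, hnd, ?_⟩
  obtain ⟨a, t, rfl⟩ := List.exists_cons_of_ne_nil hne
  obtain rfl : a = x := by simpa using hh
  have hy : (a :: t).getLast (List.cons_ne_nil a t) = y := by
    rw [List.getLast?_eq_getLast (List.cons_ne_nil a t)] at hl
    exact Option.some_inj.mp hl
  have hrot : (a :: t).rotate 1 = t ++ [a] := by
    rw [show (1 : ℕ) = 0 + 1 from rfl, List.rotate_cons_succ, List.rotate_zero]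
  rw [hrot]
  exact zip_forall_aux a t a hch (by rw [hy]; exact hyx)

private lemma extract {R : V → V → Prop} :
    ∀ (n : ℕ) (l : List V), l.length ≤ n → l ≠ [] → l.Chain' R →
      ∃ m : List V, m ≠ [] ∧ m.Nodup ∧ m.Chain' R ∧ m.head? = l.head? ∧
        m.getLast? = l.getLast? ∧ ∀ x ∈ m, x ∈ l := by
  intro n
  induction n with
  | zero =>
    intro l hl hne
    exact absurd (List.length_eq_zero_iff.mp (Nat.le_zero.mp hl)) hne
  | succ n ih =>
    intro l hlen hne hch
    obtain ⟨a, t, rfl⟩ := List.exists_cons_of_ne_nil hne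
    by_cases ha : a ∈ t
    · obtain ⟨s, u, rfl⟩ := List.append_of_mem ha
      have hre : a :: (s ++ a :: u) = (a :: s) ++ (a :: u) := by simp
      have hch2 : (a :: u).Chain' R := by
        rw [hre] at hch
        exact (List.isChain_append.mp hch).2.1
      have hlen2 : (a :: u).length ≤ n := by
        simp only [List.length_cons, List.length_append] at hlen ⊢
        omega
      obtain ⟨m, h1, h2, h3, h4, h5, h6⟩ := ih (a :: u) hlen2 (List.cons_ne_nil a u) hch2
      refine ⟨m, h1, h2, h3, by rw [h4]; rfl, ?_, ?_⟩
      · rw [h5, hre, List.getLast?_append,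
          List.getLast?_eq_getLast (List.cons_ne_nil a u)]
        rfl
      · intro x hx
        have := h6 x hx
        simp only [List.mem_cons, List.mem_append] at this ⊢
        tauto
    · cases t with
      | nil => exact ⟨[a], by simp, by simp, by simp [List.Chain'], rfl, rfl, by simp⟩
      | cons b t' =>
        have hch2 : (b :: t').Chain' R := hch.tail
        obtain ⟨m, h1, h2, h3, h4, h5, h6⟩ := ih (b :: t')
          (by simp only [List.length_cons] at hlen ⊢; omega) (List.cons_ne_nil b t') hch2
        obtain ⟨c, m', rfl⟩ := List.exists_cons_of_ne_nil h1
        obtain rfl : c = b := by simpa using h4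
        refine ⟨a :: c :: m', List.cons_ne_nil _ _, ?_, ?_, rfl, ?_, ?_⟩
        · exact List.nodup_cons.mpr ⟨fun hmem => ha (h6 a hmem), h2⟩
        · exact List.isChain_cons_cons.mpr ⟨(List.isChain_cons_cons.mp hch).1, h3⟩
        · rw [List.getLast?_cons_cons, h5, List.getLast?_cons_cons]
        · intro x hx
          rcases List.mem_cons.mp hx with rfl | hx
          · exact List.mem_cons_self
          · exact List.mem_cons_of_mem a (h6 x hx)

/-- `v`-avoiding directed reachability via an explicit walk. -/
private def ReachA (G : V → V → Prop) (v x y : V) : Prop :=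
  ∃ l : List V, l ≠ [] ∧ l.Chain' G ∧ l.head? = some x ∧ l.getLast? = some y ∧ v ∉ l

private lemma reachA_ne_left {G : V → V → Prop} {v x y : V} (h : ReachA G v x y) : x ≠ v := by
  obtain ⟨l, l1, _, l3, _, l5⟩ := h
  obtain ⟨t, rfl⟩ : ∃ t, l = x :: t := by
    cases l with
    | nil => simp at l3
    | cons a t => simp at l3; exact ⟨t, by rw [l3]⟩
  rintro rfl
  exact l5 (List.mem_cons_self)

private lemma reachA_ne_right {G : V → V → Prop} {v x y : V} (h : ReachA G v x y) : y ≠ v := by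
  obtain ⟨l, l1, _, _, l4, l5⟩ := h
  rintro rfl
  rw [List.getLast?_eq_getLast l1, Option.some_inj] at l4
  have := List.getLast_mem l1
  rw [l4] at this
  exact l5 this

private lemma reachA_refl {G : V → V → Prop} {v x : V} (hx : x ≠ v) : ReachA G v x x :=
  ⟨[x], by simp, by simp [List.Chain'], rfl, rfl, by simpa using Ne.symm hx⟩

private lemma reachA_single {G : V → V → Prop} {v x y : V} (h : G x y) (hx : x ≠ v)
    (hy : y ≠ v) : ReachA G v x y :=
  ⟨[x, y], by simp, by simp [List.Chain', h], rfl, by simp, by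
    simp only [List.mem_cons, List.mem_singleton, List.not_mem_nil]
    push_neg
    exact ⟨Ne.symm hx, Ne.symm hy, trivial⟩⟩

private lemma reachA_trans {G : V → V → Prop} {v x y z : V} (h1 : ReachA G v x y)
    (h2 : ReachA G v y z) : ReachA G v x z := by
  obtain ⟨l₁, a1, a2, a3, a4, a5⟩ := h1
  obtain ⟨l₂, b1, b2, b3, b4, b5⟩ := h2
  obtain ⟨c, t, rfl⟩ := List.exists_cons_of_ne_nil b1
  obtain rfl : c = y := by simpa using b3
  cases t with
  | nil =>
    obtain rfl : c = z := by simpa using b4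
    exact ⟨l₁, a1, a2, a3, a4, a5⟩
  | cons d t' =>
    refine ⟨l₁ ++ d :: t', by simp [a1], ?_, ?_, ?_, ?_⟩
    · refine List.isChain_append.mpr ⟨a2, b2.tail, ?_⟩
      intro p hp q hq
      rw [a4] at hp
      obtain rfl : c = p := by simpa using hp
      obtain rfl : d = q := by simpa using hq
      exact (List.isChain_cons_cons.mp b2).1
    · rw [List.head?_append, a3]; rfl
    · rw [List.getLast?_append]
      rw [List.getLast?_cons_cons] at b4
      rw [b4]; rfl
    · intro hv
      rcases List.mem_append.mp hv with h | h
      · exact a5 h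
      · exact b5 (List.mem_cons_of_mem _ h)

private lemma reachA_nodup {G : V → V → Prop} {v x y : V} (h : ReachA G v x y) :
    ∃ l : List V, l ≠ [] ∧ l.Nodup ∧ l.Chain' G ∧ l.head? = some x ∧
      l.getLast? = some y ∧ v ∉ l := by
  obtain ⟨l, l1, l2, l3, l4, l5⟩ := h
  obtain ⟨m, m1, m2, m3, m4, m5, m6⟩ := extract l.length l le_rfl l1 l2
  exact ⟨m, m1, m2, m3, by rw [m4, l3], by rw [m5, l4], fun hv => l5 (m6 v hv)⟩

variable {G : V → V → Prop} {v : V}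

private lemma nodigon (hcyc : IsLCyclic G 3) (hirr : Irreflexive G) {a b : V}
    (hab : G a b) (hba : G b a) : False := by
  have hne : a ≠ b := by rintro rfl; exact hirr a hab
  have : IsDicycle G [a, b] :=
    dicycle_of (by simp) (by simp [hne]) (by simp [List.Chain', hab]) (by simp) (by simp) hba
  simpa using hcyc _ this

private lemma path (hsc : StronglyConnected G) (a b : V) :
    ∃ m : List V, m ≠ [] ∧ m.Nodup ∧ m.Chain' G ∧ m.head? = some a ∧ m.getLast? = some b := by
  obtain ⟨l, h1, h2, h3⟩ := hsc.2 a b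
  have hne : l ≠ [] := by rintro rfl; simp at h1
  obtain ⟨m, m1, m2, m3, m4, m5, _⟩ := extract l.length l le_rfl hne h3
  exact ⟨m, m1, m2, m3, by rw [m4, h1], by rw [m5, h2]⟩

private lemma split_last {R : V → V → Prop} {l : List V} {x y : V} (l1 : l ≠ [])
    (l2 : l.Nodup) (l3 : l.Chain' R) (l4 : l.head? = some x) (l5 : l.getLast? = some y)
    (hxy : x ≠ y) :
    ∃ (m : List V) (hm : m ≠ []), m.Nodup ∧ m.Chain' R ∧ m.head? = some x ∧
      y ∉ m ∧ R (m.getLast hm) y ∧ m ++ [y] = l := by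
  have hLast : l.getLast l1 = y := by
    rw [List.getLast?_eq_getLast l1, Option.some_inj] at l5
    exact l5
  have hdecomp : l.dropLast ++ [y] = l := by
    conv_rhs => rw [← List.dropLast_append_getLast l1]
    rw [hLast]
  have hmne : l.dropLast ≠ [] := by
    intro h
    rw [h, List.nil_append] at hdecomp
    rw [← hdecomp] at l4
    simp at l4
    exact hxy l4.symm
  have l3' : (l.dropLast ++ [y]).Chain' R := by rw [hdecomp]; exact l3
  have l2' : (l.dropLast ++ [y]).Nodup := by rw [hdecomp]; exact l2
  have l4' : (l.dropLast ++ [y]).head? = some x := by rw [hdecomp]; exact l4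
  refine ⟨l.dropLast, hmne, (List.nodup_append'.mp l2').1, (List.isChain_append.mp l3').1, ?_,
    fun hy => (List.nodup_append'.mp l2').2.2 hy (List.mem_singleton.mpr rfl), ?_, hdecomp⟩
  · rw [List.head?_append] at l4'
    rw [List.head?_eq_head hmne] at l4' ⊢
    simpa using l4'
  · refine (List.isChain_append.mp l3').2.2 _ ?_ y rfl
    rw [List.getLast?_eq_getLast hmne]
    rfl

private lemma tricycle (hsc : StronglyConnected G) (hcyc : IsLCyclic G 3)
    (hirr : Irreflexive G) {a b : V} (hab : G a b) :
    ∃ c, G b c ∧ G c a ∧ c ≠ a ∧ c ≠ b := by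
  have hne : b ≠ a := by rintro rfl; exact hirr _ hab
  obtain ⟨l, l1, l2, l3, l4, l5⟩ := path hsc b a
  obtain ⟨m, hmne, hmnd, hmch, hmhead, hanm, hclose, hdecomp⟩ :=
    split_last l1 l2 l3 l4 l5 hne
  obtain ⟨c, m', rfl⟩ := List.exists_cons_of_ne_nil hmne
  obtain rfl : c = b := by simpa using hmhead
  have hdic : IsDicycle G (a :: c :: m') := by
    refine dicycle_of (x := a) (y := (c :: m').getLast (List.cons_ne_nil c m'))
      (List.cons_ne_nil _ _) (List.nodup_cons.mpr ⟨hanm, hmnd⟩)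
      (List.isChain_cons_cons.mpr ⟨hab, hmch⟩) rfl ?_ hclose
    rw [List.getLast?_cons_cons, List.getLast?_eq_getLast (List.cons_ne_nil c m')]
  have hlen := hcyc _ hdic
  have : m'.length = 1 := by simpa using hlen
  obtain ⟨d, rfl⟩ := len1 this
  have hd : (c :: [d]).getLast (List.cons_ne_nil c [d]) = d := rfl
  rw [hd] at hclose
  refine ⟨d, List.isChain_pair.mp hmch, hclose, ?_, ?_⟩
  · rintro rfl; exact hanm (by simp)
  · rintro rfl
    exact (List.nodup_cons.mp hmnd).1 (by simp)

private lemma lemA (hcyc : IsLCyclic G 3) {w u : V} (hw : G v w) (hu : G u v)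
    {l : List V} (l1 : l ≠ []) (l2 : l.Nodup) (l3 : l.Chain' G)
    (l4 : l.head? = some w) (l5 : l.getLast? = some u) (l6 : v ∉ l) : G w u := by
  have hdic : IsDicycle G (v :: l) := by
    refine dicycle_of (x := v) (y := u) (List.cons_ne_nil _ _)
      (List.nodup_cons.mpr ⟨l6, l2⟩) (List.isChain_cons.mpr ⟨?_, l3⟩) rfl ?_ hu
    · intro y hy
      rw [l4] at hy
      obtain rfl : w = y := by simpa using hy
      exact hw
    · obtain ⟨a, t, rfl⟩ := List.exists_cons_of_ne_nil l1
      rw [List.getLast?_cons_cons]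
      exact l5
  have hlen := hcyc _ hdic
  have : l.length = 2 := by simpa using hlen
  obtain ⟨p, q, rfl⟩ := len2 this
  obtain rfl : p = w := by simpa using l4
  obtain rfl : q = u := by simpa using l5
  exact List.isChain_pair.mp l3

private lemma lemA' (hcyc : IsLCyclic G 3) {w u : V} (hw : G v w) (hu : G u v)
    (hr : ReachA G v w u) : G w u := by
  obtain ⟨l, l1, l2, l3, l4, l5, l6⟩ := reachA_nodup hr
  exact lemA hcyc hw hu l1 l2 l3 l4 l5 l6

private lemma reach_sink (hsc : StronglyConnected G) {x : V} (hx : x ≠ v) :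
    ∃ u, G u v ∧ ReachA G v x u := by
  obtain ⟨l, l1, l2, l3, l4, l5⟩ := path hsc x v
  obtain ⟨m, hmne, hmnd, hmch, hmhead, hvnm, hclose, _⟩ := split_last l1 l2 l3 l4 l5 hx
  exact ⟨m.getLast hmne, hclose,
    ⟨m, hmne, hmch, hmhead, List.getLast?_eq_getLast hmne, hvnm⟩⟩

private lemma lemF (hsc : StronglyConnected G) (hcyc : IsLCyclic G 3) (hirr : Irreflexive G)
    {u u' : V} (hu : G u v) (hu' : G u' v) (hr : ReachA G v u u') :
    ((underlying G).induce {w : V | G v w ∨ G w v}).Reachable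
      ⟨u, Or.inr hu⟩ ⟨u', Or.inr hu'⟩ := by
  by_cases hne : u = u'
  · subst hne
    exact SimpleGraph.Reachable.refl _
  obtain ⟨w'', hvw, hwu, hwnu, hwnv⟩ := tricycle hsc hcyc hirr hu
  obtain ⟨l, l1, l2, l3, l4, l5, l6⟩ := reachA_nodup hr
  by_cases hwl : w'' ∈ l
  · obtain ⟨s, t, rfl⟩ := List.append_of_mem hwl
    have hch : (w'' :: t).Chain' G := (List.isChain_append.mp l3).2.1
    have hnd : (w'' :: t).Nodup := l2.of_append_right
    have hlast : (w'' :: t).getLast? = some u' := by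
      rw [List.getLast?_append] at l5
      rw [List.getLast?_eq_getLast (List.cons_ne_nil w'' t)] at l5 ⊢
      simpa using l5
    have hnv : v ∉ w'' :: t := by
      intro h
      rcases List.mem_cons.mp h with h | h
      · exact hwnv h.symm
      · exact l6 (List.mem_append.mpr (Or.inr (List.mem_cons_of_mem _ h)))
    have hG : G w'' u' := lemA hcyc hvw hu' (List.cons_ne_nil _ _) hnd hch rfl hlast hnv
    have a1 : ((underlying G).induce {w : V | G v w ∨ G w v}).Adj
        ⟨u, Or.inr hu⟩ ⟨w'', Or.inl hvw⟩ := ⟨Ne.symm hwnu, Or.inr hwu⟩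
    have a2 : ((underlying G).induce {w : V | G v w ∨ G w v}).Adj
        ⟨w'', Or.inl hvw⟩ ⟨u', Or.inr hu'⟩ := by
      have hneq : w'' ≠ u' := by rintro rfl; exact hirr _ hG
      exact ⟨hneq, Or.inl hG⟩
    exact a1.reachable.trans a2.reachable
  · exfalso
    have hdic : IsDicycle G (w'' :: (l ++ [v])) := by
      refine dicycle_of (x := w'') (y := v) (List.cons_ne_nil _ _) ?_ ?_ rfl ?_ hvw
      · refine List.nodup_cons.mpr ⟨?_, ?_⟩
        · intro h
          rcases List.mem_append.mp h with h | h
          · exact hwl h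
          · exact hwnv (List.mem_singleton.mp h)
        · refine List.nodup_append'.mpr ⟨l2, by simp, ?_⟩
          intro a ha hb
          rw [List.mem_singleton] at hb
          subst hb
          exact l6 ha
      · refine List.isChain_cons.mpr ⟨?_, ?_⟩
        · intro y hy
          rw [List.head?_append, l4] at hy
          obtain rfl : u = y := by simpa using hy
          exact hwu
        · refine List.isChain_append.mpr ⟨l3, by simp, ?_⟩
          intro p hp q hq
          rw [l5] at hp
          obtain rfl : u' = p := by simpa using hp
          obtain rfl : v = q := by simpa using hq
          exact hu'
      · rw [← List.cons_append, List.getLast?_append]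
        rfl
    have hlen := hcyc _ hdic
    have hl1 : l.length = 1 := by
      simp at hlen
      omega
    obtain ⟨p, rfl⟩ := len1 hl1
    have e1 : p = u := by simpa using l4
    have e2 : p = u' := by simpa using l5
    exact hne (by rw [← e1, e2])

private lemma star (hsc : StronglyConnected G) (hcyc : IsLCyclic G 3) (hirr : Irreflexive G)
    {x u u' : V} (hu : G u v) (hu' : G u' v)
    (h1 : ReachA G v x u) (h2 : ReachA G v x u') :
    ((underlying G).induce {w : V | G v w ∨ G w v}).Reachable
      ⟨u, Or.inr hu⟩ ⟨u', Or.inr hu'⟩ := by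
  obtain ⟨l, l1, l2, l3, l4, l5⟩ := path hsc u x
  by_cases hv : v ∈ l
  · obtain ⟨s, t, rfl⟩ := List.append_of_mem hv
    have htne : t ≠ [] := by
      rintro rfl
      rw [List.getLast?_append] at l5
      have : v = x := by simpa using l5
      exact reachA_ne_left h1 this.symm
    obtain ⟨w, t', rfl⟩ := List.exists_cons_of_ne_nil htne
    have hchsuf : (v :: w :: t').Chain' G := (List.isChain_append.mp l3).2.1
    have hvw : G v w := (List.isChain_cons_cons.mp hchsuf).1
    have hnd : (v :: w :: t').Nodup := l2.of_append_right
    have hnv : v ∉ w :: t' := (List.nodup_cons.mp hnd).1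
    have hlast : (w :: t').getLast? = some x := by
      rw [List.getLast?_append, List.getLast?_cons_cons] at l5
      rw [List.getLast?_eq_getLast (List.cons_ne_nil w t')] at l5 ⊢
      simpa using l5
    have hwx : ReachA G v w x := ⟨w :: t', List.cons_ne_nil _ _, hchsuf.tail, rfl, hlast, hnv⟩
    have g1 : G w u := lemA' hcyc hvw hu (reachA_trans hwx h1)
    have g2 : G w u' := lemA' hcyc hvw hu' (reachA_trans hwx h2)
    have a1 : ((underlying G).induce {w : V | G v w ∨ G w v}).Adj
        ⟨u, Or.inr hu⟩ ⟨w, Or.inl hvw⟩ := by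
      have hneq : u ≠ w := by rintro rfl; exact hirr _ g1
      exact ⟨hneq, Or.inr g1⟩
    have a2 : ((underlying G).induce {w : V | G v w ∨ G w v}).Adj
        ⟨w, Or.inl hvw⟩ ⟨u', Or.inr hu'⟩ := by
      have hneq : w ≠ u' := by rintro rfl; exact hirr _ g2
      exact ⟨hneq, Or.inl g2⟩
    exact a1.reachable.trans a2.reachable
  · have hru : ReachA G v u x := ⟨l, l1, l3, l4, l5, hv⟩
    exact lemF hsc hcyc hirr hu hu' (reachA_trans hru h2)

end Aux

open Cyclic3 in
/-- In an unbreakable 3-cyclic digraph, the set `N` of vertices adjacent to or from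
any vertex `v` induces a connected subgraph of the underlying graph. -/
theorem stmt_7 {V : Type*} [Fintype V] (G : V → V → Prop)
    (hirr : Irreflexive G) (hunb : Unbreakable G) (hcyc : IsLCyclic G 3) (v : V) :
    ((underlying G).induce {w : V | G v w ∨ G w v}).Connected := by
  classical
  have hsc : StronglyConnected G := hunb.1
  have hcard : 3 ≤ Nat.card V := hunb.2.1
  have h2c := hunb.2.2
  have key : ∀ u₁ u₂ (h1 : G u₁ v) (h2 : G u₂ v),
      ((underlying G).induce {w : V | G v w ∨ G w v}).Reachable
        ⟨u₁, Or.inr h1⟩ ⟨u₂, Or.inr h2⟩ := by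
    intro u₁ u₂ h1 h2
    set S : Set V := {x | ∃ u, ∃ (hu : G u v), ReachA G v x u ∧
      ((underlying G).induce {w : V | G v w ∨ G w v}).Reachable
        ⟨u, Or.inr hu⟩ ⟨u₁, Or.inr h1⟩} with hSdef
    set T : Set V := {x | ∃ u, ∃ (hu : G u v), ReachA G v x u ∧
      ¬ ((underlying G).induce {w : V | G v w ∨ G w v}).Reachable
        ⟨u, Or.inr hu⟩ ⟨u₁, Or.inr h1⟩} with hTdef
    have noBoth : ∀ x, x ∈ S → x ∈ T → False := by
      rintro x ⟨u, hu, hru, hcon⟩ ⟨u', hu', hru', hncon⟩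
      exact hncon ((star hsc hcyc hirr hu' hu hru' hru).trans hcon)
    have cover : ∀ x : V, x ≠ v → x ∈ S ∨ x ∈ T := by
      intro x hx
      obtain ⟨u, hu, hru⟩ := reach_sink hsc hx
      by_cases hc : ((underlying G).induce {w : V | G v w ∨ G w v}).Reachable
        ⟨u, Or.inr hu⟩ ⟨u₁, Or.inr h1⟩
      · exact Or.inl ⟨u, hu, hru, hc⟩
      · exact Or.inr ⟨u, hu, hru, hc⟩
    have hu₂v : u₂ ≠ v := by rintro rfl; exact hirr _ h2
    have hu₁v : u₁ ≠ v := by rintro rfl; exact hirr _ h1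
    rcases cover u₂ hu₂v with h | h
    · obtain ⟨u, hu, hru, hcon⟩ := h
      exact hcon.symm.trans (star hsc hcyc hirr hu h2 hru (reachA_refl hu₂v))
    · exfalso
      have hS₁ : u₁ ∈ S := ⟨u₁, h1, reachA_refl hu₁v, SimpleGraph.Reachable.refl _⟩
      obtain ⟨p⟩ := ((h2c v).preconnected ⟨u₁, hu₁v⟩ ⟨u₂, hu₂v⟩)
      have claim : ∀ (b : {w : V | w ≠ v}) (a : {w : V | w ≠ v})
          (q : ((underlying G).induce {w : V | w ≠ v}).Walk a b),
          a.1 ∈ S → b.1 ∈ S := by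
        intro b a q
        induction q with
        | nil => exact fun h => h
        | @cons x y z hadj q ih =>
          intro hx
          apply ih
          rcases cover y.1 y.2 with hb | hb
          · exact hb
          · exfalso
            have hadj' : (underlying G).Adj x.1 y.1 := hadj
            obtain ⟨hneab, hor⟩ := hadj'
            obtain ⟨u, hu, hru, hcon⟩ := hx
            obtain ⟨u', hu', hru', hncon⟩ := hb
            rcases hor with hab | hba
            · have hxr : ReachA G v x.1 u' := reachA_trans (reachA_single hab x.2 y.2) hru'
              exact hncon ((star hsc hcyc hirr hu' hu hxr hru).trans hcon)
            · have hxr : ReachA G v y.1 u := reachA_trans (reachA_single hba y.2 x.2) hru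
              exact hncon ((star hsc hcyc hirr hu' hu hru' hxr).trans hcon)
      exact noBoth u₂ (claim ⟨u₂, hu₂v⟩ ⟨u₁, hu₁v⟩ p hS₁) h
  have toMinus : ∀ a (ha : a ∈ {w : V | G v w ∨ G w v}), ∃ u, ∃ (hu : G u v),
      ((underlying G).induce {w : V | G v w ∨ G w v}).Reachable ⟨a, ha⟩ ⟨u, Or.inr hu⟩ := by
    intro a ha
    rcases ha with hva | hav
    · obtain ⟨c, hac, hcv, hcnv, hcna⟩ := tricycle hsc hcyc hirr hva
      have hneq : a ≠ c := fun h => hcna h.symm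
      exact ⟨c, hcv, SimpleGraph.Adj.reachable ⟨hneq, Or.inl hac⟩⟩
    · exact ⟨a, hav, SimpleGraph.Reachable.refl _⟩
  rw [SimpleGraph.connected_iff]
  constructor
  · rintro ⟨a, ha⟩ ⟨b, hb⟩
    obtain ⟨ua, hua, hra⟩ := toMinus a ha
    obtain ⟨ub, hub, hrb⟩ := toMinus b hb
    exact (hra.trans (key ua ub hua hub)).trans hrb.symm
  · have hnt : Nontrivial V := by
      have h1 : 1 < Fintype.card V := by
        rw [← Nat.card_eq_fintype_card]
        omega
      exact Fintype.one_lt_card_iff_nontrivial.mp h1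
    obtain ⟨x, hx⟩ := exists_ne v
    obtain ⟨u, hu, _⟩ := reach_sink hsc hx
    exact ⟨⟨u, Or.inr hu⟩⟩
end

section
/- Let G be an unbreakable, 3-cyclic, diwheel-free digraph. Let xy be an edge of G, and suppose that u and v are two distinct vertices each forming a tricycle with the edge xy (i.e., x→y→u→x and x→y→v→x are directed cycles). Then there is no path of G⁻∖{x,y} between u and v. -/
namespace Cyclic3

variable {V : Type*}

section Aux
variable {V : Type*}

-- generic: cycle from a function
theorem isDicycle_of_fn {G : V → V → Prop} (c : ℕ → V) (n : ℕ) (hn : 0 < n)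
    (hinj : ∀ i < n, ∀ j < n, i < j → c i ≠ c j)
    (hch : ∀ i < n, G (c i) (c ((i + 1) % n))) :
    IsDicycle G ((List.range n).map c) := by
  have hlen : ((List.range n).map c).length = n := by simp
  refine ⟨?_, ?_, ?_⟩
  · intro h; rw [← List.length_eq_zero_iff] at h; omega
  · refine List.Nodup.map_on ?_ List.nodup_range
    intro i hi j hj hij
    simp only [List.mem_range] at hi hj
    by_contra hne
    rcases Nat.lt_or_ge i j with h | h
    · exact hinj i hi j hj h hij
    · have : j < i := by omega
      exact hinj j hj i hi this hij.symm
  · intro p hp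
    rw [List.mem_iff_get] at hp
    obtain ⟨⟨i, hi⟩, rfl⟩ := hp
    rw [List.get_eq_getElem, List.getElem_zip]; dsimp only
    have hi' : i < n := by
      simp only [List.length_zip, List.length_rotate, hlen, Nat.min_self] at hi; exact hi
    have h1 : (((List.range n).map c).get ⟨i, by omega⟩) = c i := by
      simp [List.getElem_map]
    have h2 : ((((List.range n).map c).rotate 1).get ⟨i, by simp; omega⟩) = c ((i + 1) % n) := by
      rw [List.get_rotate]
      simp [List.getElem_map, hlen]
    simp only [List.get_eq_getElem] at h1 h2; simp only [h1, h2]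
    exact hch i hi'

/-- generic walk spec -/
def WSpec (R : V → V → Prop) (Q : V → Prop) (a b : V) (l : List V) : Prop :=
  l.head? = some a ∧ l.getLast? = some b ∧ l.Chain' R ∧ ∀ z ∈ l, Q z

theorem walk_of_fn (R : V → V → Prop) (Q : V → Prop) (f : ℕ → V) (m : ℕ)
    (hch : ∀ i < m, R (f i) (f (i + 1))) (hQ : ∀ i ≤ m, Q (f i)) :
    ∃ l : List V, WSpec R Q (f 0) (f m) l ∧ l.length = m + 1 := by
  refine ⟨(List.range (m + 1)).map f, ⟨?_, ?_, ?_, ?_⟩, by simp⟩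
  · rw [List.head?_eq_getElem?]
    simp [List.getElem?_eq_getElem, List.range_succ_eq_map]
  · have hlen : ((List.range (m + 1)).map f).length = m + 1 := by simp
    rw [List.getLast?_eq_getElem?, hlen]
    simp [List.getElem?_eq_getElem]
  · unfold List.Chain'; rw [List.isChain_iff_getElem]
    intro i hi
    simp only [List.length_map, List.length_range] at hi
    have h1 : (((List.range (m+1)).map f).get ⟨i, by simp; omega⟩) = f i := by
      simp [List.getElem_map]
    have h2 : (((List.range (m+1)).map f).get ⟨i+1, by simp; omega⟩) = f (i+1) := by
      simp [List.getElem_map]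
    simp only [List.get_eq_getElem] at h1 h2; rw [h1, h2]
    exact hch i (by omega)
  · intro z hz
    simp only [List.mem_map, List.mem_range] at hz
    obtain ⟨i, hi, rfl⟩ := hz
    exact hQ i (by omega)

/-- walk list to function facts -/
theorem walk_to_fn (R : V → V → Prop) (Q : V → Prop) (a b : V) (l : List V)
    (h : WSpec R Q a b l) :
    ∃ (k : ℕ) (w : ℕ → V), w 0 = a ∧ w k = b ∧ (∀ i < k, R (w i) (w (i + 1))) ∧
      (∀ i ≤ k, Q (w i)) ∧ k + 1 = l.length := by
  obtain ⟨h1, h2, h3, h4⟩ := h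
  have hne : l ≠ [] := by rintro rfl; simp at h1
  have hlpos : 0 < l.length := List.length_pos_iff.mpr hne
  refine ⟨l.length - 1, fun i => l.getD i a, ?_, ?_, ?_, ?_, by omega⟩
  · rw [List.head?_eq_getElem?] at h1
    simp only [List.getElem?_eq_getElem hlpos] at h1
    simp only [List.getD_eq_getElem?_getD, List.getElem?_eq_getElem hlpos]
    simpa using h1
  · rw [List.getLast?_eq_getElem?] at h2
    have hlt : l.length - 1 < l.length := by omega
    simp only [List.getD_eq_getElem?_getD, List.getElem?_eq_getElem hlt]
    simp [List.getElem?_eq_getElem hlt] at h2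
    simp [h2]
  · intro i hi
    unfold List.Chain' at h3; rw [List.isChain_iff_getElem] at h3
    have := h3 i (by omega)
    have e1 : l.getD i a = l.get ⟨i, by omega⟩ := by
      simp [List.getD_eq_getElem?_getD, List.getElem?_eq_getElem (show i < l.length by omega)]
    have e2 : l.getD (i+1) a = l.get ⟨i+1, by omega⟩ := by
      simp [List.getD_eq_getElem?_getD, List.getElem?_eq_getElem (show i+1 < l.length by omega)]
    show R (l.getD i a) (l.getD (i+1) a)
    rw [e1, e2]; exact this
  · intro i hi
    apply h4
    have hlt : i < l.length := by omega
    show l.getD i a ∈ l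
    simp only [List.getD_eq_getElem?_getD, List.getElem?_eq_getElem hlt, Option.getD_some]
    exact List.getElem_mem _


/-- minimal walk as a function, with injectivity -/
theorem min_walk_fn (R : V → V → Prop) (Q : V → Prop) (a b : V)
    (hex : ∃ l : List V, WSpec R Q a b l) :
    ∃ (k : ℕ) (w : ℕ → V), w 0 = a ∧ w k = b ∧ (∀ i < k, R (w i) (w (i + 1))) ∧
      (∀ i ≤ k, Q (w i)) ∧ (∀ i ≤ k, ∀ j ≤ k, i < j → w i ≠ w j) ∧
      (∀ (m : ℕ) (f : ℕ → V), f 0 = a → f m = b → (∀ i < m, R (f i) (f (i + 1))) →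
        (∀ i ≤ m, Q (f i)) → k ≤ m) := by
  classical
  have hex' : ∃ n : ℕ, ∃ l : List V, WSpec R Q a b l ∧ l.length = n := by
    obtain ⟨l, hl⟩ := hex; exact ⟨l.length, l, hl, rfl⟩
  obtain ⟨l, hl, hlen⟩ := Nat.find_spec hex'
  obtain ⟨k, w, hw0, hwk, hch, hQ, hk⟩ := walk_to_fn R Q a b l hl
  have hmin : ∀ (m : ℕ) (f : ℕ → V), f 0 = a → f m = b → (∀ i < m, R (f i) (f (i + 1))) →
      (∀ i ≤ m, Q (f i)) → k ≤ m := by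
    intro m f h0 hm hch' hQ'
    obtain ⟨l', hl', hlen'⟩ := walk_of_fn R Q f m hch' hQ'
    rw [h0, hm] at hl'
    have : Nat.find hex' ≤ l'.length := Nat.find_min' hex' ⟨l', hl', rfl⟩
    omega
  refine ⟨k, w, hw0, hwk, hch, hQ, ?_, hmin⟩
  intro i hi j hj hij
  by_contra heq
  -- splice out (i, j]
  set f : ℕ → V := fun n => if n ≤ i then w n else w (n + (j - i)) with hf
  have hf0 : f 0 = a := by simp [hf, hw0]
  have hfm : f (k - (j - i)) = b := by
    by_cases h : k - (j - i) ≤ i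
    · have hji : j = k := by omega
      have hik : k - (j - i) = i := by omega
      show (if k - (j - i) ≤ i then w (k - (j - i)) else w (k - (j - i) + (j - i))) = b
      rw [if_pos h, hik, heq, hji, hwk]
    · simp only [hf, if_neg h]
      rw [show k - (j - i) + (j - i) = k by omega, hwk]
  have hchf : ∀ n < k - (j - i), R (f n) (f (n + 1)) := by
    intro n hn
    by_cases h1 : n + 1 ≤ i
    · simp only [hf, if_pos (by omega : n ≤ i), if_pos h1]
      exact hch n (by omega)
    · by_cases h2 : n ≤ i
      · have hni : n = i := by omega
        simp only [hf, if_pos h2, if_neg h1]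
        rw [hni, heq, show i + 1 + (j - i) = j + 1 by omega]
        exact hch j (by omega)
      · simp only [hf, if_neg h2, if_neg h1]
        rw [show n + 1 + (j - i) = n + (j - i) + 1 by omega]
        exact hch (n + (j - i)) (by omega)
  have hQf : ∀ n ≤ k - (j - i), Q (f n) := by
    intro n hn
    by_cases h : n ≤ i
    · simp only [hf, if_pos h]; exact hQ n (by omega)
    · simp only [hf, if_neg h]; exact hQ (n + (j - i)) (by omega)
  have := hmin (k - (j - i)) f hf0 hfm hchf hQf
  omega


/-- a directed cycle presented by a function yields False unless length 3 -/
theorem no_cycle_fn {G : V → V → Prop} (hcyc : IsLCyclic G 3) (c : ℕ → V) (n : ℕ)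
    (hn : 0 < n) (hn3 : n ≠ 3)
    (hinj : ∀ i < n, ∀ j < n, i < j → c i ≠ c j)
    (hch : ∀ i < n, G (c i) (c ((i + 1) % n))) : False := by
  have := hcyc _ (isDicycle_of_fn c n hn hinj hch)
  simp at this; omega

theorem no_digon {G : V → V → Prop} (hirr : Irreflexive G) (hcyc : IsLCyclic G 3)
    {a b : V} (h1 : G a b) (h2 : G b a) : False := by
  have hab : a ≠ b := by rintro rfl; exact hirr a h1
  refine no_cycle_fn hcyc (fun i => if i = 0 then a else b) 2 (by omega) (by omega) ?_ ?_
  · intro i hi j hj hij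
    interval_cases i <;> interval_cases j <;> simp_all
  · intro i hi
    interval_cases i <;> simp_all

/-- every edge lies in a tricycle: partner existence -/
theorem partner_exists {G : V → V → Prop} (hirr : Irreflexive G) (hcyc : IsLCyclic G 3)
    (hsc : StronglyConnected G) {p q : V} (hqp : G q p) :
    ∃ t, G p t ∧ G t q := by
  have hpq : p ≠ q := by rintro rfl; exact hirr p hqp
  obtain ⟨l, h1, h2, h3⟩ := hsc.2 p q
  obtain ⟨k, w, hw0, hwk, hch, _, hinj, _⟩ :=
    min_walk_fn G (fun _ => True) p q ⟨l, h1, h2, h3, fun _ _ => trivial⟩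
  -- the minimal diwalk closed by q→p is a dicycle, hence k = 2
  have hcyc3 := hcyc ((List.range (k+1)).map w) (isDicycle_of_fn w (k+1) (by omega)
    (fun i hi j hj hij => hinj i (by omega) j (by omega) hij) ?_)
  · simp at hcyc3
    refine ⟨w 1, ?_, ?_⟩
    · have := hch 0 (by omega); rwa [hw0] at this
    · have := hch 1 (by omega); rw [show (1:ℕ)+1 = k from by omega, hwk] at this; exact this
  · intro i hi
    rcases Nat.lt_or_ge i k with h | h
    · rw [Nat.mod_eq_of_lt (by omega)]; exact hch i h
    · have : i = k := by omega
      subst this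
      rw [Nat.mod_self, hw0, hwk]
      exact hqp

theorem wspec_single (R : V → V → Prop) (Q : V → Prop) (s : V) (hq : Q s) :
    WSpec R Q s s [s] := by
  refine ⟨rfl, rfl, ?_, ?_⟩
  · exact List.isChain_singleton s
  · simpa using hq

theorem wspec_snoc {R : V → V → Prop} {Q : V → Prop} {s e z : V} {l : List V}
    (h : WSpec R Q s e l) (hz : R e z) (hq : Q z) : WSpec R Q s z (l ++ [z]) := by
  obtain ⟨h1, h2, h3, h4⟩ := h
  have hne : l ≠ [] := by rintro rfl; simp at h1
  refine ⟨?_, ?_, ?_, ?_⟩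
  · obtain ⟨a, t, rfl⟩ := List.exists_cons_of_ne_nil hne
    simpa using h1
  · simp [List.getLast?_concat]
  · unfold List.Chain'; rw [List.isChain_append]
    refine ⟨h3, by simp, ?_⟩
    intro p hp q hq'
    simp only [List.head?_cons, Option.mem_some_iff] at hq'
    rw [h2] at hp
    simp only [Option.mem_some_iff] at hp
    subst hp; subst hq'
    exact hz
  · intro z' hz'
    rw [List.mem_append] at hz'
    rcases hz' with h | h
    · exact h4 z' h
    · simp at h; subst h; exact hq

theorem hasDiwheel_of_fn {G : V → V → Prop} (hub : V) (p : ℕ → V × V) (N : ℕ) (h2 : 2 ≤ N)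
    (hhub : ∀ m < N, hub ≠ (p m).1 ∧ hub ≠ (p m).2)
    (hinj1 : ∀ m < N, ∀ m' < N, m ≠ m' → (p m).1 ≠ (p m').1)
    (hinj2 : ∀ m < N, ∀ m' < N, m ≠ m' → (p m).2 ≠ (p m').2)
    (hcross : ∀ m < N, ∀ m' < N, (p m).1 ≠ (p m').2)
    (htri : ∀ m < N, G (p m).1 (p m).2 ∧ G (p m).2 hub ∧ G hub (p m).1)
    (hzip : ∀ m < N, G (p ((m + 1) % N)).1 (p m).2) :
    HasDiwheel G := by
  classical
  refine ⟨hub, (List.range N).map p, by simp; omega, ?_, ?_, ?_⟩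
  · rw [List.nodup_cons]
    constructor
    · intro hmem
      rw [List.mem_append] at hmem
      rcases hmem with h | h <;>
      · simp only [List.map_map, List.mem_map, List.mem_range] at h
        obtain ⟨m, hm, he⟩ := h
        first
          | exact (hhub m hm).1 he.symm
          | exact (hhub m hm).2 he.symm
    · rw [List.nodup_append]
      refine ⟨?_, ?_, ?_⟩
      · rw [List.map_map]
        refine List.Nodup.map_on ?_ List.nodup_range
        intro i hi j hj hij
        simp only [List.mem_range] at hi hj
        by_contra hne
        exact hinj1 i hi j hj hne hij
      · rw [List.map_map]
        refine List.Nodup.map_on ?_ List.nodup_range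
        intro i hi j hj hij
        simp only [List.mem_range] at hi hj
        by_contra hne
        exact hinj2 i hi j hj hne hij
      · intro a ha b' hb hab; subst hab
        rw [List.map_map] at ha hb
        simp only [List.mem_map, List.mem_range] at ha hb
        obtain ⟨m, hm, he⟩ := ha
        obtain ⟨m', hm', he'⟩ := hb
        apply hcross m hm m' hm'
        rw [show (Prod.fst ∘ p) m = (p m).1 from rfl] at he
        rw [show (Prod.snd ∘ p) m' = (p m').2 from rfl] at he'
        rw [he, he']
  · intro q hq
    simp only [List.mem_map, List.mem_range] at hq
    obtain ⟨m, hm, rfl⟩ := hq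
    exact htri m hm
  · intro q hq
    rw [List.mem_iff_get] at hq
    obtain ⟨⟨i, hi⟩, rfl⟩ := hq
    rw [List.get_eq_getElem, List.getElem_zip]; dsimp only
    have hlen : ((List.range N).map p).length = N := by simp
    have hi' : i < N := by
      simp only [List.length_zip, List.length_rotate, hlen, Nat.min_self] at hi; exact hi
    have e1 : (((List.range N).map p).get ⟨i, by omega⟩) = p i := by simp
    have e2 : ((((List.range N).map p).rotate 1).get ⟨i, by simp; omega⟩) = p ((i+1) % N) := by
      rw [List.get_rotate]; simp [hlen]
    simp only [List.get_eq_getElem] at e1 e2; simp only [e1, e2]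
    exact hzip i hi'

/-- 4-cycle -/
theorem quad {G : V → V → Prop} (hcyc : IsLCyclic G 3) {a b c d : V}
    (hab : a ≠ b) (hac : a ≠ c) (had : a ≠ d) (hbc : b ≠ c) (hbd : b ≠ d) (hcd : c ≠ d)
    (e1 : G a b) (e2 : G b c) (e3 : G c d) (e4 : G d a) : False := by
  refine no_cycle_fn hcyc (fun i => if i = 0 then a else if i = 1 then b else if i = 2 then c else d)
    4 (by omega) (by omega) ?_ ?_
  · intro i hi j hj hij
    interval_cases i <;> interval_cases j <;> simp_all
  · intro i hi
    interval_cases i <;> simp_all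

/-- cycle z → d0 → ... → dm → z , needs m ≥ 2 -/
theorem glue1 {G : V → V → Prop} (hcyc : IsLCyclic G 3) (z : V) (m : ℕ) (d : ℕ → V)
    (hm : 2 ≤ m) (hch : ∀ i < m, G (d i) (d (i+1)))
    (hinj : ∀ i ≤ m, ∀ j ≤ m, i < j → d i ≠ d j)
    (hz : ∀ i ≤ m, d i ≠ z)
    (e1 : G z (d 0)) (e2 : G (d m) z) : False := by
  refine no_cycle_fn hcyc (fun i => if i = 0 then z else d (i - 1)) (m + 2)
    (by omega) (by omega) ?_ ?_
  · intro i hi j hj hij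
    beta_reduce
    by_cases h0 : i = 0
    · subst h0
      simp only [if_pos rfl, if_neg (by omega : ¬ j = 0)]
      exact fun h => hz (j-1) (by omega) h.symm
    · simp only [if_neg h0, if_neg (by omega : ¬ j = 0)]
      exact hinj (i-1) (by omega) (j-1) (by omega) (by omega)
  · intro i hi
    beta_reduce
    by_cases h0 : i = 0
    · subst h0; simpa using e1
    · by_cases h1 : i = m + 1
      · subst h1
        rw [if_neg (by omega), Nat.mod_self, if_pos rfl, show m + 1 - 1 = m by omega]
        exact e2
      · rw [if_neg h0, Nat.mod_eq_of_lt (by omega), if_neg (by omega),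
          show i + 1 - 1 = i - 1 + 1 by omega]
        exact hch (i-1) (by omega)

/-- cycle z1 → d0 → ... → dm → z2 → z1 , needs m ≥ 1 -/
theorem glue2 {G : V → V → Prop} (hcyc : IsLCyclic G 3) (z1 z2 : V) (m : ℕ) (d : ℕ → V)
    (hm : 1 ≤ m) (hch : ∀ i < m, G (d i) (d (i+1)))
    (hinj : ∀ i ≤ m, ∀ j ≤ m, i < j → d i ≠ d j)
    (hz1 : ∀ i ≤ m, d i ≠ z1) (hz2 : ∀ i ≤ m, d i ≠ z2) (h12 : z1 ≠ z2)
    (e1 : G z1 (d 0)) (e2 : G (d m) z2) (e3 : G z2 z1) : False := by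
  refine no_cycle_fn hcyc
    (fun i => if i = 0 then z1 else if i ≤ m + 1 then d (i - 1) else z2) (m + 3)
    (by omega) (by omega) ?_ ?_
  · intro i hi j hj hij
    beta_reduce
    by_cases h0 : i = 0
    · subst h0
      rw [if_pos rfl, if_neg (show ¬ j = 0 by omega)]
      by_cases hj1 : j ≤ m + 1
      · rw [if_pos hj1]
        exact fun h => hz1 (j-1) (by omega) h.symm
      · rw [if_neg hj1]
        exact h12
    · by_cases hi1 : i ≤ m + 1
      · rw [if_neg h0, if_pos hi1, if_neg (show ¬ j = 0 by omega)]
        by_cases hj1 : j ≤ m + 1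
        · rw [if_pos hj1]
          exact hinj (i-1) (by omega) (j-1) (by omega) (by omega)
        · rw [if_neg hj1]
          exact hz2 (i-1) (by omega)
      · omega
  · intro i hi
    beta_reduce
    by_cases h0 : i = 0
    · subst h0
      rw [if_pos rfl, Nat.mod_eq_of_lt (show 0 + 1 < m + 3 by omega),
        if_neg (show ¬ (0:ℕ) + 1 = 0 by omega), if_pos (show (0:ℕ) + 1 ≤ m + 1 by omega)]
      simpa using e1
    · by_cases h1 : i ≤ m
      · rw [if_neg h0, if_pos (show i ≤ m + 1 by omega),
          Nat.mod_eq_of_lt (show i + 1 < m + 3 by omega),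
          if_neg (show ¬ i + 1 = 0 by omega), if_pos (show i + 1 ≤ m + 1 by omega),
          show i + 1 - 1 = i - 1 + 1 by omega]
        exact hch (i-1) (by omega)
      · by_cases h2 : i = m + 1
        · subst h2
          rw [if_neg h0, if_pos (show m + 1 ≤ m + 1 by omega),
            Nat.mod_eq_of_lt (show m + 1 + 1 < m + 3 by omega),
            if_neg (show ¬ m + 1 + 1 = 0 by omega), if_neg (show ¬ m + 1 + 1 ≤ m + 1 by omega),
            show m + 1 - 1 = m by omega]
          exact e2
        · have h3 : i = m + 2 := by omega
          subst h3
          have hmod : (m + 2 + 1) % (m + 3) = 0 := by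
            have he : m + 2 + 1 = m + 3 := by omega
            rw [he]; exact Nat.mod_self _
          rw [if_neg h0, if_neg (show ¬ m + 2 ≤ m + 1 by omega), hmod, if_pos rfl]
          exact e3

/-- cycle x → d0 → ... → dm → y → u → x -/
theorem glue3 {G : V → V → Prop} (hcyc : IsLCyclic G 3) (x y u : V) (m : ℕ) (d : ℕ → V)
    (hch : ∀ i < m, G (d i) (d (i+1)))
    (hinj : ∀ i ≤ m, ∀ j ≤ m, i < j → d i ≠ d j)
    (hdx : ∀ i ≤ m, d i ≠ x) (hdy : ∀ i ≤ m, d i ≠ y) (hdu : ∀ i ≤ m, d i ≠ u)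
    (hxy : x ≠ y) (hxu : x ≠ u) (hyu : y ≠ u)
    (e1 : G x (d 0)) (e2 : G (d m) y) (e3 : G y u) (e4 : G u x) : False := by
  refine no_cycle_fn hcyc
    (fun i => if i = 0 then x else if i ≤ m + 1 then d (i - 1) else
      if i = m + 2 then y else u) (m + 4)
    (by omega) (by omega) ?_ ?_
  · intro i hi j hj hij
    beta_reduce
    by_cases h0 : i = 0
    · subst h0
      rw [if_pos rfl, if_neg (show ¬ j = 0 by omega)]
      by_cases hj1 : j ≤ m + 1
      · rw [if_pos hj1]
        exact fun h => hdx (j-1) (by omega) h.symm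
      · by_cases hj2 : j = m + 2
        · rw [if_neg hj1, if_pos hj2]; exact hxy
        · rw [if_neg hj1, if_neg hj2]; exact hxu
    · by_cases hi1 : i ≤ m + 1
      · rw [if_neg h0, if_pos hi1, if_neg (show ¬ j = 0 by omega)]
        by_cases hj1 : j ≤ m + 1
        · rw [if_pos hj1]
          exact hinj (i-1) (by omega) (j-1) (by omega) (by omega)
        · by_cases hj2 : j = m + 2
          · rw [if_neg hj1, if_pos hj2]
            exact hdy (i-1) (by omega)
          · rw [if_neg hj1, if_neg hj2]
            exact hdu (i-1) (by omega)
      · by_cases hi2 : i = m + 2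
        · subst hi2
          have hj3 : j = m + 3 := by omega
          subst hj3
          rw [if_neg h0, if_neg (show ¬ m + 2 ≤ m + 1 by omega), if_pos rfl,
            if_neg (show ¬ m + 3 = 0 by omega), if_neg (show ¬ m + 3 ≤ m + 1 by omega),
            if_neg (show ¬ m + 3 = m + 2 by omega)]
          exact hyu
        · omega
  · intro i hi
    beta_reduce
    by_cases h0 : i = 0
    · subst h0
      rw [if_pos rfl, Nat.mod_eq_of_lt (show 0 + 1 < m + 4 by omega),
        if_neg (show ¬ (0:ℕ) + 1 = 0 by omega), if_pos (show (0:ℕ) + 1 ≤ m + 1 by omega)]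
      simpa using e1
    · by_cases h1 : i ≤ m
      · rw [if_neg h0, if_pos (show i ≤ m + 1 by omega),
          Nat.mod_eq_of_lt (show i + 1 < m + 4 by omega),
          if_neg (show ¬ i + 1 = 0 by omega), if_pos (show i + 1 ≤ m + 1 by omega),
          show i + 1 - 1 = i - 1 + 1 by omega]
        exact hch (i-1) (by omega)
      · by_cases h2 : i = m + 1
        · subst h2
          rw [if_neg h0, if_pos (show m + 1 ≤ m + 1 by omega),
            Nat.mod_eq_of_lt (show m + 1 + 1 < m + 4 by omega),
            if_neg (show ¬ m + 1 + 1 = 0 by omega), if_neg (show ¬ m + 1 + 1 ≤ m + 1 by omega),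
            if_pos (show m + 1 + 1 = m + 2 by omega), show m + 1 - 1 = m by omega]
          exact e2
        · by_cases h3 : i = m + 2
          · subst h3
            rw [if_neg h0, if_neg (show ¬ m + 2 ≤ m + 1 by omega), if_pos rfl,
              Nat.mod_eq_of_lt (show m + 2 + 1 < m + 4 by omega),
              if_neg (show ¬ m + 2 + 1 = 0 by omega),
              if_neg (show ¬ m + 2 + 1 ≤ m + 1 by omega),
              if_neg (show ¬ m + 2 + 1 = m + 2 by omega)]
            exact e3
          · have h4 : i = m + 3 := by omega
            subst h4
            have hmod : (m + 3 + 1) % (m + 4) = 0 := by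
              have he : m + 3 + 1 = m + 4 := by omega
              rw [he]; exact Nat.mod_self _
            rw [if_neg h0, if_neg (show ¬ m + 3 ≤ m + 1 by omega),
              if_neg (show ¬ m + 3 = m + 2 by omega), hmod, if_pos rfl]
            exact e4

/-- backward edge at `i` whose partner is `z` (triangle through `z`) -/
def TBk (G : V → V → Prop) (z : V) (w : ℕ → V) (i : ℕ) : Prop :=
  G (w (i+1)) (w i) ∧ G (w i) z ∧ G z (w (i+1))

/-- edge at `i` traversable avoiding `x,y`: forward, or backward with partner `∉ {x,y}` -/
def CleanE (G : V → V → Prop) (x y : V) (w : ℕ → V) (i : ℕ) : Prop :=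
  G (w i) (w (i+1)) ∨ ∃ t, t ≠ x ∧ t ≠ y ∧ G (w i) t ∧ G t (w (i+1))

structure Ctx (G : V → V → Prop) (x y u v : V) (w : ℕ → V) (k : ℕ) : Prop where
  hirr : Irreflexive G
  hsc : StronglyConnected G
  hcyc : IsLCyclic G 3
  hwf : ¬ HasDiwheel G
  hxy : G x y
  hyu : G y u
  hux : G u x
  hyv : G y v
  hvx : G v x
  huv : u ≠ v
  hw0 : w 0 = u
  hwk : w k = v
  hadj : ∀ i < k, G (w i) (w (i+1)) ∨ G (w (i+1)) (w i)
  hQ : ∀ i ≤ k, w i ≠ x ∧ w i ≠ y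
  hinj : ∀ i ≤ k, ∀ j ≤ k, i < j → w i ≠ w j
  hmin : ∀ (m : ℕ) (f : ℕ → V), f 0 = u → f m = v →
    (∀ i < m, G (f i) (f (i+1)) ∨ G (f (i+1)) (f i)) →
    (∀ i ≤ m, f i ≠ x ∧ f i ≠ y) → k ≤ m

namespace Ctx
variable {G : V → V → Prop} {x y u v : V} {w : ℕ → V} {k : ℕ} (C : Ctx G x y u v w k)
include C

lemma xny : x ≠ y := fun h => C.hirr x (h ▸ C.hxy)
lemma unx : u ≠ x := fun h => C.hirr x (h ▸ C.hux)
lemma uny : u ≠ y := fun h => C.hirr y (h ▸ C.hyu)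
lemma vnx : v ≠ x := fun h => C.hirr x (h ▸ C.hvx)
lemma vny : v ≠ y := fun h => C.hirr y (h ▸ C.hyv)

/-- no chords: non-consecutive path vertices are non-adjacent -/
lemma P6 : ∀ i j, i + 2 ≤ j → j ≤ k → ¬(G (w i) (w j) ∨ G (w j) (w i)) := by
  intro i j hij hjk hadj'
  set f : ℕ → V := fun n => if n ≤ i then w n else w (n + (j - i - 1)) with hf
  have h0 : f 0 = u := by simp [hf, C.hw0]
  have hm : f (k - (j - i - 1)) = v := by
    have : ¬ (k - (j - i - 1) ≤ i) := by omega
    simp only [hf, if_neg this]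
    rw [show k - (j - i - 1) + (j - i - 1) = k by omega, C.hwk]
  have hch : ∀ n < k - (j - i - 1), G (f n) (f (n+1)) ∨ G (f (n+1)) (f n) := by
    intro n hn
    by_cases h1 : n + 1 ≤ i
    · simp only [hf, if_pos (by omega : n ≤ i), if_pos h1]
      exact C.hadj n (by omega)
    · by_cases h2 : n ≤ i
      · have : n = i := by omega
        subst this
        simp only [hf, if_pos h2, if_neg h1]
        rw [show n + 1 + (j - n - 1) = j by omega]
        exact hadj'
      · simp only [hf, if_neg h2, if_neg h1]
        rw [show n + 1 + (j - i - 1) = n + (j - i - 1) + 1 by omega]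
        exact C.hadj _ (by omega)
  have hQ' : ∀ n ≤ k - (j - i - 1), f n ≠ x ∧ f n ≠ y := by
    intro n hn
    by_cases h : n ≤ i
    · simp only [hf, if_pos h]; exact C.hQ n (by omega)
    · simp only [hf, if_neg h]; exact C.hQ _ (by omega)
  have := C.hmin _ f h0 hm hch hQ'
  omega

/-- a partner of a path edge is not a path vertex -/
lemma pnw {c : ℕ} (hc : c + 1 ≤ k) {t : V} (h1 : G (w c) t) (h2 : G t (w (c+1))) :
    ∀ e ≤ k, t ≠ w e := by
  intro e hek het
  subst het
  have hec : w e ≠ w c := fun h => C.hirr _ (h ▸ h1)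
  have hec1 : w e ≠ w (c+1) := fun h => C.hirr _ (h ▸ h2)
  rcases Nat.lt_or_ge e c with h | h
  · exact C.P6 e (c+1) (by omega) (by omega) (Or.inl h2)
  · rcases Nat.lt_or_ge e (c+2) with h' | h'
    · have : e = c ∨ e = c + 1 := by omega
      rcases this with rfl | rfl
      · exact hec rfl
      · exact hec1 rfl
    · exact C.P6 c e (by omega) hek (Or.inl h1)

lemma k2 : 2 ≤ k := by
  rcases Nat.lt_or_ge k 2 with h | h
  · interval_cases k
    · exact absurd (C.hw0 ▸ C.hwk) (by simpa using C.huv)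
    · have hadj := C.hadj 0 (by omega)
      rw [C.hw0, show w 1 = v from C.hwk] at hadj
      exfalso
      rcases hadj with h' | h'
      · -- u→v : cycle v x y u
        refine no_cycle_fn C.hcyc
          (fun i => if i = 0 then v else if i = 1 then x else if i = 2 then y else u)
          4 (by omega) (by omega) ?_ ?_
        · intro i hi j hj hij
          interval_cases i <;> interval_cases j <;>
            simp_all [C.vnx, C.vny, C.xny, (C.huv).symm, (C.unx).symm, (C.uny).symm] <;>
            first
              | (exact fun hh => C.vnx hh)
              | skip
        · intro i hi
          interval_cases i <;> simp [C.hvx, C.hxy, C.hyu, h']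
      · -- v→u : cycle u x y v
        refine no_cycle_fn C.hcyc
          (fun i => if i = 0 then u else if i = 1 then x else if i = 2 then y else v)
          4 (by omega) (by omega) ?_ ?_
        · intro i hi j hj hij
          interval_cases i <;> interval_cases j <;>
            simp_all [C.unx, C.uny, C.xny, C.huv, (C.vnx).symm, (C.vny).symm]
        · intro i hi
          interval_cases i <;> simp [C.hux, C.hxy, C.hyv, h']
  · exact h

lemma trich {i : ℕ} (hik : i < k) (hnc : ¬ CleanE G x y w i) :
    TBk G x w i ∨ TBk G y w i := by
  have hbwd : G (w (i+1)) (w i) := by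
    rcases C.hadj i hik with h | h
    · exact absurd (Or.inl h) hnc
    · exact h
  obtain ⟨t, h1, h2⟩ := partner_exists C.hirr C.hcyc C.hsc hbwd
  by_cases htx : t = x
  · subst htx; exact Or.inl ⟨hbwd, h1, h2⟩
  by_cases hty : t = y
  · subst hty; exact Or.inr ⟨hbwd, h1, h2⟩
  exact absurd (Or.inr ⟨t, htx, hty, h1, h2⟩) hnc


/-- directed path from `w a` to `w b` over a clean segment -/
theorem dpath {a b : ℕ} (hab : a ≤ b) (hbk : b ≤ k)
    (hcl : ∀ i, a ≤ i → i < b → CleanE G x y w i) :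
    ∃ (m : ℕ) (d : ℕ → V), d 0 = w a ∧ d m = w b ∧ (∀ i < m, G (d i) (d (i+1))) ∧
      b - a ≤ m ∧ (∀ i ≤ m, ∀ j ≤ m, i < j → d i ≠ d j) ∧
      (∀ i ≤ m, d i ≠ x ∧ d i ≠ y ∧ (1 ≤ a → d i ≠ u)) := by
  classical
  set Q : V → Prop := fun z => (z ≠ x ∧ z ≠ y) ∧ (1 ≤ a → z ≠ u) with hQdef
  -- step 1: existence of a directed Q-walk from w a to w b
  have hex : ∀ c, a ≤ c → c ≤ b → ∃ l, WSpec G Q (w a) (w c) l := by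
    intro c hac hcb
    induction c with
    | zero =>
      have : a = 0 := by omega
      subst this
      exact ⟨[w 0], wspec_single G Q (w 0) ⟨C.hQ 0 (by omega), fun h1 => absurd h1 (by omega)⟩⟩
    | succ c ih =>
      by_cases hac' : a ≤ c
      · obtain ⟨l, hl⟩ := ih hac' (by omega)
        have hQc1 : Q (w (c+1)) := by
          refine ⟨C.hQ (c+1) (by omega), fun h1 => ?_⟩
          rw [← C.hw0]
          exact (C.hinj 0 (by omega) (c+1) (by omega) (by omega)).symm
        rcases hcl c (by omega) (by omega) with hfwd | ⟨t, htx, hty, h1, h2⟩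
        · exact ⟨l ++ [w (c+1)], wspec_snoc hl hfwd hQc1⟩
        · have hQt : Q t := by
            refine ⟨⟨htx, hty⟩, fun ha1 => ?_⟩
            rw [← C.hw0]
            exact C.pnw (by omega) h1 h2 0 (by omega)
          exact ⟨(l ++ [t]) ++ [w (c+1)], wspec_snoc (wspec_snoc hl h1 hQt) h2 hQc1⟩
      · have hca : c + 1 = a := by omega
        rw [hca]
        refine ⟨[w a], wspec_single G Q (w a) ⟨C.hQ a (by omega), fun h1 => ?_⟩⟩
        rw [← C.hw0]
        exact (C.hinj 0 (by omega) a (by omega) (by omega)).symm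
  -- step 2: minimal directed Q-walk
  obtain ⟨m, d, hd0, hdm, hch, hQd, hinj, _⟩ :=
    min_walk_fn G Q (w a) (w b) (hex b hab (le_refl b))
  refine ⟨m, d, hd0, hdm, hch, ?_, hinj, fun i hi => ⟨(hQd i hi).1.1, (hQd i hi).1.2, (hQd i hi).2⟩⟩
  -- step 3: length lower bound from minimality of the undirected walk
  set f : ℕ → V := fun n => if n < a then w n else if n ≤ a + m then d (n - a) else
    w (n - a - m + b) with hf
  have hf0 : f 0 = u := by
    by_cases h : 0 < a
    · simp only [hf, if_pos h]; exact C.hw0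
    · have : a = 0 := by omega
      simp only [hf, if_neg h, if_pos (by omega : 0 ≤ a + m)]
      rw [show 0 - a = 0 by omega, hd0, this, C.hw0]
  have hfm : f (a + m + (k - b)) = v := by
    by_cases h : b < k
    · have h1 : ¬ (a + m + (k - b) < a) := by omega
      have h2 : ¬ (a + m + (k - b) ≤ a + m) := by omega
      simp only [hf, if_neg h1, if_neg h2]
      rw [show a + m + (k - b) - a - m + b = k by omega, C.hwk]
    · have hbk' : b = k := by omega
      have h1 : ¬ (a + m + (k - b) < a) := by omega
      have h2 : (a + m + (k - b) ≤ a + m) := by omega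
      simp only [hf, if_neg h1, if_pos h2]
      rw [show a + m + (k - b) - a = m by omega, hdm, hbk', C.hwk]
  have hchf : ∀ n < a + m + (k - b), G (f n) (f (n+1)) ∨ G (f (n+1)) (f n) := by
    intro n hn
    by_cases h1 : n + 1 < a
    · simp only [hf, if_pos (by omega : n < a), if_pos h1]
      exact C.hadj n (by omega)
    · by_cases h2 : n < a
      · have hna : n + 1 = a := by omega
        simp only [hf, if_pos h2, if_neg h1, if_pos (by omega : n + 1 ≤ a + m)]
        rw [show n + 1 - a = 0 by omega, hd0, ← hna]
        exact C.hadj n (by omega)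
      · by_cases h3 : n + 1 ≤ a + m
        · simp only [hf, if_neg h2, if_neg (by omega : ¬ n + 1 < a), if_pos h3,
            if_pos (by omega : n ≤ a + m)]
          rw [show n + 1 - a = n - a + 1 by omega]
          exact Or.inl (hch (n - a) (by omega))
        · by_cases h4 : n ≤ a + m
          · have hnm : n = a + m := by omega
            simp only [hf, if_neg h2, if_neg (by omega : ¬ n + 1 < a), if_neg h3, if_pos h4]
            rw [show n - a = m by omega, hdm, show n + 1 - a - m + b = b + 1 by omega]
            exact C.hadj b (by omega)
          · simp only [hf, if_neg h2, if_neg (by omega : ¬ n + 1 < a), if_neg h3, if_neg h4,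
              if_neg (by omega : ¬ n + 1 ≤ a + m)]
            rw [show n + 1 - a - m + b = (n - a - m + b) + 1 by omega]
            exact C.hadj _ (by omega)
  have hQf : ∀ n ≤ a + m + (k - b), f n ≠ x ∧ f n ≠ y := by
    intro n hn
    by_cases h1 : n < a
    · simp only [hf, if_pos h1]; exact C.hQ n (by omega)
    · by_cases h2 : n ≤ a + m
      · simp only [hf, if_neg h1, if_pos h2]; exact (hQd (n - a) (by omega)).1
      · simp only [hf, if_neg h1, if_neg h2]; exact C.hQ _ (by omega)
  have := C.hmin _ f hf0 hfm hchf hQf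
  omega

/-- helper: distinct path vertices -/
lemma wne {i j : ℕ} (hi : i ≤ k) (hj : j ≤ k) (hij : i ≠ j) : w i ≠ w j := by
  rcases Nat.lt_or_ge i j with h | h
  · exact C.hinj i hi j hj h
  · exact (C.hinj j hj i hi (by omega)).symm

/-- full x-wheel: pattern on the whole path (k even) -/
theorem xwheel (hke : k % 2 = 0)
    (hpat : ∀ m < k, (m % 2 = 0 → TBk G x w m) ∧ (m % 2 = 1 → G (w m) (w (m+1)))) :
    False := by
  have hk2 := C.k2
  set N := k / 2 + 1 with hN
  set p : ℕ → V × V := fun m => if m = 0 then (y, u) else (w (2*m - 1), w (2*m)) with hp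
  have hp0 : p 0 = (y, u) := by simp [hp]
  have hpm : ∀ m, 1 ≤ m → p m = (w (2*m - 1), w (2*m)) := by
    intro m hm; simp [hp, show ¬ m = 0 by omega]
  apply C.hwf
  refine hasDiwheel_of_fn x p N (by omega) ?_ ?_ ?_ ?_ ?_ ?_
  · intro m hm
    by_cases h0 : m = 0
    · subst h0; rw [hp0]; exact ⟨C.xny, fun h => C.unx h.symm⟩
    · rw [hpm m (by omega)]
      exact ⟨fun h => (C.hQ (2*m-1) (by omega)).1 h.symm,
             fun h => (C.hQ (2*m) (by omega)).1 h.symm⟩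
  · intro m hm m' hm' hne
    by_cases h0 : m = 0
    · subst h0
      rw [hp0, hpm m' (by omega)]
      exact fun h => (C.hQ (2*m'-1) (by omega)).2 h.symm
    · by_cases h0' : m' = 0
      · subst h0'
        rw [hp0, hpm m (by omega)]
        exact (C.hQ (2*m-1) (by omega)).2
      · rw [hpm m (by omega), hpm m' (by omega)]
        exact C.wne (by omega) (by omega) (by omega)
  · intro m hm m' hm' hne
    by_cases h0 : m = 0
    · subst h0
      rw [hp0, hpm m' (by omega), ← C.hw0]
      exact C.wne (by omega) (by omega) (by omega)
    · by_cases h0' : m' = 0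
      · subst h0'
        rw [hp0, hpm m (by omega), ← C.hw0]
        exact C.wne (by omega) (by omega) (by omega)
      · rw [hpm m (by omega), hpm m' (by omega)]
        exact C.wne (by omega) (by omega) (by omega)
  · intro m hm m' hm'
    by_cases h0 : m = 0
    · subst h0
      rw [hp0]
      by_cases h0' : m' = 0
      · subst h0'; rw [hp0]; exact fun h => C.uny h.symm
      · rw [hpm m' (by omega)]
        exact fun h => (C.hQ (2*m') (by omega)).2 h.symm
    · rw [hpm m (by omega)]
      by_cases h0' : m' = 0
      · subst h0'; rw [hp0, ← C.hw0]
        exact C.wne (by omega) (by omega) (by omega)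
      · rw [hpm m' (by omega)]
        exact C.wne (by omega) (by omega) (by omega)
  · intro m hm
    by_cases h0 : m = 0
    · subst h0; rw [hp0]; exact ⟨C.hyu, C.hux, C.hxy⟩
    · rw [hpm m (by omega)]
      refine ⟨?_, ?_, ?_⟩
      · have := (hpat (2*m-1) (by omega)).2 (by omega)
        rwa [show 2*m - 1 + 1 = 2*m by omega] at this
      · by_cases hmk : 2*m = k
        · rw [hmk, C.hwk]; exact C.hvx
        · exact ((hpat (2*m) (by omega)).1 (by omega)).2.1
      · have := ((hpat (2*m-2) (by omega)).1 (by omega)).2.2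
        rwa [show 2*m - 2 + 1 = 2*m - 1 by omega] at this
  · intro m hm
    by_cases hlast : m = N - 1
    · subst hlast
      have hNe : N - 1 + 1 = N := by omega
      rw [hNe, Nat.mod_self, hp0, hpm (N-1) (by omega)]
      have : 2 * (N - 1) = k := by omega
      rw [this, C.hwk]
      exact C.hyv
    · rw [Nat.mod_eq_of_lt (by omega), hpm (m+1) (by omega)]
      by_cases h0 : m = 0
      · subst h0
        rw [hp0, ← C.hw0]
        have := ((hpat 0 (by omega)).1 (by omega)).1
        rwa [show 2*(0+1) - 1 = 0 + 1 by omega]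
      · rw [hpm m (by omega)]
        have := ((hpat (2*m) (by omega)).1 (by omega)).1
        rwa [show 2*(m+1) - 1 = 2*m + 1 by omega]

/-- y-wheel at even position a: pattern below a, plus `G (w a) x` closes the rim -/
theorem ywheel {a : ℕ} (hae : a % 2 = 0) (ha2 : 2 ≤ a) (hak : a ≤ k)
    (hpat : ∀ m < a, (m % 2 = 0 → G (w m) (w (m+1))) ∧ (m % 2 = 1 → TBk G y w m))
    (hax : G (w a) x) : False := by
  set N := a / 2 + 1 with hN
  set p : ℕ → V × V := fun m => if m = 0 then (u, x) else (w (a - 2*m + 2), w (a - 2*m + 1))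
    with hp
  have hp0 : p 0 = (u, x) := by simp [hp]
  have hpm : ∀ m, 1 ≤ m → p m = (w (a - 2*m + 2), w (a - 2*m + 1)) := by
    intro m hm; simp [hp, show ¬ m = 0 by omega]
  apply C.hwf
  refine hasDiwheel_of_fn y p N (by omega) ?_ ?_ ?_ ?_ ?_ ?_
  · intro m hm
    by_cases h0 : m = 0
    · subst h0; rw [hp0]
      exact ⟨fun h => C.uny h.symm, fun h => C.xny h.symm⟩
    · rw [hpm m (by omega)]
      exact ⟨fun h => (C.hQ (a - 2*m + 2) (by omega)).2 h.symm,
             fun h => (C.hQ (a - 2*m + 1) (by omega)).2 h.symm⟩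
  · intro m hm m' hm' hne
    by_cases h0 : m = 0
    · subst h0
      rw [hp0, hpm m' (by omega), ← C.hw0]
      exact C.wne (by omega) (by omega) (by omega)
    · by_cases h0' : m' = 0
      · subst h0'
        rw [hp0, hpm m (by omega), ← C.hw0]
        exact C.wne (by omega) (by omega) (by omega)
      · rw [hpm m (by omega), hpm m' (by omega)]
        exact C.wne (by omega) (by omega) (by omega)
  · intro m hm m' hm' hne
    by_cases h0 : m = 0
    · subst h0
      rw [hp0, hpm m' (by omega)]
      exact fun h => (C.hQ (a - 2*m' + 1) (by omega)).1 h.symm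
    · by_cases h0' : m' = 0
      · subst h0'
        rw [hp0, hpm m (by omega)]
        exact (C.hQ (a - 2*m + 1) (by omega)).1
      · rw [hpm m (by omega), hpm m' (by omega)]
        exact C.wne (by omega) (by omega) (by omega)
  · intro m hm m' hm'
    by_cases h0 : m = 0
    · subst h0
      rw [hp0]
      by_cases h0' : m' = 0
      · subst h0'; rw [hp0]; exact C.unx
      · rw [hpm m' (by omega), ← C.hw0]
        exact C.wne (by omega) (by omega) (by omega)
    · rw [hpm m (by omega)]
      by_cases h0' : m' = 0
      · subst h0'; rw [hp0]
        exact (C.hQ (a - 2*m + 2) (by omega)).1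
      · rw [hpm m' (by omega)]
        exact C.wne (by omega) (by omega) (by omega)
  · intro m hm
    by_cases h0 : m = 0
    · subst h0; rw [hp0]; exact ⟨C.hux, C.hxy, C.hyu⟩
    · rw [hpm m (by omega)]
      have hc : a - 2*m + 1 < a := by omega
      have hco : (a - 2*m + 1) % 2 = 1 := by omega
      have ht := (hpat (a - 2*m + 1) hc).2 hco
      refine ⟨?_, ht.2.1, ?_⟩
      · have := ht.1
        rwa [show a - 2*m + 1 + 1 = a - 2*m + 2 by omega] at this
      · have := ht.2.2
        rwa [show a - 2*m + 1 + 1 = a - 2*m + 2 by omega] at this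
  · intro m hm
    by_cases hlast : m = N - 1
    · subst hlast
      have hNe : N - 1 + 1 = N := by omega
      rw [hNe, Nat.mod_self, hp0, hpm (N-1) (by omega)]
      have h1 : a - 2*(N-1) + 1 = 1 := by omega
      rw [h1, ← C.hw0]
      exact (hpat 0 (by omega)).1 (by omega)
    · rw [Nat.mod_eq_of_lt (by omega), hpm (m+1) (by omega)]
      by_cases h0 : m = 0
      · subst h0
        rw [hp0]
        have h1 : a - 2*(0+1) + 2 = a := by omega
        rw [h1]
        exact hax
      · rw [hpm m (by omega)]
        have h1 : a - 2*(m+1) + 2 = a - 2*m := by omega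
        rw [h1]
        have hfe : (a - 2*m) % 2 = 0 := by omega
        have := (hpat (a - 2*m) (by omega)).1 hfe
        rwa [show a - 2*m + 1 = a - 2*m + 1 from rfl] at this

theorem xchain : ∀ (fuel a : ℕ), k - a ≤ fuel → a % 2 = 1 → a ≤ k →
    (∀ m < a, (m % 2 = 0 → TBk G x w m) ∧ (m % 2 = 1 → G (w m) (w (m+1)))) → False := by
  intro fuel
  induction fuel with
  | zero =>
    intro a hfa hodd hak hpat
    -- a = k : digon x ↔ v
    have hak' : a = k := by omega
    subst hak'
    have hxa : G x (w a) := by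
      have := ((hpat (a-1) (by omega)).1 (by omega)).2.2
      rwa [show a - 1 + 1 = a by omega] at this
    rw [C.hwk] at hxa
    exact no_digon C.hirr C.hcyc hxa (C.hwk ▸ C.hvx)
  | succ f ih =>
    intro a hfa hodd hak hpat
    by_cases hak' : a = k
    · subst hak'
      have hxa : G x (w a) := by
        have := ((hpat (a-1) (by omega)).1 (by omega)).2.2
        rwa [show a - 1 + 1 = a by omega] at this
      rw [C.hwk] at hxa
      exact no_digon C.hirr C.hcyc hxa (C.hwk ▸ C.hvx)
    have hakk : a < k := by omega
    have hxa : G x (w a) := by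
      have := ((hpat (a-1) (by omega)).1 (by omega)).2.2
      rwa [show a - 1 + 1 = a by omega] at this
    classical
    by_cases hS : ∃ i, a ≤ i ∧ i < k ∧ ¬ CleanE G x y w i
    · set j := Nat.find hS with hj
      obtain ⟨hja, hjk, hjnc⟩ := Nat.find_spec hS
      rw [← hj] at hja hjk hjnc
      have hclean : ∀ i, a ≤ i → i < j → CleanE G x y w i := by
        intro i h1 h2
        by_contra hc
        exact Nat.find_min hS h2 ⟨h1, by omega, hc⟩
      rcases C.trich hjk hjnc with hXB | hYB
      · by_cases hja0 : j = a
        · rw [hja0] at hXB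
          exact no_digon C.hirr C.hcyc hxa hXB.2.1
        · by_cases hja1 : j = a + 1
          · by_cases hfwd : G (w a) (w (a+1))
            · refine ih (a+2) (by omega) (by omega) (by omega) ?_
              intro m hm
              rcases Nat.lt_or_ge m a with h | h
              · exact hpat m h
              · constructor
                · intro hme
                  have hma : m = a + 1 := by omega
                  rw [hma, ← hja1]
                  exact hXB
                · intro hmo
                  have hma : m = a := by omega
                  rw [hma]
                  exact hfwd
            · have hca := hclean a (le_refl a) (by omega)
              rcases hca with h | ⟨t, htx, hty, h1, h2⟩
              · exact hfwd h
              · rw [hja1] at hXB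
                refine quad C.hcyc ?_ ?_ ?_ ?_ ?_ ?_ hxa h1 h2 hXB.2.1
                · exact fun h => (C.hQ a (by omega)).1 h.symm
                · exact fun h => htx h.symm
                · exact fun h => (C.hQ (a+1) (by omega)).1 h.symm
                · exact fun h => C.hirr _ (h ▸ h1)
                · exact C.wne (by omega) (by omega) (by omega)
                · exact C.pnw (by omega) h1 h2 (a+1) (by omega)
          · -- j ≥ a + 2
            obtain ⟨m, d, hd0, hdm, hch, hmge, hdinj, hdav⟩ :=
              C.dpath (show a ≤ j from hja) (by omega) hclean
            refine glue1 C.hcyc x m d (by omega) hch hdinj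
              (fun i hi => (hdav i hi).1) ?_ ?_
            · rw [hd0]; exact hxa
            · rw [hdm]; exact hXB.2.1
      · -- YB j : glue3
        obtain ⟨m, d, hd0, hdm, hch, hmge, hdinj, hdav⟩ :=
          C.dpath (show a ≤ j from hja) (by omega) hclean
        refine glue3 C.hcyc x y u m d hch hdinj
          (fun i hi => (hdav i hi).1) (fun i hi => (hdav i hi).2.1)
          (fun i hi => (hdav i hi).2.2 (by omega))
          C.xny (fun h => C.unx h.symm) (fun h => C.uny h.symm) ?_ ?_ C.hyu C.hux
        · rw [hd0]; exact hxa
        · rw [hdm]; exact hYB.2.1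
    · -- no blocked edge in [a, k)
      push_neg at hS
      have hclean : ∀ i, a ≤ i → i < k → CleanE G x y w i := hS
      by_cases hk1 : k = a + 1
      · by_cases hfwd : G (w a) (w (a+1))
        · refine C.xwheel (by omega) ?_
          intro m hm
          rcases Nat.lt_or_ge m a with h | h
          · exact hpat m h
          · have hma : m = a := by omega
            subst hma
            exact ⟨fun he => by omega, fun _ => hfwd⟩
        · have hca := hclean a (le_refl a) (by omega)
          rcases hca with h | ⟨t, htx, hty, h1, h2⟩
          · exact hfwd h
          · have hv1 : w (a+1) = v := by rw [← hk1, C.hwk]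
            refine quad C.hcyc ?_ ?_ ?_ ?_ ?_ ?_ hxa h1 (hv1 ▸ h2) C.hvx
            · exact fun h => (C.hQ a (by omega)).1 h.symm
            · exact fun h => htx h.symm
            · exact fun h => C.vnx h.symm
            · exact fun h => C.hirr _ (h ▸ h1)
            · rw [← hv1]; exact C.wne (by omega) (by omega) (by omega)
            · rw [← hv1]; exact C.pnw (by omega) h1 h2 (a+1) (by omega)
      · -- k ≥ a + 2 : glue1 via dpath a k
        obtain ⟨m, d, hd0, hdm, hch, hmge, hdinj, hdav⟩ :=
          C.dpath (show a ≤ k by omega) (le_refl k) hclean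
        refine glue1 C.hcyc x m d (by omega) hch hdinj
          (fun i hi => (hdav i hi).1) ?_ ?_
        · rw [hd0]; exact hxa
        · rw [hdm, C.hwk]; exact C.hvx

theorem ychain : ∀ (fuel a : ℕ), k - a ≤ fuel → a % 2 = 0 → 2 ≤ a → a ≤ k →
    (∀ m < a, (m % 2 = 0 → G (w m) (w (m+1))) ∧ (m % 2 = 1 → TBk G y w m)) → False := by
  intro fuel
  induction fuel with
  | zero =>
    intro a hfa hae ha2 hak hpat
    have hak' : a = k := by omega
    subst hak'
    exact C.ywheel hae ha2 (le_refl _) hpat (C.hwk ▸ C.hvx)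
  | succ f ih =>
    intro a hfa hae ha2 hak hpat
    by_cases hak' : a = k
    · subst hak'
      exact C.ywheel hae ha2 (le_refl _) hpat (C.hwk ▸ C.hvx)
    have hakk : a < k := by omega
    have hya : G y (w a) := by
      have := ((hpat (a-1) (by omega)).2 (by omega)).2.2
      rwa [show a - 1 + 1 = a by omega] at this
    classical
    by_cases hS : ∃ i, a ≤ i ∧ i < k ∧ ¬ CleanE G x y w i
    · set j := Nat.find hS with hj
      obtain ⟨hja, hjk, hjnc⟩ := Nat.find_spec hS
      rw [← hj] at hja hjk hjnc
      have hclean : ∀ i, a ≤ i → i < j → CleanE G x y w i := by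
        intro i h1 h2
        by_contra hc
        exact Nat.find_min hS h2 ⟨h1, by omega, hc⟩
      rcases C.trich hjk hjnc with hXB | hYB
      · by_cases hja0 : j = a
        · rw [hja0] at hXB
          exact C.ywheel hae ha2 (by omega) hpat hXB.2.1
        · -- j > a : glue2 y x
          obtain ⟨m, d, hd0, hdm, hch, hmge, hdinj, hdav⟩ :=
            C.dpath (show a ≤ j from hja) (by omega) hclean
          refine glue2 C.hcyc y x m d (by omega) hch hdinj
            (fun i hi => (hdav i hi).2.1) (fun i hi => (hdav i hi).1)
            (fun h => C.xny h.symm) ?_ ?_ C.hxy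
          · rw [hd0]; exact hya
          · rw [hdm]; exact hXB.2.1
      · by_cases hja0 : j = a
        · rw [hja0] at hYB
          exact no_digon C.hirr C.hcyc hya hYB.2.1
        · by_cases hja1 : j = a + 1
          · by_cases hfwd : G (w a) (w (a+1))
            · refine ih (a+2) (by omega) (by omega) (by omega) (by omega) ?_
              intro m hm
              rcases Nat.lt_or_ge m a with h | h
              · exact hpat m h
              · constructor
                · intro hme
                  have hma : m = a := by omega
                  rw [hma]
                  exact hfwd
                · intro hmo
                  have hma : m = a + 1 := by omega
                  rw [hma, ← hja1]
                  exact hYB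
            · have hca := hclean a (le_refl a) (by omega)
              rcases hca with h | ⟨t, htx, hty, h1, h2⟩
              · exact hfwd h
              · rw [hja1] at hYB
                refine quad C.hcyc ?_ ?_ ?_ ?_ ?_ ?_ hya h1 h2 hYB.2.1
                · exact fun h => (C.hQ a (by omega)).2 h.symm
                · exact fun h => hty h.symm
                · exact fun h => (C.hQ (a+1) (by omega)).2 h.symm
                · exact fun h => C.hirr _ (h ▸ h1)
                · exact C.wne (by omega) (by omega) (by omega)
                · exact C.pnw (by omega) h1 h2 (a+1) (by omega)
          · -- j ≥ a + 2 : glue1 y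
            obtain ⟨m, d, hd0, hdm, hch, hmge, hdinj, hdav⟩ :=
              C.dpath (show a ≤ j from hja) (by omega) hclean
            refine glue1 C.hcyc y m d (by omega) hch hdinj
              (fun i hi => (hdav i hi).2.1) ?_ ?_
            · rw [hd0]; exact hya
            · rw [hdm]; exact hYB.2.1
    · push_neg at hS
      have hclean : ∀ i, a ≤ i → i < k → CleanE G x y w i := hS
      obtain ⟨m, d, hd0, hdm, hch, hmge, hdinj, hdav⟩ :=
        C.dpath (show a ≤ k by omega) (le_refl k) hclean
      refine glue2 C.hcyc y x m d (by omega) hch hdinj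
        (fun i hi => (hdav i hi).2.1) (fun i hi => (hdav i hi).1)
        (fun h => C.xny h.symm) ?_ ?_ C.hxy
      · rw [hd0]; exact hya
      · rw [hdm, C.hwk]; exact C.hvx

theorem main : False := by
  classical
  by_cases hS : ∃ i, i < k ∧ ¬ CleanE G x y w i
  · set j := Nat.find hS with hj
    obtain ⟨hjk, hjnc⟩ := Nat.find_spec hS
    rw [← hj] at hjk hjnc
    have hclean : ∀ i, i < j → CleanE G x y w i := by
      intro i h2
      by_contra hc
      exact Nat.find_min hS h2 ⟨by omega, hc⟩
    rcases C.trich hjk hjnc with hXB | hYB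
    · by_cases hj0 : j = 0
      · rw [hj0] at hXB
        refine C.xchain k 1 (by omega) (by omega) (by have := C.k2; omega) ?_
        intro m hm
        have hm0 : m = 0 := by omega
        subst hm0
        exact ⟨fun _ => hXB, fun h => by omega⟩
      · obtain ⟨m, d, hd0, hdm, hch, hmge, hdinj, hdav⟩ :=
          C.dpath (show 0 ≤ j by omega) (by omega) (fun i _ h2 => hclean i h2)
        refine glue2 C.hcyc y x m d (by omega) hch hdinj
          (fun i hi => (hdav i hi).2.1) (fun i hi => (hdav i hi).1)
          (fun h => C.xny h.symm) ?_ ?_ C.hxy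
        · rw [hd0, C.hw0]; exact C.hyu
        · rw [hdm]; exact hXB.2.1
    · by_cases hj0 : j = 0
      · rw [hj0] at hYB
        have := hYB.2.1
        rw [C.hw0] at this
        exact no_digon C.hirr C.hcyc C.hyu this
      · by_cases hj1 : j = 1
        · by_cases hfwd : G (w 0) (w 1)
          · refine C.ychain k 2 (by have := C.k2; omega) (by omega)
              (by omega) (C.k2) ?_
            intro m hm
            constructor
            · intro hme
              have hm0 : m = 0 := by omega
              rw [hm0]
              exact hfwd
            · intro hmo
              have hm1 : m = 1 := by omega
              rw [hm1, ← hj1]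
              exact hYB
          · have hca := hclean 0 (by omega)
            rcases hca with h | ⟨t, htx, hty, h1, h2⟩
            · exact hfwd h
            · rw [hj1] at hYB
              rw [C.hw0] at h1
              refine quad C.hcyc ?_ ?_ ?_ ?_ ?_ ?_ C.hyu h1 h2 hYB.2.1
              · exact fun h => C.uny h.symm
              · exact fun h => hty h.symm
              · exact fun h => (C.hQ 1 (by have := C.k2; omega)).2 h.symm
              · exact fun h => C.hirr _ (h ▸ h1)
              · rw [← C.hw0]; exact C.wne (by omega) (by have := C.k2; omega) (by omega)
              · have := C.pnw (by have := C.k2; omega) (C.hw0 ▸ h1) h2 1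
                  (by have := C.k2; omega)
                exact this
        · -- j ≥ 2 : glue1 y
          obtain ⟨m, d, hd0, hdm, hch, hmge, hdinj, hdav⟩ :=
            C.dpath (show 0 ≤ j by omega) (by omega) (fun i _ h2 => hclean i h2)
          refine glue1 C.hcyc y m d (by omega) hch hdinj
            (fun i hi => (hdav i hi).2.1) ?_ ?_
          · rw [hd0, C.hw0]; exact C.hyu
          · rw [hdm]; exact hYB.2.1
  · push_neg at hS
    have hclean : ∀ i, (0:ℕ) ≤ i → i < k → CleanE G x y w i := fun i _ h2 => hS i h2
    obtain ⟨m, d, hd0, hdm, hch, hmge, hdinj, hdav⟩ :=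
      C.dpath (show (0:ℕ) ≤ k by omega) (le_refl k) hclean
    refine glue2 C.hcyc y x m d (by have := C.k2; omega) hch hdinj
      (fun i hi => (hdav i hi).2.1) (fun i hi => (hdav i hi).1)
      (fun h => C.xny h.symm) ?_ ?_ C.hxy
    · rw [hd0, C.hw0]; exact C.hyu
    · rw [hdm, C.hwk]; exact C.hvx

end Ctx
end Aux

end Cyclic3


open Cyclic3 in
/-- Let `G` be an unbreakable, 3-cyclic, diwheel-free digraph, `xy` an edge, and
`u ≠ v` two vertices each making a tricycle with `xy`. Then there is no path of
`G⁻ ∖ {x,y}` between `u` and `v`. -/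
theorem stmt_8 {V : Type*} [Fintype V] (G : V → V → Prop)
    (hirr : Irreflexive G) (hunb : Unbreakable G) (hcyc : IsLCyclic G 3)
    (hwf : ¬ HasDiwheel G) (x y u v : V) (hxy : G x y)
    (hu : G y u ∧ G u x) (hv : G y v ∧ G v x) (huv : u ≠ v) :
    ¬ ∃ l : List V, UWalk G u v l ∧ ∀ z ∈ l, z ≠ x ∧ z ≠ y := by
  rintro ⟨l, ⟨hh, hl, hc⟩, havoid⟩
  obtain ⟨k, w, hw0, hwk, hadj, hQ, hinj, hmin⟩ :=
    min_walk_fn (fun a b => G a b ∨ G b a) (fun z => z ≠ x ∧ z ≠ y) u v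
      ⟨l, hh, hl, hc, fun z hz => havoid z hz⟩
  exact Ctx.main
    (Ctx.mk hirr hunb.1 hcyc hwf hxy hu.1 hu.2 hv.1 hv.2 huv hw0 hwk hadj hQ hinj hmin)
end

section
/- Let G be an unbreakable, 3-cyclic, diwheel-free digraph, let T be a tricycle of G, and let B be a component of G⁻ ∖ V(T). Then exactly two vertices of T have a neighbour in B, say t₁, t₂, and there is a unique vertex b ∈ B such that {t₁, t₂, b} is the vertex set of a tricycle. -/
namespace Cyclic3

variable {V : Type*}

attribute [local simp] List.Chain'

section Lists
variable {α : Type*} {R : α → α → Prop}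

lemma zipAux : ∀ (as : List α) (a w : α), List.Chain' R (a::as) →
    R ((a::as).getLast (List.cons_ne_nil a as)) w →
    ∀ p ∈ (a::as).zip (as++[w]), R p.1 p.2 := by
  intro as
  induction as with
  | nil =>
    intro a w _ hw p hp
    simp only [List.zip, List.zipWith, List.nil_append, List.mem_singleton] at hp
    subst hp
    simpa using hw
  | cons b bs ih =>
    intro a w hc hw p hp
    rw [List.cons_append, List.zip_cons_cons, List.mem_cons] at hp
    rcases hp with rfl | hp
    · exact hc.rel_head
    · exact ih b w hc.tail (by simpa [List.getLast_cons] using hw) p hp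

lemma zipRotate (l : List α) (hl : l ≠ []) (hc : List.Chain' R l)
    (hw : R (l.getLast hl) (l.head hl)) :
    ∀ p ∈ l.zip (l.rotate 1), R p.1 p.2 := by
  match l with
  | a :: as =>
    have : (a::as).rotate 1 = as ++ [a] := by
      rw [List.rotate_cons_succ, List.rotate_zero]
    rw [this]
    exact zipAux as a a hc (by simpa using hw)

lemma chain'_append_right {l₁ l₂ : List α} (h : List.Chain' R (l₁ ++ l₂)) :
    List.Chain' R l₂ := ((List.isChain_append).1 h).2.1

lemma chain_dedup : ∀ (l : List α) (a : α), List.Chain' R (a::l) →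
    ∃ m, List.Chain' R (a::m) ∧ (a::m).Nodup ∧ (a::m).getLast? = (a::l).getLast? ∧
      ∀ x ∈ m, x ∈ l := by
  intro l
  induction l with
  | nil => intro a _; exact ⟨[], by simp, by simp, rfl, by simp⟩
  | cons b bs ih =>
    intro a hc
    obtain ⟨m', hc', hnd', hlast', hmem'⟩ := ih b hc.tail
    by_cases ha : a ∈ b :: m'
    · obtain ⟨p, q, hpq⟩ := List.append_of_mem ha
      refine ⟨q, ?_, ?_, ?_, ?_⟩
      · have := hc'
        rw [hpq] at this
        exact chain'_append_right this
      · have := hnd'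
        rw [hpq] at this
        exact this.sublist (List.suffix_append p (a::q)).sublist
      · rw [← List.getLast?_append_cons p a q, ← hpq, hlast', List.getLast?_cons_cons]
      · intro x hx
        have : x ∈ b :: m' := by rw [hpq]; exact List.mem_append_right _ (List.mem_cons_of_mem a hx)
        rcases this with _ | h
        · exact List.mem_cons_self
        · exact List.mem_cons_of_mem b (hmem' x (by assumption))
    · refine ⟨b :: m', ?_, ?_, ?_, ?_⟩
      · exact List.isChain_cons_cons.2 ⟨hc.rel_head, hc'⟩
      · exact List.nodup_cons.2 ⟨ha, hnd'⟩
      · rw [List.getLast?_cons_cons, hlast', List.getLast?_cons_cons]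
      · intro x hx
        rcases hx with _ | h
        · exact List.mem_cons_self
        · exact List.mem_cons_of_mem b (hmem' x (by assumption))

end Lists


section Lists
variable {α : Type*} {R : α → α → Prop}

lemma stripLast : ∀ (l : List α) (u v : α), List.Chain' R (u::l) →
    (u::l).getLast? = some v → u ≠ v →
    ∃ m, List.Chain' R (u::m) ∧ R ((u::m).getLast (List.cons_ne_nil u m)) v ∧
      v ∉ (u::m) ∧ ∀ x ∈ m, x ∈ l := by
  intro l
  induction l with
  | nil =>
    intro u v _ hl huv
    simp at hl; exact absurd hl huv
  | cons b bs ih =>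
    intro u v hc hl huv
    by_cases hbv : b = v
    · subst hbv
      exact ⟨[], by simp, by simpa using hc.rel_head, by simpa using Ne.symm huv, by simp⟩
    · obtain ⟨m, h1, h2, h3, h4⟩ := ih b v hc.tail (by rw [← hl, List.getLast?_cons_cons]) hbv
      refine ⟨b::m, List.isChain_cons_cons.2 ⟨hc.rel_head, h1⟩, ?_, ?_, ?_⟩
      · simpa [List.getLast_cons] using h2
      · intro hv
        rcases hv with _ | hv
        · exact huv rfl
        · exact h3 (by assumption)
      · intro x hx
        rcases hx with _ | hx
        · exact List.mem_cons_self
        · exact List.mem_cons_of_mem b (h4 x (by assumption))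

end Lists

structure Pack (V : Type*) where
  G : V → V → Prop
  B : Set V
  t : ZMod 3 → V
  hirr : ∀ x, ¬ G x x
  hcyc : IsLCyclic G 3
  hwf : ¬ HasDiwheel G
  conn : ∀ u v : V, ∃ l : List V, List.Chain' G (u::l) ∧ (u::l).getLast? = some v
  tE : ∀ i, G (t i) (t (i+1))
  tI : Function.Injective t
  hBne : B.Nonempty
  hBt : ∀ i, t i ∉ B
  hclose : ∀ x ∈ B, ∀ y, (G x y ∨ G y x) → (∀ i, y ≠ t i) → y ∈ B

namespace Pack
variable {V : Type*} (S : Pack V)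

def stepB : V → V → Prop := fun a b => S.G a b ∧ a ∈ S.B ∧ b ∈ S.B
def RB (u v : V) : Prop := Relation.ReflTransGen S.stepB u v
def mu (u v : V) : Prop := S.RB u v ∧ S.RB v u
/-- `z` is a jewel of the `i`-th edge of `T`. -/
def jw (i : ZMod 3) (z : V) : Prop := z ∈ S.B ∧ S.G (S.t (i+1)) z ∧ S.G z (S.t i)
def Io (u : V) (i : ZMod 3) : Prop := ∃ e, S.G (S.t i) e ∧ e ∈ S.B ∧ S.RB e u
def Oo (u : V) (j : ZMod 3) : Prop := ∃ c, S.G c (S.t j) ∧ c ∈ S.B ∧ S.RB u c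
def Ps (u : V) (i : ZMod 3) : Prop := S.Io u i ∨ S.Oo u i

lemma dic (l : List V) (hne : l ≠ []) (hch : l.Chain' S.G) (hnd : l.Nodup)
    (hwrap : S.G (l.getLast hne) (l.head hne)) : l.length = 3 :=
  S.hcyc l ⟨hne, hnd, zipRotate l hne hch hwrap⟩

lemma no2 {x y : V} (h1 : S.G x y) (h2 : S.G y x) : False := by
  have hxy : x ≠ y := by rintro rfl; exact S.hirr x h1
  have := S.dic [x, y] (by simp) (by simp [h1]) (by simp [hxy]) (by simpa using h2)
  simp at this

lemma tne {i j : ZMod 3} (h : i ≠ j) : S.t i ≠ S.t j := fun e => h (S.tI e)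

lemma rb_trans {a b c : V} (h1 : S.RB a b) (h2 : S.RB b c) : S.RB a c := h1.trans h2
lemma rb_refl (a : V) : S.RB a a := Relation.ReflTransGen.refl
lemma rb_single {a b : V} (h : S.G a b) (ha : a ∈ S.B) (hb : b ∈ S.B) : S.RB a b :=
  Relation.ReflTransGen.single ⟨h, ha, hb⟩

lemma rbList {u v : V} (h : S.RB u v) :
    ∃ l, List.Chain' S.stepB (u::l) ∧ (u::l).getLast? = some v := by
  induction h using Relation.ReflTransGen.head_induction_on with
  | refl => exact ⟨[], by simp, by simp⟩
  | head hstep _ ih =>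
    obtain ⟨l, h1, h2⟩ := ih
    exact ⟨_::l, List.isChain_cons_cons.2 ⟨hstep, h1⟩, by rw [List.getLast?_cons_cons]; exact h2⟩

lemma chainB_mem : ∀ (l : List V) (u : V), List.Chain' S.stepB (u::l) → u ∈ S.B →
    ∀ x ∈ (u::l), x ∈ S.B := by
  intro l
  induction l with
  | nil => intro u _ hu x hx; simp at hx; subst hx; exact hu
  | cons b bs ih =>
    intro u hc hu x hx
    rcases hx with _ | hx
    · exact hu
    · exact ih b hc.tail hc.rel_head.2.2 x (by assumption)

/-- a nodup directed path inside `B` realizing reachability. -/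
lemma rbPath {u v : V} (h : S.RB u v) (hu : u ∈ S.B) :
    ∃ m, List.Chain' S.G (u::m) ∧ (u::m).Nodup ∧ (u::m).getLast? = some v ∧
      ∀ x ∈ (u::m), x ∈ S.B := by
  obtain ⟨l, hc, hl⟩ := S.rbList h
  obtain ⟨m, hc', hnd', hl', hmem'⟩ := chain_dedup l u hc
  refine ⟨m, hc'.imp (fun a b hab => hab.1), hnd', by rw [hl']; exact hl, ?_⟩
  intro x hx
  exact S.chainB_mem l u hc hu x (by rcases hx with _ | hx; · exact List.mem_cons_self
                                     · exact List.mem_cons_of_mem u (hmem' x (by assumption)))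

lemma z3cases : ∀ i j : ZMod 3, i = j ∨ i = j + 1 ∨ j = i + 1 := by decide
lemma z3succ_ne : ∀ i : ZMod 3, i + 1 ≠ i := by decide
lemma z3all : ∀ i j : ZMod 3, j = i ∨ j = i + 1 ∨ j = i + 2 := by decide

lemma tB_ne {i : ZMod 3} {x : V} (hx : x ∈ S.B) : S.t i ≠ x := fun e => S.hBt i (e ▸ hx)

/-- THE master lemma. -/
lemma master {i j : ZMod 3} {b c : V} (hb : b ∈ S.B) (hc : c ∈ S.B)
    (h1 : S.G (S.t i) b) (h2 : S.G c (S.t j)) (hr : S.RB b c) :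
    (i = j ∧ S.G b c ∧ b ≠ c) ∨ (b = c ∧ i = j + 1) := by
  obtain ⟨m, hch, hnd, hlast, hmem⟩ := S.rbPath hr hb
  rcases z3cases i j with hij | hij | hij
  · subst hij
    left
    have hti : S.t i ∉ (b::m) := fun hmem' => S.hBt i (hmem _ hmem')
    have hlen := S.dic (S.t i :: b :: m) (by simp)
      (List.isChain_cons_cons.2 ⟨h1, hch⟩) (List.nodup_cons.2 ⟨hti, hnd⟩)
      (by
        have hgl : (S.t i :: b :: m).getLast (by simp) = (b::m).getLast (by simp) :=
          List.getLast_cons (by simp)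
        rw [hgl]
        have : (b::m).getLast (by simp) = c := by
          have := List.getLast?_eq_getLast (l := b::m) (by simp)
          rw [this] at hlast; exact Option.some_injective _ hlast
        rw [this]; exact h2)
    simp only [List.length_cons] at hlen
    have hm1 : m.length = 1 := by omega
    obtain ⟨x, rfl⟩ : ∃ x, m = [x] := by
      cases m with
      | nil => simp at hm1
      | cons y ys => cases ys with
        | nil => exact ⟨y, rfl⟩
        | cons z zs => simp at hm1
    have hxc : x = c := by simpa using hlast
    subst hxc
    refine ⟨rfl, (List.isChain_cons_cons.1 hch).1, ?_⟩
    intro hbc; subst hbc; simp at hnd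
  · -- i = j + 1 : prove b = c
    by_cases hbc : b = c
    · exact Or.inr ⟨hbc, hij⟩
    · exfalso
      have htj_ne : S.t j ∉ (b::m) := fun hmem' => S.hBt j (hmem _ hmem')
      have hti_ne : S.t i ∉ (b::m) := fun hmem' => S.hBt i (hmem _ hmem')
      have htij : S.t i ≠ S.t j := S.tne (by rw [hij]; exact z3succ_ne j)
      have hlastc : (b::m).getLast (by simp) = c := by
        have := List.getLast?_eq_getLast (l := b::m) (by simp)
        rw [this] at hlast; exact Option.some_injective _ hlast
      have hlen := S.dic ((S.t i :: b :: m) ++ [S.t j]) (by simp)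
        (by
          rw [List.Chain', List.isChain_append]
          refine ⟨List.isChain_cons_cons.2 ⟨h1, hch⟩, by simp, ?_⟩
          intro x hx y hy
          simp at hy; subst hy
          have hx' : c = x := by
            have hgl : (S.t i :: b :: m).getLast? = (b::m).getLast? := by
              rw [List.getLast?_cons_cons]
            rw [hgl, hlast] at hx; simpa using hx
          rw [← hx']; exact h2)
        (by
          rw [List.nodup_append]
          refine ⟨List.nodup_cons.2 ⟨hti_ne, hnd⟩, by simp, ?_⟩
          intro x hx y hx2 hxy; subst hxy
          have hx2' : x = S.t j := by simpa using hx2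
          rcases hx with _ | hx
          · exact htij (by rw [← hx2'])
          · exact htj_ne (hx2' ▸ (by assumption)))
        (by
          have hgl : ((S.t i :: b :: m) ++ [S.t j]).getLast (by simp) = S.t j := by
            simp [List.getLast_append]
          rw [hgl]
          have hhd : ((S.t i :: b :: m) ++ [S.t j]).head (by simp) = S.t i := by simp
          rw [hhd, hij]
          exact S.tE j)
      simp only [List.length_append, List.length_cons, List.length_singleton] at hlen
      -- length = m.length + 3 = 3 → m = [] → b = c
      have : m.length = 0 := by omega
      have : m = [] := List.length_eq_zero_iff.1 this
      subst this
      simp at hlastc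
      exact hbc hlastc
  · -- j = i + 1 : impossible
    exfalso
    have htj_ne : S.t j ∉ (b::m) := fun hmem' => S.hBt j (hmem _ hmem')
    have hti_ne : S.t i ∉ (b::m) := fun hmem' => S.hBt i (hmem _ hmem')
    have htj1_ne : S.t (j+1) ∉ (b::m) := fun hmem' => S.hBt (j+1) (hmem _ hmem')
    have hij' : i ≠ j := by rw [hij]; exact fun e => z3succ_ne i e.symm
    have z3ne2 : ∀ k : ZMod 3, k ≠ k + 1 + 1 := by decide
    have hij1 : i ≠ j + 1 := by rw [hij]; exact z3ne2 i
    have hjj1 : j ≠ j + 1 := fun e => z3succ_ne j e.symm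
    have hlastc : (b::m).getLast? = some c := hlast
    have hlen := S.dic ((S.t i :: b :: m) ++ [S.t j, S.t (j+1)]) (by simp)
      (by
        rw [List.Chain', List.isChain_append]
        refine ⟨List.isChain_cons_cons.2 ⟨h1, hch⟩, by simpa using S.tE j, ?_⟩
        intro x hx y hy
        simp at hy; subst hy
        have hx' : c = x := by
          rw [List.getLast?_cons_cons, hlastc] at hx; simpa using hx
        rw [← hx']; exact h2)
      (by
        rw [List.nodup_append]
        refine ⟨List.nodup_cons.2 ⟨hti_ne, hnd⟩, by simpa using S.tne hjj1, ?_⟩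
        intro x hx y hx2 hxy; subst hxy
        have hx2' : x = S.t j ∨ x = S.t (j+1) := by simpa using hx2
        rcases hx2' with hx2' | hx2'
        · rcases hx with _ | hx
          · exact hij' (S.tI hx2')
          · exact htj_ne (hx2' ▸ (by assumption))
        · rcases hx with _ | hx
          · exact hij1 (S.tI hx2')
          · exact htj1_ne (hx2' ▸ (by assumption)))
      (by
        have hgl : ((S.t i :: b :: m) ++ [S.t j, S.t (j+1)]).getLast (by simp) = S.t (j+1) := by
          rw [List.getLast_append]; simp
        rw [hgl]
        have hhd : ((S.t i :: b :: m) ++ [S.t j, S.t (j+1)]).head (by simp) = S.t i := by simp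
        rw [hhd]
        have h2i : j + 1 + 1 = i := by
          rw [hij]
          have : (3 : ZMod 3) = 0 := by decide
          calc i + 1 + 1 + 1 = i + 3 := by ring
          _ = i := by rw [this, add_zero]
        have := S.tE (j+1)
        rwa [h2i] at this)
    simp only [List.length_append, List.length_cons] at hlen
    simp at hlen

/-- every edge lies on a tricycle. -/
lemma tri {x y : V} (h : S.G x y) : ∃ z, S.G y z ∧ S.G z x := by
  obtain ⟨l, hc, hl⟩ := S.conn y x
  have hxy : y ≠ x := by intro e; subst e; exact S.hirr _ h
  obtain ⟨m, hc1, hw1, hnx1, _⟩ := stripLast l y x hc hl hxy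
  obtain ⟨m', hc2, hnd2, hl2, hsub2⟩ := chain_dedup m y hc1
  have hw2 : S.G ((y::m').getLast (by simp)) x := by
    have e1 := List.getLast?_eq_getLast (l := y::m') (by simp)
    have e2 := List.getLast?_eq_getLast (l := y::m) (by simp)
    rw [e1, e2] at hl2
    rw [Option.some_injective _ hl2]
    exact hw1
  have hnx2 : x ∉ (y::m') := by
    intro hx
    apply hnx1
    rcases List.mem_cons.1 hx with h' | h'
    · exact h' ▸ List.mem_cons_self
    · exact List.mem_cons_of_mem y (hsub2 x h')
  have hlen := S.dic (x :: y :: m') (by simp)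
    (List.isChain_cons_cons.2 ⟨h, hc2⟩)
    (List.nodup_cons.2 ⟨hnx2, hnd2⟩)
    (by
      have hgl : (x :: y :: m').getLast (by simp) = (y::m').getLast (by simp) :=
        List.getLast_cons (by simp)
      rw [hgl]; exact hw2)
  simp only [List.length_cons] at hlen
  obtain ⟨z, rfl⟩ : ∃ z, m' = [z] := by
    cases m' with
    | nil => simp at hlen
    | cons a as => cases as with
      | nil => exact ⟨a, rfl⟩
      | cons b bs => simp at hlen
  exact ⟨z, hc2.rel_head, by simpa using hw2⟩

lemma firstExit {D : V → V → Prop}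
    (hcl : ∀ x ∈ S.B, ∀ y, (D x y ∨ D y x) → y ∈ S.B ∨ ∃ i, y = S.t i) :
    ∀ (l : List V) (u : V), u ∈ S.B → List.Chain' D (u::l) →
    ∀ z, (u::l).getLast? = some z → z ∉ S.B →
    ∃ h w, h ∈ S.B ∧ (∃ i, w = S.t i) ∧ D h w ∧
      Relation.ReflTransGen (fun a b => D a b ∧ a ∈ S.B ∧ b ∈ S.B) u h := by
  intro l
  induction l with
  | nil =>
    intro u hu _ z hz hznB
    simp at hz; subst hz; exact absurd hu hznB
  | cons b bs ih =>
    intro u hu hc z hz hznB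
    rcases hcl u hu b (Or.inl hc.rel_head) with hb | hb
    · obtain ⟨h', w, h1, h2, h3, h4⟩ := ih b hb hc.tail z (by rwa [List.getLast?_cons_cons] at hz) hznB
      exact ⟨h', w, h1, h2, h3, Relation.ReflTransGen.head ⟨hc.rel_head, hu, hb⟩ h4⟩
    · exact ⟨u, b, hu, hb, hc.rel_head, Relation.ReflTransGen.refl⟩

lemma exitEx {u : V} (hu : u ∈ S.B) : ∃ j h, h ∈ S.B ∧ S.G h (S.t j) ∧ S.RB u h := by
  obtain ⟨l, hc, hl⟩ := S.conn u (S.t 0)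
  have hcl : ∀ x ∈ S.B, ∀ y, (S.G x y ∨ S.G y x) → y ∈ S.B ∨ ∃ i, y = S.t i := by
    intro x hx y hxy
    by_cases h : ∃ i, y = S.t i
    · exact Or.inr h
    · push_neg at h
      exact Or.inl (S.hclose x hx y hxy h)
  obtain ⟨h', w, h1, ⟨i, rfl⟩, h3, h4⟩ := S.firstExit hcl l u hu hc (S.t 0) hl (S.hBt 0)
  exact ⟨i, h', h1, h3, h4⟩

lemma entryEx {u : V} (hu : u ∈ S.B) : ∃ i e, e ∈ S.B ∧ S.G (S.t i) e ∧ S.RB e u := by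
  obtain ⟨l, hc, hl⟩ := S.conn (S.t 0) u
  have hrev : List.Chain' (flip S.G) ((S.t 0 :: l).reverse) := List.isChain_reverse.2 hc
  have hne : (S.t 0 :: l).reverse ≠ [] := by simp
  obtain ⟨u', L', hL⟩ := List.exists_cons_of_ne_nil hne
  have hu' : u' = u := by
    have h1 : (S.t 0 :: l).reverse.head? = some u' := by rw [hL]; rfl
    rw [List.head?_reverse, hl] at h1
    exact (Option.some_injective _ h1).symm
  rw [hu'] at hL
  rw [hL] at hrev
  have hlast : (u :: L').getLast? = some (S.t 0) := by
    rw [← hL, List.getLast?_reverse]; rfl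
  have hcl : ∀ x ∈ S.B, ∀ y, (flip S.G x y ∨ flip S.G y x) → y ∈ S.B ∨ ∃ i, y = S.t i := by
    intro x hx y hxy
    by_cases h : ∃ i, y = S.t i
    · exact Or.inr h
    · push_neg at h
      exact Or.inl (S.hclose x hx y (Or.symm hxy) h)
  obtain ⟨h', w, h1, ⟨i, rfl⟩, h3, h4⟩ := S.firstExit hcl L' u hu hrev (S.t 0) hlast (S.hBt 0)
  refine ⟨i, h', h1, h3, ?_⟩
  have : Relation.ReflTransGen (Function.swap S.stepB) u h' :=
    Relation.ReflTransGen.mono (fun a b hab => ⟨hab.1, hab.2.2, hab.2.1⟩) _ _ h4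
  exact Relation.reflTransGen_swap.1 this

lemma IoSub {u v : V} (h : S.RB u v) {i} (hi : S.Io u i) : S.Io v i := by
  obtain ⟨e, h1, h2, h3⟩ := hi; exact ⟨e, h1, h2, h3.trans h⟩

lemma OoSub {u v : V} (h : S.RB u v) {j} (hj : S.Oo v j) : S.Oo u j := by
  obtain ⟨c, h1, h2, h3⟩ := hj; exact ⟨c, h1, h2, h.trans h3⟩

lemma muIo {u v : V} (h : S.mu u v) {i} : S.Io u i ↔ S.Io v i :=
  ⟨S.IoSub h.1, S.IoSub h.2⟩

lemma muOo {u v : V} (h : S.mu u v) {j} : S.Oo u j ↔ S.Oo v j :=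
  ⟨fun hx => S.OoSub h.2 hx, fun hx => S.OoSub h.1 hx⟩

lemma muPs {u v : V} (h : S.mu u v) {i} : S.Ps u i ↔ S.Ps v i := by
  unfold Ps; rw [S.muIo h, S.muOo h]

lemma mu_refl (u : V) : S.mu u u := ⟨S.rb_refl u, S.rb_refl u⟩
lemma mu_symm {u v : V} (h : S.mu u v) : S.mu v u := ⟨h.2, h.1⟩
lemma mu_trans {u v w : V} (h : S.mu u v) (h' : S.mu v w) : S.mu u w :=
  ⟨h.1.trans h'.1, h'.2.trans h.2⟩

lemma pairIO {u : V} {i j : ZMod 3} (hi : S.Io u i) (hj : S.Oo u j) :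
    i = j ∨ (i = j + 1 ∧ ∃ z, S.jw j z ∧ S.mu z u) := by
  obtain ⟨e, he1, he2, he3⟩ := hi
  obtain ⟨c, hc1, hc2, hc3⟩ := hj
  rcases S.master he2 hc2 he1 hc1 (he3.trans hc3) with ⟨h1, _, _⟩ | ⟨h1, h2⟩
  · exact Or.inl h1
  · subst h1
    exact Or.inr ⟨h2, e, ⟨he2, by rwa [← h2], hc1⟩, he3, hc3⟩

lemma jwType {c c' : ZMod 3} {z : V} (h : S.jw c z) (h' : S.jw c' z) : c = c' := by
  rcases z3all c c' with e | e | e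
  · exact e.symm
  · exfalso; exact S.no2 h'.2.2 (by rw [e]; exact h.2.1)
  · exfalso
    have : c' + 1 = c := by
      rw [e]
      have h3 : (3:ZMod 3) = 0 := by decide
      calc c + 2 + 1 = c + 3 := by ring
      _ = c := by rw [h3, add_zero]
    exact S.no2 h.2.2 (by rw [← this]; exact h'.2.1)

lemma jwEq {c c' : ZMod 3} {z z' : V} (h : S.jw c z) (h' : S.jw c' z')
    (hm : S.mu z z') : z = z' ∧ c = c' := by
  rcases S.master h.1 h'.1 h.2.1 h'.2.2 hm.1 with ⟨e1, e2, e3⟩ | ⟨e1, _⟩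
  · exfalso
    rcases S.master h'.1 h.1 h'.2.1 h.2.2 hm.2 with ⟨f1, _, _⟩ | ⟨f1, _⟩
    · -- c+1 = c' and c'+1 = c : impossible
      have : ∀ a b : ZMod 3, a + 1 = b → b + 1 = a → False := by decide
      exact this c c' e1 f1
    · exact e3 f1.symm
  · subst e1
    exact ⟨rfl, S.jwType h h'⟩

/-- third vertex of a tricycle on an edge inside `B` is in `B` or on `T`. -/
lemma triB {x y : V} (hx : x ∈ S.B) (hy : y ∈ S.B) (h : S.G x y) :
    (∃ w, w ∈ S.B ∧ S.G y w ∧ S.G w x) ∨ (∃ l, S.G y (S.t l) ∧ S.G (S.t l) x) := by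
  obtain ⟨w, hw1, hw2⟩ := S.tri h
  by_cases hT : ∃ i, w = S.t i
  · obtain ⟨i, rfl⟩ := hT; exact Or.inr ⟨i, hw1, hw2⟩
  · push_neg at hT
    exact Or.inl ⟨w, S.hclose x hx w (Or.inr hw2) hT, hw1, hw2⟩

/-- Ψ-sets of adjacent B-vertices intersect. -/
lemma adjPs {x y : V} (hx : x ∈ S.B) (hy : y ∈ S.B) (h : S.G x y) :
    ∃ k, S.Ps x k ∧ S.Ps y k := by
  obtain ⟨i, e, he1, he2, he3⟩ := S.entryEx hx
  exact ⟨i, Or.inl ⟨e, he2, he1, he3⟩, Or.inl ⟨e, he2, he1, he3.trans (S.rb_single h hx hy)⟩⟩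

lemma mixed {u : V} {α β : ZMod 3} (hu : u ∈ S.B) (ha : S.Ps u α) (hb : S.Ps u β)
    (hne : α ≠ β) : ∃ c, ((α = c ∧ β = c + 1) ∨ (α = c + 1 ∧ β = c)) ∧
      ∃ z, S.jw c z ∧ S.mu z u := by
  rcases ha with ha | ha <;> rcases hb with hb | hb
  · -- both entries
    obtain ⟨j, h', hh1, hh2, hh3⟩ := S.exitEx hu
    have hoo : S.Oo u j := ⟨h', hh2, hh1, hh3⟩
    rcases S.pairIO ha hoo with e1 | ⟨e1, z, hz⟩ <;>
      rcases S.pairIO hb hoo with e2 | ⟨e2, z', hz'⟩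
    · exact absurd (e1.trans e2.symm) hne
    · exact ⟨j, Or.inl ⟨e1, e2⟩, z', hz'⟩
    · exact ⟨j, Or.inr ⟨e1, e2⟩, z, hz⟩
    · exact absurd (e1.trans e2.symm) hne
  · rcases S.pairIO ha hb with e1 | ⟨e1, z, hz⟩
    · exact absurd e1 hne
    · exact ⟨β, Or.inr ⟨e1, rfl⟩, z, hz⟩
  · rcases S.pairIO hb ha with e1 | ⟨e1, z, hz⟩
    · exact absurd e1.symm hne
    · exact ⟨α, Or.inl ⟨rfl, e1⟩, z, hz⟩
  · -- both exits
    obtain ⟨i, e, he1, he2, he3⟩ := S.entryEx hu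
    have hio : S.Io u i := ⟨e, he2, he1, he3⟩
    rcases S.pairIO hio ha with e1 | ⟨e1, z, hz⟩ <;>
      rcases S.pairIO hio hb with e2 | ⟨e2, z', hz'⟩
    · exact absurd (e1.symm.trans e2) hne
    · exact ⟨β, Or.inr ⟨e1.symm.trans e2, rfl⟩, z', hz'⟩
    · exact ⟨α, Or.inl ⟨rfl, e2.symm.trans e1⟩, z, hz⟩
    · exact absurd (add_right_cancel (e1.symm.trans e2)) hne

/-- tricycle graph at hub `t cc`. -/
def HA (cc : ZMod 3) (a b : V) : Prop :=
  (S.G (S.t cc) a ∧ S.G a b ∧ S.G b (S.t cc)) ∨ (S.G (S.t cc) b ∧ S.G b a ∧ S.G a (S.t cc))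

def HS (cc : ZMod 3) (a b : V) : Prop := S.HA cc a b ∧ a ∈ S.B ∧ b ∈ S.B
def HR (cc : ZMod 3) (x y : V) : Prop := Relation.ReflTransGen (S.HS cc) x y

/-- `z` is anchored at hub `cc` : jewel of edge `cc` (exit side) or of edge `cc-1` (entry side). -/
def Anc (cc : ZMod 3) (z : V) : Prop :=
  (S.G (S.t (cc+1)) z ∧ S.G z (S.t cc)) ∨ (S.G (S.t cc) z ∧ S.G z (S.t (cc-1)))

lemma haSymm {cc : ZMod 3} {a b : V} (h : S.HA cc a b) : S.HA cc b a := h.symm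

lemma haEntry {cc : ZMod 3} {a b : V} (h : S.HA cc a b) (ha : S.G (S.t cc) a) :
    S.G a b ∧ S.G b (S.t cc) := by
  rcases h with ⟨h1, h2, h3⟩ | ⟨h1, h2, h3⟩
  · exact ⟨h2, h3⟩
  · exact absurd ha (fun c => S.no2 c h3)

lemma hrSymm {cc : ZMod 3} {x y : V} (h : S.HR cc x y) : S.HR cc y x := by
  have : Relation.ReflTransGen (Function.swap (S.HS cc)) y x := Relation.ReflTransGen.swap _ _ h
  exact Relation.ReflTransGen.mono (fun a b hab => ⟨S.haSymm hab.1, hab.2.2, hab.2.1⟩) _ _ this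

lemma flatLen : ∀ r : List (V × V), (r.flatMap fun p => [p.1, p.2]).length = 2 * r.length := by
  intro r; induction r with
  | nil => simp
  | cons p r ih => simp [ih]; ring

lemma flatPerm : ∀ r : List (V × V),
    (r.flatMap fun p => [p.1, p.2]).Perm (r.map Prod.fst ++ r.map Prod.snd) := by
  intro r; induction r with
  | nil => simp
  | cons p r ih =>
    have e1 : ((p::r).flatMap fun p => [p.1, p.2]) = p.1 :: p.2 :: (r.flatMap fun p => [p.1, p.2]) := rfl
    have e2 : ((p::r).map Prod.fst ++ (p::r).map Prod.snd) = p.1 :: (r.map Prod.fst ++ p.2 :: r.map Prod.snd) := by simp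
    rw [e1, e2]
    exact ((ih.cons p.2).trans List.perm_middle.symm).cons p.1

lemma flatHeadLast : ∀ (r : List (V × V)) (hr : r ≠ []),
    (r.flatMap fun p => [p.1, p.2]).head? = some (r.head hr).1 ∧
    (r.flatMap fun p => [p.1, p.2]).getLast? = some (r.getLast hr).2 := by
  intro r
  induction r with
  | nil => intro h; exact absurd rfl h
  | cons p r ih =>
    intro _
    constructor
    · rfl
    · cases r with
      | nil => rfl
      | cons q r' =>
        have h2 := (ih (by simp)).2
        have e1 : ((p::q::r').flatMap fun p => [p.1, p.2])
            = p.1 :: p.2 :: ((q::r').flatMap fun p => [p.1, p.2]) := rfl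
        have e2 : ((q::r').flatMap fun p => [p.1, p.2])
            = q.1 :: q.2 :: (r'.flatMap fun p => [p.1, p.2]) := rfl
        have e3 : ((p::q::r').getLast (by simp)) = ((q::r').getLast (by simp)) :=
          List.getLast_cons (by simp)
        rw [e1, List.getLast?_cons_cons, e2, List.getLast?_cons_cons, ← e2, h2, e3]

lemma pairup (cc : ZMod 3) : ∀ (n : ℕ) (L : List V) (a w : V), L.length ≤ n →
    List.Chain' (S.HA cc) (a :: L) → S.G (S.t cc) a →
    (a :: L).getLast? = some w → S.G w (S.t cc) →
    ∃ r : List (V × V), r ≠ [] ∧ (a :: L) = r.flatMap (fun p => [p.1, p.2]) ∧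
      (∀ p ∈ r, S.G p.1 p.2 ∧ S.G p.2 (S.t cc) ∧ S.G (S.t cc) p.1) ∧
      List.Chain' (fun p q => S.G q.1 p.2) r := by
  intro n
  induction n with
  | zero =>
    intro L a w hL _ hhd hw hlast
    exfalso
    have : L = [] := List.length_eq_zero_iff.1 (Nat.le_zero.1 hL)
    subst this
    have : a = w := by simpa using hw
    subst this
    exact S.no2 hhd hlast
  | succ n ih =>
    intro L a w hL hch hhd hw hlast
    match L with
    | [] =>
      exfalso
      have : a = w := by simpa using hw
      subst this
      exact S.no2 hhd hlast
    | [b] =>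
      have hab := S.haEntry hch.rel_head hhd
      have hbw : b = w := by simpa using hw
      subst hbw
      exact ⟨[(a, b)], by simp, by simp, by
        intro p hp; simp at hp; subst hp; exact ⟨hab.1, hlast, hhd⟩, by simp⟩
    | b :: c :: L' =>
      have hab := S.haEntry hch.rel_head hhd
      have hbc : S.G (S.t cc) c ∧ S.G c b := by
        rcases hch.tail.rel_head with ⟨h1, h2, h3⟩ | ⟨h1, h2, h3⟩
        · exact absurd h1 (fun h => S.no2 h hab.2)
        · exact ⟨h1, h2⟩
      obtain ⟨r, hr1, hr2, hr3, hr4⟩ := ih L' c w (by simp at hL ⊢; omega)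
        hch.tail.tail hbc.1 (by rw [← hw, List.getLast?_cons_cons, List.getLast?_cons_cons]) hlast
      refine ⟨(a, b) :: r, by simp, by simpa [List.flatMap_cons] using hr2, ?_, ?_⟩
      · intro p hp
        rcases List.mem_cons.1 hp with e | hp'
        · subst e; exact ⟨hab.1, hab.2, hhd⟩
        · exact hr3 p hp'
      · refine List.isChain_cons.2 ⟨?_, hr4⟩
        intro q hq
        have hqc : q.1 = c := by
          have h1 := (flatHeadLast r hr1).1
          rw [← hr2] at h1
          simp at h1
          rcases r with _ | ⟨q', r'⟩
          · exact absurd rfl hr1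
          · simp at hq ⊢
            subst hq
            exact h1.symm
        rw [hqc]
        exact hbc.2

/-- generic list realization of reflexive-transitive closure. -/
lemma rtgList {R : V → V → Prop} {u v : V} (h : Relation.ReflTransGen R u v) :
    ∃ l, List.Chain' R (u::l) ∧ (u::l).getLast? = some v := by
  induction h using Relation.ReflTransGen.head_induction_on with
  | refl => exact ⟨[], by simp, by simp⟩
  | head hstep _ ih =>
    obtain ⟨l, h1, h2⟩ := ih
    exact ⟨_::l, List.isChain_cons_cons.2 ⟨hstep, h1⟩, by rw [List.getLast?_cons_cons]; exact h2⟩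

lemma genChainMem {R : V → V → Prop} (hR : ∀ a b, R a b → b ∈ S.B) :
    ∀ (l : List V) (u : V), List.Chain' R (u::l) → u ∈ S.B → ∀ x ∈ (u::l), x ∈ S.B := by
  intro l
  induction l with
  | nil => intro u _ hu x hx; simp at hx; subst hx; exact hu
  | cons b bs ih =>
    intro u hc hu x hx
    rcases List.mem_cons.1 hx with e | hx'
    · subst e; exact hu
    · exact ih b hc.tail (hR u b hc.rel_head) x hx'

lemma mkDiwheel (cc : ZMod 3) (L : List V) (a w : V)
    (hch : List.Chain' (S.HA cc) (a :: L)) (hhd : S.G (S.t cc) a)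
    (hw : (a :: L).getLast? = some w) (hlast : S.G w (S.t cc))
    (hwrap : S.G a w)
    (hnd : (a :: L).Nodup) (hcc : S.t cc ∉ (a :: L)) (hlen : 3 ≤ (a :: L).length) :
    False := by
  obtain ⟨r, hr0, hr2, hr3, hr4⟩ :=
    S.pairup cc (a::L).length L a w (by simp) hch hhd hw hlast
  have hflat : 2 * r.length = (a :: L).length := by rw [hr2]; exact (flatLen r).symm
  apply S.hwf
  refine ⟨S.t cc, r, by omega, ?_, ?_, ?_⟩
  · refine List.nodup_cons.2 ⟨?_, ?_⟩
    · intro hmem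
      have : S.t cc ∈ (a :: L) := by
        rw [hr2]
        exact ((flatPerm r).mem_iff).2 hmem
      exact hcc this
    · exact ((flatPerm r).nodup_iff).1 (hr2 ▸ hnd)
  · exact hr3
  · have hwrap' : S.G (r.head hr0).1 (r.getLast hr0).2 := by
      have e1 := (flatHeadLast r hr0).1
      have e2 := (flatHeadLast r hr0).2
      rw [← hr2] at e1 e2
      have ea : (r.head hr0).1 = a := by
        have : (a::L).head? = some a := rfl
        rw [this] at e1; exact (Option.some_injective _ e1.symm)
      have ew : (r.getLast hr0).2 = w := by
        rw [hw] at e2; exact (Option.some_injective _ e2).symm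
      rw [ea, ew]; exact hwrap
    exact zipRotate r hr0 hr4 hwrap'

lemma z3s1 : ∀ c : ZMod 3, c - 1 + 1 = c := by decide
lemma z3s2 : ∀ c : ZMod 3, c + 1 + 1 = c - 1 := by decide
lemma z3n1 : ∀ c : ZMod 3, c ≠ c + 1 := by decide
lemma z3n2 : ∀ c : ZMod 3, c ≠ c - 1 := by decide
lemma z3n3 : ∀ c : ZMod 3, c + 1 ≠ c - 1 := by decide

/-- the H-path data extracted from HR, with distinct endpoints. -/
lemma hrData {cc : ZMod 3} {z z' : V} (hz : z ∈ S.B) (hne : z ≠ z') (hr : S.HR cc z z') :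
    ∃ m, List.Chain' (S.HA cc) (z::m) ∧ (z::m).Nodup ∧ (z::m).getLast? = some z' ∧
      (∀ x ∈ (z::m), x ∈ S.B) ∧ m ≠ [] := by
  obtain ⟨l, hc, hl⟩ := rtgList hr
  obtain ⟨m, hc', hnd', hl', hmem'⟩ := chain_dedup l z hc
  rw [hl] at hl'
  have hmB : ∀ x ∈ (z::m), x ∈ S.B := by
    refine S.genChainMem (fun a b hab => hab.2.2) m z hc' hz
  refine ⟨m, hc'.imp (fun a b hab => hab.1), hnd', hl', hmB, ?_⟩
  intro he; subst he
  simp at hl'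
  exact hne hl'

/-- diwheel contradiction, case: `z` exit side, `z'` entry side. -/
lemma dwcEN {cc : ZMod 3} {z z' : V} (hz : z ∈ S.B) (hz' : z' ∈ S.B) (hne : z ≠ z')
    (ha1 : S.G (S.t (cc+1)) z) (ha2 : S.G z (S.t cc))
    (hb1 : S.G (S.t cc) z') (hb2 : S.G z' (S.t (cc-1)))
    (hr : S.HR cc z z') : False := by
  obtain ⟨m, hch, hnd, hlast, hmem, hmne⟩ := S.hrData hz hne hr
  have hD1 : S.t (cc+1) ∉ (z::m) := fun h => S.hBt _ (hmem _ h)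
  have hD2 : S.t (cc-1) ∉ (z::m) := fun h => S.hBt _ (hmem _ h)
  have hDc : S.t cc ∉ (z::m) := fun h => S.hBt _ (hmem _ h)
  refine S.mkDiwheel cc ((z::m) ++ [S.t (cc-1)]) (S.t (cc+1)) (S.t (cc-1)) ?_ ?_ ?_ ?_ ?_ ?_ ?_ ?_
  · rw [show (S.t (cc+1) :: ((z::m) ++ [S.t (cc-1)])) = (S.t (cc+1) :: z :: m) ++ [S.t (cc-1)] from rfl]
    rw [List.Chain', List.isChain_append]
    refine ⟨List.isChain_cons_cons.2 ⟨Or.inl ⟨S.tE cc, ha1, ha2⟩, hch⟩, by simp, ?_⟩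
    intro x hx y hy
    simp at hy; subst hy
    rw [List.getLast?_cons_cons, hlast] at hx
    have : z' = x := by simpa using hx
    subst this
    exact Or.inl ⟨hb1, hb2, by have := S.tE (cc-1); rwa [z3s1 cc] at this⟩
  · exact S.tE cc
  · rw [show (S.t (cc+1) :: ((z::m) ++ [S.t (cc-1)])) = (S.t (cc+1) :: z :: m) ++ [S.t (cc-1)] from rfl]
    rw [List.getLast?_append_cons]
    rfl
  · have := S.tE (cc-1); rwa [z3s1 cc] at this
  · have := S.tE (cc+1)
    rwa [z3s2 cc] at this
  · refine List.nodup_cons.2 ⟨?_, ?_⟩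
    · intro h
      rcases List.mem_append.1 h with h | h
      · exact hD1 h
      · simp at h
        exact z3n3 cc (S.tI h)
    · rw [List.nodup_append]
      refine ⟨hnd, by simp, ?_⟩
      intro x hx y hx2 hxy; subst hxy
      simp at hx2; subst hx2
      exact hD2 hx
  · intro h
    rcases List.mem_cons.1 h with h | h
    · exact z3n1 cc (S.tI h)
    · rcases List.mem_append.1 h with h | h
      · exact hDc h
      · simp at h
        exact z3n2 cc (S.tI h)
  · simp

/-- diwheel contradiction : two distinct `cc`-anchored vertices of `B` that are
`H`-connected inside `B` give a diwheel. -/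
lemma dwc {cc : ZMod 3} {z z' : V} (hz : z ∈ S.B) (hz' : z' ∈ S.B) (hne : z ≠ z')
    (ha : S.Anc cc z) (ha' : S.Anc cc z') (hr : S.HR cc z z') : False := by
  rcases ha with ⟨ha1, ha2⟩ | ⟨ha1, ha2⟩ <;> rcases ha' with ⟨hb1, hb2⟩ | ⟨hb1, hb2⟩
  · -- both exit side : prepend t (cc+1)
    obtain ⟨m, hch, hnd, hlast, hmem, hmne⟩ := S.hrData hz hne hr
    have hD1 : S.t (cc+1) ∉ (z::m) := fun h => S.hBt _ (hmem _ h)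
    have hDc : S.t cc ∉ (z::m) := fun h => S.hBt _ (hmem _ h)
    refine S.mkDiwheel cc (z::m) (S.t (cc+1)) z' ?_ (S.tE cc) ?_ hb2 hb1 ?_ ?_ ?_
    · exact List.isChain_cons_cons.2 ⟨Or.inl ⟨S.tE cc, ha1, ha2⟩, hch⟩
    · rw [List.getLast?_cons_cons]; exact hlast
    · exact List.nodup_cons.2 ⟨hD1, hnd⟩
    · intro h
      rcases List.mem_cons.1 h with h | h
      · exact z3n1 cc (S.tI h)
      · exact hDc h
    · simp only [List.length_cons]
      cases m with
      | nil => simp at hlast; exact absurd hlast hne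
      | cons _ _ => simp
  · exact S.dwcEN hz hz' hne ha1 ha2 hb1 hb2 hr
  · exact S.dwcEN hz' hz (Ne.symm hne) hb1 hb2 ha1 ha2 (S.hrSymm hr)
  · -- both entry side : append t (cc-1)
    obtain ⟨m, hch, hnd, hlast, hmem, hmne⟩ := S.hrData hz hne hr
    have hD2 : S.t (cc-1) ∉ (z::m) := fun h => S.hBt _ (hmem _ h)
    have hDc : S.t cc ∉ (z::m) := fun h => S.hBt _ (hmem _ h)
    refine S.mkDiwheel cc (m ++ [S.t (cc-1)]) z (S.t (cc-1)) ?_ ha1 ?_ ?_ ha2 ?_ ?_ ?_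
    · rw [show (z :: (m ++ [S.t (cc-1)])) = (z :: m) ++ [S.t (cc-1)] from rfl]
      rw [List.Chain', List.isChain_append]
      refine ⟨hch, by simp, ?_⟩
      intro x hx y hy
      simp at hy; subst hy
      rw [hlast] at hx
      have : z' = x := by simpa using hx
      subst this
      exact Or.inl ⟨hb1, hb2, by have := S.tE (cc-1); rwa [z3s1 cc] at this⟩
    · rw [show (z :: (m ++ [S.t (cc-1)])) = (z :: m) ++ [S.t (cc-1)] from rfl]
      rw [List.getLast?_append_cons]
      rfl
    · have := S.tE (cc-1); rwa [z3s1 cc] at this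
    · rw [show (z :: (m ++ [S.t (cc-1)])) = (z :: m) ++ [S.t (cc-1)] from rfl]
      rw [List.nodup_append]
      refine ⟨hnd, by simp, ?_⟩
      intro x hx y hx2 hxy; subst hxy
      simp at hx2; subst hx2
      exact hD2 hx
    · intro h
      rcases List.mem_cons.1 h with h | h
      · exact S.hBt cc (by rw [h]; exact hz)
      · rcases List.mem_append.1 h with h | h
        · exact hDc (List.mem_cons_of_mem z h)
        · simp at h
          exact z3n2 cc (S.tI h)
    · simp only [List.length_cons, List.length_append]
      cases m with
      | nil => exact absurd rfl hmne
      | cons _ _ => simp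


lemma rbB {z u : V} (h : S.RB z u) (hz : z ∈ S.B) : u ∈ S.B := by
  induction h with
  | refl => exact hz
  | tail _ h2 => exact h2.2.2

lemma z3p1 : ∀ b : ZMod 3, b + 1 - 1 = b := by decide
lemma z3p2 : ∀ b : ZMod 3, b + 2 + 1 = b := by decide
lemma z3p3 : ∀ b : ZMod 3, b ≠ b + 2 := by decide

/-- a jewel of edge `b` mutually connected to `u'` is anchored at any flow-index of `u'`. -/
lemma ancFromPs {b cc : ZMod 3} {zb u' : V} (hjb : S.jw b zb) (hm : S.mu zb u')
    (hu' : u' ∈ S.B) (hcc : S.Ps u' cc) : S.Anc cc zb := by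
  rcases z3all b cc with e | e | e
  · subst e; exact Or.inl ⟨hjb.2.1, hjb.2.2⟩
  · subst e; exact Or.inr ⟨hjb.2.1, by rw [z3p1 b]; exact hjb.2.2⟩
  · exfalso
    subst e
    have hPsb : S.Ps u' b := (S.muPs hm).1 (Or.inr ⟨zb, hjb.2.2, hjb.1, S.rb_refl zb⟩)
    obtain ⟨c0, hpat, z0, hz0, hmz0⟩ := S.mixed hu' hcc hPsb (Ne.symm (z3p3 b))
    rcases hpat with ⟨e1, e2⟩ | ⟨e1, e2⟩
    · -- b+2 = c0, b = c0+1
      have h' := (S.jwEq hjb hz0 (S.mu_trans hm (S.mu_symm hmz0))).2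
      rw [← e1] at h'
      exact z3p3 b h'
    · -- b+2 = c0+1, b = c0
      subst e2
      exact absurd (add_left_cancel e1) (by decide)

/-- process one hub step of the walk at hub `cc`. -/
lemma hstep {cc : ZMod 3} {za v x y : V} (hv : v ∈ S.B) (hx : x ∈ S.B) (hy : y ∈ S.B)
    (hmv : S.mu v x) (hσ : S.G (S.t cc) v ∨ S.G v (S.t cc))
    (hhub : (S.G x y ∧ S.G y (S.t cc) ∧ S.G (S.t cc) x) ∨
            (S.G y x ∧ S.G x (S.t cc) ∧ S.G (S.t cc) y))
    (hw : S.HR cc za v) :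
    (S.G (S.t cc) y ∨ S.G y (S.t cc)) ∧ S.HR cc za y := by
  rcases hhub with ⟨h1, h2, h3⟩ | ⟨h1, h2, h3⟩
  · -- x entry side, y exit side, H-edge (x,y)
    have hxy : S.HA cc x y := Or.inl ⟨h3, h1, h2⟩
    refine ⟨Or.inr h2, ?_⟩
    rcases hσ with hσ | hσ
    · -- v entry : find exit helper from x or v = x
      obtain ⟨j, h', hh1, hh2, hh3⟩ := S.exitEx hx
      rcases S.master hx hh1 h3 hh2 hh3 with ⟨e1, e2, e3⟩ | ⟨e1, e2⟩
      · -- exit h' at cc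
        subst e1
        have hvh : S.G v h' ∧ v ≠ h' := by
          rcases S.master hv hh1 hσ hh2 (hmv.1.trans hh3) with ⟨_, f2, f3⟩ | ⟨_, f2⟩
          · exact ⟨f2, f3⟩
          · exact absurd f2 (z3n1 cc)
        have w1 : S.HS cc v h' := ⟨Or.inl ⟨hσ, hvh.1, hh2⟩, hv, hh1⟩
        have w2 : S.HS cc h' x := ⟨Or.inr ⟨h3, e2, hh2⟩, hh1, hx⟩
        have w3 : S.HS cc x y := ⟨hxy, hx, hy⟩
        exact hw.trans (Relation.ReflTransGen.single w1 |>.trans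
          (Relation.ReflTransGen.single w2 |>.trans (Relation.ReflTransGen.single w3)))
      · -- x = h' , x is a jewel of cc-1 ; then v = x
        subst e1
        have hvx : v = x := by
          rcases S.master hv hx hσ hh2 hmv.1 with ⟨f1, _, _⟩ | ⟨f1, _⟩
          · exact absurd (e2 ▸ f1) (fun h => z3n1 j (h.symm))
          · exact f1
        subst hvx
        exact hw.trans (Relation.ReflTransGen.single ⟨hxy, hx, hy⟩)
    · -- v exit : master gives H-edge (x,v)
      have hxv : S.G x v ∧ x ≠ v := by
        rcases S.master hx hv h3 hσ hmv.2 with ⟨_, f2, f3⟩ | ⟨f1, f2⟩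
        · exact ⟨f2, f3⟩
        · exact absurd f2 (z3n1 cc)
      have w1 : S.HS cc v x := ⟨Or.inr ⟨h3, hxv.1, hσ⟩, hv, hx⟩
      have w2 : S.HS cc x y := ⟨hxy, hx, hy⟩
      exact hw.trans ((Relation.ReflTransGen.single w1).trans (Relation.ReflTransGen.single w2))
  · -- y entry side, x exit side, H-edge (y,x)
    have hyx : S.HA cc y x := Or.inl ⟨h3, h1, h2⟩
    refine ⟨Or.inl h3, ?_⟩
    rcases hσ with hσ | hσ
    · -- v entry : master gives H-edge (v,x)
      have hvx : S.G v x ∧ v ≠ x := by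
        rcases S.master hv hx hσ h2 hmv.1 with ⟨_, f2, f3⟩ | ⟨_, f2⟩
        · exact ⟨f2, f3⟩
        · exact absurd f2 (z3n1 cc)
      have w1 : S.HS cc v x := ⟨Or.inl ⟨hσ, hvx.1, h2⟩, hv, hx⟩
      have w2 : S.HS cc x y := ⟨S.haSymm hyx, hx, hy⟩
      exact hw.trans ((Relation.ReflTransGen.single w1).trans (Relation.ReflTransGen.single w2))
    · -- v exit : find entry helper into x or v = x
      obtain ⟨i, e, he1, he2, he3⟩ := S.entryEx hx
      rcases S.master he1 hx he2 h2 he3 with ⟨e1, e2, e3⟩ | ⟨e1, e2⟩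
      · rw [e1] at he2
        have hev : S.G e v ∧ e ≠ v := by
          rcases S.master he1 hv he2 hσ (he3.trans hmv.2) with ⟨_, f2, f3⟩ | ⟨_, f2⟩
          · exact ⟨f2, f3⟩
          · exact absurd f2 (z3n1 _)
        have w1 : S.HS cc v e := ⟨Or.inr ⟨he2, hev.1, hσ⟩, hv, he1⟩
        have w2 : S.HS cc e x := ⟨Or.inl ⟨he2, e2, h2⟩, he1, hx⟩
        have w3 : S.HS cc x y := ⟨S.haSymm hyx, hx, hy⟩
        exact hw.trans (Relation.ReflTransGen.single w1 |>.trans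
          (Relation.ReflTransGen.single w2 |>.trans (Relation.ReflTransGen.single w3)))
      · -- e = x : x is a jewel of cc ; then v = x
        rw [e1] at he2
        have hvx : x = v := by
          rcases S.master hx hv (e2 ▸ he2) hσ hmv.2 with ⟨f1, _, _⟩ | ⟨f1, _⟩
          · exact absurd f1 (fun h => z3n1 cc h.symm)
          · exact f1
        rw [← hvx] at hw
        exact hw.trans (Relation.ReflTransGen.single ⟨S.haSymm hyx, hx, hy⟩)

/-- connect the current walk endpoint to an anchored jewel. -/
lemma finconnect {cc : ZMod 3} {za v zb : V} (hv : v ∈ S.B) (hzb : zb ∈ S.B)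
    (hσ : S.G (S.t cc) v ∨ S.G v (S.t cc)) (hAzb : S.Anc cc zb) (hmv : S.mu v zb)
    (hw : S.HR cc za v) : S.HR cc za zb := by
  rcases hσ with hσ | hσ <;> rcases hAzb with ⟨hb1, hb2⟩ | ⟨hb1, hb2⟩
  · -- v entry, zb exit (jewel cc)
    have : S.G v zb ∧ v ≠ zb := by
      rcases S.master hv hzb hσ hb2 hmv.1 with ⟨_, f2, f3⟩ | ⟨_, f2⟩
      · exact ⟨f2, f3⟩
      · exact absurd f2 (z3n1 cc)
    exact hw.trans (Relation.ReflTransGen.single ⟨Or.inl ⟨hσ, this.1, hb2⟩, hv, hzb⟩)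
  · -- v entry, zb entry (jewel cc-1) : v = zb
    have : v = zb := by
      rcases S.master hv hzb hσ hb2 hmv.1 with ⟨f1, _, _⟩ | ⟨f1, _⟩
      · exact absurd f1 (z3n2 cc)
      · exact f1
    exact this ▸ hw
  · -- v exit, zb exit : zb = v
    have : zb = v := by
      rcases S.master hzb hv hb1 hσ hmv.2 with ⟨f1, _, _⟩ | ⟨f1, f2⟩
      · exact absurd f1 (fun h => z3n1 cc h.symm)
      · exact f1
    exact this ▸ hw
  · -- v exit, zb entry : H-edge (zb, v)
    have : S.G zb v ∧ zb ≠ v := by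
      rcases S.master hzb hv hb1 hσ hmv.2 with ⟨_, f2, f3⟩ | ⟨_, f2⟩
      · exact ⟨f2, f3⟩
      · exact absurd f2 (z3n1 cc)
    exact hw.trans (Relation.ReflTransGen.single ⟨Or.inr ⟨hb1, this.1, hσ⟩, hv, hzb⟩)

def AdjB (a b : V) : Prop := (S.G a b ∨ S.G b a) ∧ a ∈ S.B ∧ b ∈ S.B

/-- state of the walk automaton at the vertex `x`, anchored to the start jewel `za`. -/
def StateAt (a : ZMod 3) (za x : V) : Prop :=
  S.mu za x ∨ (∃ cc v, v ∈ S.B ∧ (S.G (S.t cc) v ∨ S.G v (S.t cc)) ∧ S.mu v x ∧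
    S.HR cc za v ∧ S.Anc cc za ∧ S.Ps x cc)

/-- classification of a single underlying edge inside `B`. -/
lemma edgeClass {x y : V} (hx : x ∈ S.B) (hy : y ∈ S.B) (hxy : S.G x y ∨ S.G y x) :
    S.mu x y ∨ ∃ l0, (S.G x y ∧ S.G y (S.t l0) ∧ S.G (S.t l0) x) ∨
      (S.G y x ∧ S.G x (S.t l0) ∧ S.G (S.t l0) y) := by
  rcases hxy with h | h
  · rcases S.triB hx hy h with ⟨w, hw1, hw2, hw3⟩ | ⟨l0, h1, h2⟩
    · exact Or.inl ⟨S.rb_single h hx hy,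
        (S.rb_single hw2 hy hw1).trans (S.rb_single hw3 hw1 hx)⟩
    · exact Or.inr ⟨l0, Or.inl ⟨h, h1, h2⟩⟩
  · rcases S.triB hy hx h with ⟨w, hw1, hw2, hw3⟩ | ⟨l0, h1, h2⟩
    · exact Or.inl ⟨(S.rb_single hw2 hx hw1).trans (S.rb_single hw3 hw1 hy),
        S.rb_single h hy hx⟩
    · exact Or.inr ⟨l0, Or.inr ⟨h, h1, h2⟩⟩

/-- hub data at `l0` for the edge `(x,y)` gives flow indices. -/
lemma hubPs {x y l0 : V → V → Prop} : True := trivial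

/-- move one step in the automaton. -/
lemma stepState {a : ZMod 3} {za x y : V} (hja : S.jw a za) (hx : x ∈ S.B) (hy : y ∈ S.B)
    (hxy : S.G x y ∨ S.G y x) (hst : S.StateAt a za x) : S.StateAt a za y := by
  have hzaB : za ∈ S.B := hja.1
  rcases S.edgeClass hx hy hxy with hmuxy | ⟨l0, hhub⟩
  · -- mutual step
    rcases hst with hst | ⟨cc, v, h1, h2, h3, h4, h5, h6⟩
    · exact Or.inl (S.mu_trans hst hmuxy)
    · exact Or.inr ⟨cc, v, h1, h2, S.mu_trans h3 hmuxy, h4, h5, (S.muPs hmuxy).1 h6⟩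
  · -- hub step at l0
    have hPsxl : S.Ps x l0 := by
      rcases hhub with ⟨h1, h2, h3⟩ | ⟨h1, h2, h3⟩
      · exact Or.inl ⟨x, h3, hx, S.rb_refl x⟩
      · exact Or.inr ⟨x, h2, hx, S.rb_refl x⟩
    have hPsyl : S.Ps y l0 := by
      rcases hhub with ⟨h1, h2, h3⟩ | ⟨h1, h2, h3⟩
      · exact Or.inr ⟨y, h2, hy, S.rb_refl y⟩
      · exact Or.inl ⟨y, h3, hy, S.rb_refl y⟩
    -- helper : start a fresh pure run from a mu-anchored position
    have enterP : S.mu za x → S.StateAt a za y := by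
      intro hmza
      have hAnc : S.Anc l0 za := S.ancFromPs hja hmza hx hPsxl
      have hσ : S.G (S.t l0) za ∨ S.G za (S.t l0) := by
        rcases hAnc with ⟨p1, p2⟩ | ⟨p1, p2⟩
        · exact Or.inr p2
        · exact Or.inl p1
      obtain ⟨hσ', hw'⟩ := S.hstep hzaB hx hy hmza hσ hhub
        (Relation.ReflTransGen.refl)
      exact Or.inr ⟨l0, y, hy, hσ', S.mu_refl y, hw', hAnc, hPsyl⟩
    rcases hst with hst | ⟨cc, v, h1, h2, h3, h4, h5, h6⟩
    · exact enterP hst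
    · by_cases hlc : l0 = cc
      · subst hlc
        obtain ⟨hσ', hw'⟩ := S.hstep h1 hx hy h3 h2 hhub h4
        exact Or.inr ⟨l0, y, hy, hσ', S.mu_refl y, hw', h5, hPsyl⟩
      · -- mixed vertex x : close off the current run
        obtain ⟨c0, hpat, z0, hz0, hmz0⟩ := S.mixed hx h6 hPsxl (fun h => hlc h.symm)
        have hAz0 : S.Anc cc z0 := by
          rcases hpat with ⟨e1, e2⟩ | ⟨e1, e2⟩
          · exact Or.inl (e1 ▸ ⟨hz0.2.1, hz0.2.2⟩)
          · refine Or.inr ⟨e1 ▸ hz0.2.1, ?_⟩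
            rw [e1, z3p1 c0]
            exact hz0.2.2
        have hwz0 : S.HR cc za z0 :=
          S.finconnect h1 hz0.1 h2 hAz0 (S.mu_trans h3 (S.mu_symm hmz0)) h4
        by_cases hzz : za = z0
        · -- back to the start jewel : restart in A mode and reprocess this hub
          subst hzz
          exact enterP hmz0
        · exact absurd (S.dwc hzaB hz0.1 hzz h5 hAz0 hwz0) id

/-- the main automaton : walking in `B` between jewel-anchored vertices forces equality. -/
lemma segAuto {a : ZMod 3} {za : V} (hja : S.jw a za) :
    ∀ (l : List V) (x : V), x ∈ S.B → List.Chain' S.AdjB (x::l) → S.StateAt a za x →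
    ∀ w, (x::l).getLast? = some w →
    ∀ (b : ZMod 3) (zb : V), S.jw b zb → S.mu zb w → a = b ∧ za = zb := by
  intro l
  induction l with
  | nil =>
    intro x hx _ hst w hw b zb hjb hmzb
    have hxw : x = w := by simpa using hw
    subst hxw
    rcases hst with hst | ⟨cc, v, h1, h2, h3, h4, h5, h6⟩
    · have := S.jwEq hja hjb (S.mu_trans hst (S.mu_symm hmzb))
      exact ⟨this.2, this.1⟩
    · have hAzb : S.Anc cc zb := S.ancFromPs hjb hmzb hx h6
      have hwz : S.HR cc za zb :=
        S.finconnect h1 hjb.1 h2 hAzb (S.mu_trans h3 (S.mu_symm hmzb)) h4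
      by_cases hzz : za = zb
      · exact ⟨S.jwType hja (hzz ▸ hjb), hzz⟩
      · exact absurd (S.dwc hja.1 hjb.1 hzz h5 hAzb hwz) id
  | cons y l' ih =>
    intro x hx hch hst w hw b zb hjb hmzb
    have hxy := hch.rel_head
    have hy : y ∈ S.B := hxy.2.2
    exact ih y hy hch.tail (S.stepState hja hx hy hxy.1 hst) w
      (by rwa [List.getLast?_cons_cons] at hw) b zb hjb hmzb

/-- all jewels of `B` coincide. -/
lemma allJewelsEq
    (hBc : ∀ x ∈ S.B, ∀ y ∈ S.B, ∃ l, List.Chain' S.AdjB (x::l) ∧ (x::l).getLast? = some y)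
    {a b : ZMod 3} {za zb : V} (hja : S.jw a za) (hjb : S.jw b zb) :
    a = b ∧ za = zb := by
  obtain ⟨l, hc, hl⟩ := hBc za hja.1 zb hjb.1
  exact S.segAuto hja l za hja.1 hc (Or.inl (S.mu_refl za)) zb hl b zb hjb (S.mu_refl zb)

/-- in the absence of jewels, each vertex has a unique flow index. -/
lemma psUnique (hnoj : ∀ (c : ZMod 3) (z : V), ¬ S.jw c z) {u : V} (hu : u ∈ S.B)
    {α β : ZMod 3} (ha : S.Ps u α) (hb : S.Ps u β) : α = β := by
  by_contra hne
  obtain ⟨c0, _, z0, hz0, _⟩ := S.mixed hu ha hb hne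
  exact hnoj c0 z0 hz0

/-- flow indices are constant along `B`-walks when there are no jewels. -/
lemma psConst (hnoj : ∀ (c : ZMod 3) (z : V), ¬ S.jw c z) :
    ∀ (l : List V) (x : V), x ∈ S.B → List.Chain' S.AdjB (x::l) →
    ∀ w, (x::l).getLast? = some w → ∀ k, S.Ps x k → S.Ps w k := by
  intro l
  induction l with
  | nil =>
    intro x _ _ w hw k hk
    have : x = w := by simpa using hw
    exact this ▸ hk
  | cons y l' ih =>
    intro x hx hch w hw k hk
    have hxy := hch.rel_head
    have hy : y ∈ S.B := hxy.2.2
    have hyk : S.Ps y k := by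
      rcases hxy.1 with h | h
      · obtain ⟨k', hk1, hk2⟩ := S.adjPs hx hy h
        exact (S.psUnique hnoj hx hk hk1) ▸ hk2
      · obtain ⟨k', hk1, hk2⟩ := S.adjPs hy hx h
        exact (S.psUnique hnoj hx hk hk2) ▸ hk1
    exact ih y hy hch.tail w (by rwa [List.getLast?_cons_cons] at hw) k hyk

/-- existence of a jewel. -/
lemma jewelEx
    (hBc : ∀ x ∈ S.B, ∀ y ∈ S.B, ∃ l, List.Chain' S.AdjB (x::l) ∧ (x::l).getLast? = some y)
    (att2 : ∀ i, ∃ j d, j ≠ i ∧ d ∈ S.B ∧ (S.G (S.t j) d ∨ S.G d (S.t j))) :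
    ∃ (c : ZMod 3) (z : V), S.jw c z := by
  by_contra hnoj
  push_neg at hnoj
  obtain ⟨b₀, hb₀⟩ := S.hBne
  obtain ⟨i₀, e, he1, he2, he3⟩ := S.entryEx hb₀
  have hP0 : S.Ps b₀ i₀ := Or.inl ⟨e, he2, he1, he3⟩
  obtain ⟨j, d, hji, hd, hadj⟩ := att2 i₀
  have hPdj : S.Ps d j := by
    rcases hadj with h | h
    · exact Or.inl ⟨d, h, hd, S.rb_refl d⟩
    · exact Or.inr ⟨d, h, hd, S.rb_refl d⟩
  obtain ⟨l, hc, hl⟩ := hBc b₀ hb₀ d hd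
  have hPdi : S.Ps d i₀ := S.psConst hnoj l b₀ hb₀ hc d hl i₀ hP0
  exact hji (S.psUnique hnoj hd hPdj hPdi)

/-- no vertex of `B` has flow index `i₀+2` when a jewel of edge `i₀` exists. -/
lemma noThird
    (hBc : ∀ x ∈ S.B, ∀ y ∈ S.B, ∃ l, List.Chain' S.AdjB (x::l) ∧ (x::l).getLast? = some y)
    {i₀ : ZMod 3} {z : V} (hjz : S.jw i₀ z) {d : V} (hd : d ∈ S.B)
    (hP : S.Ps d (i₀ + 2)) : False := by
  -- walk from z to d, propagate the absence of i₀+2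
  have key : ∀ (l : List V) (x : V), x ∈ S.B → List.Chain' S.AdjB (x::l) →
      ¬ S.Ps x (i₀+2) → ∀ w, (x::l).getLast? = some w → ¬ S.Ps w (i₀+2) := by
    intro l
    induction l with
    | nil =>
      intro x _ _ hno w hw
      have : x = w := by simpa using hw
      exact this ▸ hno
    | cons y l' ih =>
      intro x hx hch hno w hw
      have hxy := hch.rel_head
      have hy : y ∈ S.B := hxy.2.2
      have hyno : ¬ S.Ps y (i₀+2) := by
        intro hPy
        obtain ⟨k, hk1, hk2⟩ : ∃ k, S.Ps x k ∧ S.Ps y k := by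
          rcases hxy.1 with h | h
          · exact S.adjPs hx hy h
          · obtain ⟨k, a1, a2⟩ := S.adjPs hy hx h
            exact ⟨k, a2, a1⟩
        have hkne : k ≠ i₀ + 2 := fun e => hno (e ▸ hk1)
        obtain ⟨c0, hpat, z0, hz0, hmz0⟩ := S.mixed hy hk2 hPy hkne
        have := (S.allJewelsEq hBc hjz hz0).1
        rcases hpat with ⟨e1, e2⟩ | ⟨e1, e2⟩
        · rw [← this] at e2
          exact absurd (add_left_cancel e2) (by decide)
        · rw [← this] at e2
          exact z3p3 i₀ e2.symm
      exact ih y hy hch.tail hyno w (by rwa [List.getLast?_cons_cons] at hw)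
  have hz2 : ¬ S.Ps z (i₀+2) := by
    intro hPz
    have hPzi : S.Ps z i₀ := Or.inr ⟨z, hjz.2.2, hjz.1, S.rb_refl z⟩
    obtain ⟨c0, hpat, z0, hz0, hmz0⟩ := S.mixed hjz.1 hPzi hPz (z3p3 i₀)
    have := (S.allJewelsEq hBc hjz hz0).1
    rcases hpat with ⟨e1, e2⟩ | ⟨e1, e2⟩
    · rw [← this] at e2
      exact absurd (add_left_cancel e2) (by decide)
    · rw [← this] at e1
      exact z3n1 i₀ e1
  obtain ⟨l, hc, hl⟩ := hBc z hjz.1 d hd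
  exact key l z hjz.1 hc hz2 d hl hP

/-- the final packaged statement. -/
lemma finalPack
    (hBc : ∀ x ∈ S.B, ∀ y ∈ S.B, ∃ l, List.Chain' S.AdjB (x::l) ∧ (x::l).getLast? = some y)
    (att2 : ∀ i, ∃ j d, j ≠ i ∧ d ∈ S.B ∧ (S.G (S.t j) d ∨ S.G d (S.t j))) :
    ∃ (i₀ : ZMod 3) (z : V), S.jw i₀ z ∧
      (∀ b ∈ S.B, ∀ k, (S.G (S.t k) b ∨ S.G b (S.t k)) → k = i₀ ∨ k = i₀ + 1) ∧
      (∀ b' ∈ S.B, S.G (S.t (i₀+1)) b' → S.G b' (S.t i₀) → b' = z) := by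
  obtain ⟨i₀, z, hjz⟩ := S.jewelEx hBc att2
  refine ⟨i₀, z, hjz, ?_, ?_⟩
  · intro b hb k hk
    rcases z3all i₀ k with e | e | e
    · exact Or.inl e
    · exact Or.inr e
    · exfalso
      subst e
      have hP : S.Ps b (i₀+2) := by
        rcases hk with h | h
        · exact Or.inl ⟨b, h, hb, S.rb_refl b⟩
        · exact Or.inr ⟨b, h, hb, S.rb_refl b⟩
      exact S.noThird hBc hjz hb hP
  · intro b' hb' h1 h2
    exact (S.allJewelsEq hBc hjz ⟨hb', h1, h2⟩).2.symm

end Pack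

lemma walkList {V : Type*} {H : SimpleGraph V} {P : Set V} :
    ∀ {a b : ↥P} (_ : (H.induce P).Walk a b),
    ∃ l, List.Chain' (fun x y => H.Adj x y ∧ x ∈ P ∧ y ∈ P) (a.val :: l) ∧
      (a.val :: l).getLast? = some b.val := by
  intro a b w
  induction w with
  | nil => exact ⟨[], by simp, by simp⟩
  | @cons u c d h p ih =>
    obtain ⟨l, h1, h2⟩ := ih
    exact ⟨c.val :: l, List.isChain_cons_cons.2 ⟨⟨h, u.2, c.2⟩, h1⟩,
      by rw [List.getLast?_cons_cons]; exact h2⟩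


end Cyclic3

open Cyclic3 in
/-- Let `G` be an unbreakable, 3-cyclic, diwheel-free digraph, `T` the tricycle
`t₁ → t₂ → t₃ → t₁`, and `B` a component of `G⁻ ∖ V(T)`. Then exactly two vertices
of `T` have a neighbour in `B`, and there is a unique `b ∈ B` making a tricycle with
those two vertices. -/
theorem stmt_9 {V : Type*} [Fintype V] (G : V → V → Prop)
    (hirr : Irreflexive G) (hunb : Unbreakable G) (hcyc : IsLCyclic G 3)
    (hwf : ¬ HasDiwheel G) (t₁ t₂ t₃ : V)
    (h12 : G t₁ t₂) (h23 : G t₂ t₃) (h31 : G t₃ t₁)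
    (hT : t₁ ≠ t₂ ∧ t₂ ≠ t₃ ∧ t₁ ≠ t₃) (B : Set V)
    (hB : IsCompOf (underlying G) {w : V | w ≠ t₁ ∧ w ≠ t₂ ∧ w ≠ t₃} B) :
    ∃ p q : V, p ≠ q ∧ p ∈ ({t₁, t₂, t₃} : Set V) ∧ q ∈ ({t₁, t₂, t₃} : Set V) ∧
      (∀ t ∈ ({t₁, t₂, t₃} : Set V),
        (∃ b ∈ B, (underlying G).Adj t b) ↔ (t = p ∨ t = q)) ∧
      ∃! b : V, b ∈ B ∧ IsTricycle G p q b := by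
  classical
  obtain ⟨ht12, ht23, ht13⟩ := hT
  let tt : ZMod 3 → V := fun i => if i = 0 then t₁ else if i = 1 then t₂ else t₃
  have hcase : ∀ i : ZMod 3, i = 0 ∨ i = 1 ∨ i = 2 := by decide
  have ht0 : tt 0 = t₁ := by show (if _ then _ else _) = t₁; rw [if_pos rfl]
  have ht1 : tt 1 = t₂ := by
    show (if _ then _ else _) = t₂; rw [if_neg (by decide), if_pos rfl]
  have ht2 : tt 2 = t₃ := by
    show (if _ then _ else _) = t₃; rw [if_neg (by decide), if_neg (by decide)]
  have zne1 : ∀ c : ZMod 3, c ≠ c + 1 := by decide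
  have tI : Function.Injective tt := by
    intro a b hab
    rcases hcase a with rfl | rfl | rfl <;> rcases hcase b with rfl | rfl | rfl <;>
      simp only [ht0, ht1, ht2] at hab <;>
      first
        | rfl
        | exact absurd hab ht12
        | exact absurd hab ht23
        | exact absurd hab ht13
        | exact absurd hab.symm ht12
        | exact absurd hab.symm ht23
        | exact absurd hab.symm ht13
  have tE : ∀ i, G (tt i) (tt (i+1)) := by
    intro i
    rcases hcase i with rfl | rfl | rfl
    · rw [show ((0:ZMod 3)+1) = 1 from by decide, ht0, ht1]; exact h12
    · rw [show ((1:ZMod 3)+1) = 2 from by decide, ht1, ht2]; exact h23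
    · rw [show ((2:ZMod 3)+1) = 0 from by decide, ht2, ht0]; exact h31
  have hBt : ∀ i, tt i ∉ B := by
    intro i hmem
    have hs := hB.2.1 hmem
    rcases hcase i with rfl | rfl | rfl
    · rw [ht0] at hs; exact hs.1 rfl
    · rw [ht1] at hs; exact hs.2.1 rfl
    · rw [ht2] at hs; exact hs.2.2 rfl
  have hclose : ∀ x ∈ B, ∀ y, (G x y ∨ G y x) → (∀ i, y ≠ tt i) → y ∈ B := by
    intro x hx y hxy hyT
    refine hB.2.2.2 x hx y ⟨?_, ?_, ?_⟩ ?_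
    · rw [← ht0]; exact hyT 0
    · rw [← ht1]; exact hyT 1
    · rw [← ht2]; exact hyT 2
    · refine ⟨?_, hxy⟩
      rintro rfl
      rcases hxy with h | h <;> exact hirr _ h
  have conn : ∀ u v : V, ∃ l, List.Chain' G (u::l) ∧ (u::l).getLast? = some v := by
    intro u v
    obtain ⟨l, h1, h2, h3⟩ := hunb.1.2 u v
    cases l with
    | nil => simp at h1
    | cons a l' =>
      have : a = u := by simpa using h1
      subst this
      exact ⟨l', h3, h2⟩
  let S : Pack V := ⟨G, B, tt, hirr, hcyc, hwf, conn, tE, tI, hB.1, hBt, hclose⟩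
  have hBc : ∀ x ∈ S.B, ∀ y ∈ S.B, ∃ l, List.Chain' S.AdjB (x::l) ∧
      (x::l).getLast? = some y := by
    intro x hx y hy
    obtain ⟨w⟩ := hB.2.2.1.preconnected ⟨x, hx⟩ ⟨y, hy⟩
    obtain ⟨l, h1, h2⟩ := walkList w
    refine ⟨l, h1.imp ?_, h2⟩
    intro a b hab
    exact ⟨hab.1.2, hab.2.1, hab.2.2⟩
  have att2 : ∀ i, ∃ j d, j ≠ i ∧ d ∈ S.B ∧ (S.G (S.t j) d ∨ S.G d (S.t j)) := by
    intro i
    obtain ⟨b₀, hb₀⟩ := hB.1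
    have hb₀i : b₀ ∈ {w : V | w ≠ tt i} := fun e => hBt i (e ▸ hb₀)
    have htgt : tt (i+1) ∈ {w : V | w ≠ tt i} := fun e => zne1 i (tI e).symm
    obtain ⟨w⟩ := (hunb.2.2 (tt i)).preconnected ⟨b₀, hb₀i⟩ ⟨tt (i+1), htgt⟩
    obtain ⟨l, h1, h2⟩ := walkList w
    have hcl : ∀ x ∈ S.B, ∀ y,
        ((fun x y => (underlying G).Adj x y ∧ x ∈ {w : V | w ≠ tt i} ∧ y ∈ {w : V | w ≠ tt i}) x y ∨
         (fun x y => (underlying G).Adj x y ∧ x ∈ {w : V | w ≠ tt i} ∧ y ∈ {w : V | w ≠ tt i}) y x) →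
        y ∈ S.B ∨ ∃ k, y = S.t k := by
      intro x hx y hxy
      by_cases hT' : ∃ k, y = tt k
      · exact Or.inr hT'
      · push_neg at hT'
        rcases hxy with h | h
        · exact Or.inl (hclose x hx y h.1.2 hT')
        · exact Or.inl (hclose x hx y (Or.symm h.1.2) hT')
    obtain ⟨h, w', hh1, ⟨k, hk⟩, hD, _⟩ := S.firstExit hcl l b₀ hb₀ h1 (tt (i+1)) h2 (hBt _)
    subst hk
    refine ⟨k, h, ?_, hh1, Or.symm hD.1.2⟩
    intro e
    exact hD.2.2 (by rw [e])
  obtain ⟨i₀, z, hjz, hatt, huni⟩ := S.finalPack hBc att2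
  have hmem3 : ∀ k : ZMod 3, tt k ∈ ({t₁, t₂, t₃} : Set V) := by
    intro k
    rcases hcase k with rfl | rfl | rfl
    · rw [ht0]; exact Set.mem_insert _ _
    · rw [ht1]; exact Set.mem_insert_of_mem _ (Set.mem_insert _ _)
    · rw [ht2]; exact Set.mem_insert_of_mem _ (Set.mem_insert_of_mem _ rfl)
  have claim : ∀ k : ZMod 3, (∃ b ∈ B, (underlying G).Adj (tt k) b) ↔
      (tt k = tt i₀ ∨ tt k = tt (i₀+1)) := by
    intro k
    constructor
    · rintro ⟨b, hbB, hAdj⟩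
      rcases hatt b hbB k hAdj.2 with e | e
      · exact Or.inl (by rw [e])
      · exact Or.inr (by rw [e])
    · rintro (e | e)
      · refine ⟨z, hjz.1, ?_⟩
        rw [e]
        exact ⟨fun c => hBt i₀ (by rw [c]; exact hjz.1), Or.inr hjz.2.2⟩
      · refine ⟨z, hjz.1, ?_⟩
        rw [e]
        exact ⟨fun c => hBt (i₀+1) (by rw [c]; exact hjz.1), Or.inl hjz.2.1⟩
  refine ⟨tt i₀, tt (i₀+1), fun e => zne1 i₀ (tI e), hmem3 i₀, hmem3 (i₀+1), ?_, ?_⟩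
  · intro t ht
    have ht' : t = t₁ ∨ t = t₂ ∨ t = t₃ := by simpa using ht
    rcases ht' with rfl | rfl | rfl
    · rw [← ht0]; exact claim 0
    · rw [← ht1]; exact claim 1
    · rw [← ht2]; exact claim 2
  · refine ⟨z, ⟨hjz.1, fun e => zne1 i₀ (tI e),
      fun c => hBt (i₀+1) (by rw [c]; exact hjz.1),
      fun c => hBt i₀ (by rw [c]; exact hjz.1),
      Or.inl ⟨tE i₀, hjz.2.1, hjz.2.2⟩⟩, ?_⟩
    rintro b' ⟨hb'B, hb'tri⟩
    rcases hb'tri.2.2.2 with ⟨hpq, hqb, hbp⟩ | ⟨hqp, hbq, hpb⟩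
    · exact huni b' hb'B hqb hbp
    · exact absurd hqp (fun c => S.no2 (tE i₀) c)
end
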